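/- arXiv:2110.00341 — 12 statements merged into one kernel-verified Lean document; each statement's English description precedes it below -/
import Mathlib

section
/- If G is a finitely generated group acting continuously on a compact metric space (X,d) and the action is both distal and expansive, then X is a finite set. -/
section WordBall

variable {G : Type*} [Group G]

/-- The set of products of exactly `n` elements of `T`. -/
def wordBall (T : Set G) (n : ℕ) : Set G :=
  {g | ∃ l : List G, l.length = n ∧ (∀ x ∈ l, x ∈ T) ∧ l.prod = g}

lemma one_mem_wordBall {T : Set G} (h1 : (1 : G) ∈ T) (n : ℕ) :
    (1 : G) ∈ wordBall T n :=
  ⟨List.replicate n 1, by simp, by intro x hx; simp [List.eq_of_mem_replicate hx, h1], by simp⟩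

lemma wordBall_succ_mono {T : Set G} (h1 : (1 : G) ∈ T) (n : ℕ) :
    wordBall T n ⊆ wordBall T (n + 1) := by
  rintro g ⟨l, hl, hmem, rfl⟩
  refine ⟨1 :: l, by simp [hl], ?_, by simp⟩
  intro x hx
  rcases List.mem_cons.mp hx with rfl | hx
  exacts [h1, hmem x hx]

lemma wordBall_mono {T : Set G} (h1 : (1 : G) ∈ T) {m n : ℕ} (h : m ≤ n) :
    wordBall T m ⊆ wordBall T n := by
  induction n with
  | zero => simp [Nat.le_zero.mp h]
  | succ n ih =>
    rcases Nat.lt_or_ge m (n + 1) with h' | h'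
    · exact (ih (Nat.lt_succ_iff.mp h')).trans (wordBall_succ_mono h1 n)
    · have : m = n + 1 := le_antisymm h h'
      subst this; exact subset_rfl

lemma wordBall_mul {T : Set G} {a b : ℕ} {g h : G}
    (hg : g ∈ wordBall T a) (hh : h ∈ wordBall T b) : g * h ∈ wordBall T (a + b) := by
  obtain ⟨l1, hl1, hm1, rfl⟩ := hg
  obtain ⟨l2, hl2, hm2, rfl⟩ := hh
  refine ⟨l1 ++ l2, by simp [hl1, hl2], ?_, by simp⟩
  intro x hx
  rcases List.mem_append.mp hx with hx | hx
  exacts [hm1 x hx, hm2 x hx]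

lemma wordBall_inv {T : Set G} (hTinv : ∀ s ∈ T, s⁻¹ ∈ T) {n : ℕ} {g : G}
    (hg : g ∈ wordBall T n) : g⁻¹ ∈ wordBall T n := by
  obtain ⟨l, hl, hm, rfl⟩ := hg
  refine ⟨(l.map fun x => x⁻¹).reverse, by simp [hl], ?_, (List.prod_inv_reverse l).symm⟩
  intro x hx
  simp only [List.mem_reverse, List.mem_map] at hx
  obtain ⟨y, hy, rfl⟩ := hx
  exact hTinv y (hm y hy)

lemma wordBall_finite {T : Set G} (hT : T.Finite) (n : ℕ) : (wordBall T n).Finite := by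
  induction n with
  | zero =>
    have : wordBall T 0 = {1} := by
      ext g
      constructor
      · rintro ⟨l, hl, -, rfl⟩; simp [List.length_eq_zero_iff.mp hl]
      · rintro rfl; exact ⟨[], by simp⟩
    rw [this]; exact Set.finite_singleton 1
  | succ n ih =>
    have : wordBall T (n + 1) = ⋃ s ∈ T, (fun g => s * g) '' wordBall T n := by
      ext g
      constructor
      · rintro ⟨l, hl, hm, rfl⟩
        match l, hl with
        | a :: t, hl =>
          refine Set.mem_biUnion (hm a (by simp)) ⟨t.prod, ⟨t, by simpa using hl,
            fun x hx => hm x (by simp [hx]), rfl⟩, by simp⟩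
      · intro hg
        simp only [Set.mem_iUnion, Set.mem_image] at hg
        obtain ⟨s, hs, h, ⟨l, hl, hm, rfl⟩, rfl⟩ := hg
        refine ⟨s :: l, by simp [hl], ?_, by simp⟩
        rintro x hx
        rcases List.mem_cons.mp hx with rfl | hx
        exacts [hs, hm x hx]
    rw [this]
    exact hT.biUnion fun s _ => ih.image _

lemma wordBall_cover {T : Set G} (h1 : (1 : G) ∈ T) (hTinv : ∀ s ∈ T, s⁻¹ ∈ T)
    (hgen : Subgroup.closure T = ⊤) (g : G) : ∃ n, g ∈ wordBall T n := by
  have hg : g ∈ Subgroup.closure T := by rw [hgen]; trivial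
  induction hg using Subgroup.closure_induction with
  | mem x hx => exact ⟨1, ⟨[x], by simp, by simpa using hx, by simp⟩⟩
  | one => exact ⟨0, one_mem_wordBall h1 0⟩
  | mul x y hx hy ihx ihy =>
    obtain ⟨a, ha⟩ := ihx; obtain ⟨b, hb⟩ := ihy
    exact ⟨a + b, wordBall_mul ha hb⟩
  | inv x hx ihx =>
    obtain ⟨a, ha⟩ := ihx
    exact ⟨a, wordBall_inv hTinv ha⟩

lemma wordBall_decomp {T : Set G} {n j : ℕ} (hj : j ≤ n) {g : G}
    (hg : g ∈ wordBall T n) :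
    ∃ p ∈ wordBall T j, ∃ w ∈ wordBall T (n - j), g = p * w := by
  obtain ⟨l, hl, hm, rfl⟩ := hg
  refine ⟨(l.take j).prod, ⟨l.take j, by simp [hl, hj], fun x hx => hm x (List.take_subset _ _ hx),
    rfl⟩, (l.drop j).prod, ⟨l.drop j, by simp [hl], fun x hx => hm x (List.drop_subset _ _ hx),
    rfl⟩, (List.prod_take_mul_prod_drop l j).symm⟩

end WordBall

/-- If a finitely generated group `G` acts continuously on a compact
metric space `X` and the action is both distal and expansive, then `X` is finite. -/
theorem stmt_0 {G X : Type*} [Group G] [MetricSpace X] [CompactSpace X]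
    [MulAction G X]
    (hcont : ∀ g : G, Continuous fun x : X => g • x)
    (hfg : Group.FG G)
    (hdistal : ∀ x y : X, x ≠ y → 0 < ⨅ g : G, dist (g • x) (g • y))
    (hexpansive : ∃ c > 0, ∀ x y : X, x ≠ y → ∃ g : G, c < dist (g • x) (g • y)) :
    Finite X := by
  classical
  obtain ⟨c, hc, hexp⟩ := hexpansive
  by_contra hinf
  -- a finite symmetric generating set containing 1
  obtain ⟨S, hSgen, hSfin⟩ := Group.fg_iff.mp hfg
  set T : Set G := insert 1 (S ∪ (fun g => g⁻¹) '' S) with hTdef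
  have hTfin : T.Finite := ((hSfin.union (hSfin.image _)).insert 1)
  have h1T : (1 : G) ∈ T := Set.mem_insert _ _
  have hTinv : ∀ s ∈ T, s⁻¹ ∈ T := by
    intro s hs
    simp only [hTdef, Set.mem_insert_iff, Set.mem_union, Set.mem_image] at hs ⊢
    rcases hs with rfl | hs | ⟨t, ht, rfl⟩
    · left; simp
    · exact Or.inr (Or.inr ⟨s, hs, rfl⟩)
    · rw [inv_inv]; exact Or.inr (Or.inl ht)
  have hTgen : Subgroup.closure T = ⊤ := by
    refine eq_top_iff.mpr ?_
    rw [← hSgen]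
    exact Subgroup.closure_mono (fun x hx => Set.mem_insert_iff.mpr (Or.inr (Or.inl hx)))
  set B : ℕ → Set G := wordBall T with hBdef
  have hBfin : ∀ n, (B n).Finite := wordBall_finite hTfin
  have hB1 : ∀ n, (1 : G) ∈ B n := one_mem_wordBall h1T
  have hBmono : ∀ {m n : ℕ}, m ≤ n → B m ⊆ B n := fun h => wordBall_mono h1T h
  have hBcover : ∀ g : G, ∃ n, g ∈ B n := wordBall_cover h1T hTinv hTgen
  -- uniform continuity of each homeomorphism
  have hUC : ∀ (g : G) (ε : ℝ), 0 < ε →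
      ∃ η > 0, ∀ x y : X, dist x y < η → dist (g • x) (g • y) < ε := by
    intro g ε hε
    obtain ⟨η, hη, H⟩ :=
      Metric.uniformContinuous_iff.mp
        (CompactSpace.uniformContinuous_of_continuous (hcont g)) ε hε
    exact ⟨η, hη, fun x y h => H h⟩
  -- choose δ for the generators
  obtain ⟨δ, hδpos, hδc, hδT⟩ :
      ∃ δ > 0, δ ≤ c ∧ ∀ s ∈ T, ∀ x y : X, dist x y ≤ δ → dist (s • x) (s • y) ≤ c := by
    choose D hDpos hD using fun s : G => hUC s c hc
    set Tf := hTfin.toFinset with hTf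
    have hTfne : Tf.Nonempty := ⟨1, hTfin.mem_toFinset.mpr h1T⟩
    have hinfpos : 0 < Tf.inf' hTfne D := by
      rw [Finset.lt_inf'_iff]; exact fun i _ => hDpos i
    refine ⟨min c ((Tf.inf' hTfne D) / 2), lt_min hc (by linarith), min_le_left _ _, ?_⟩
    intro s hs x y hxy
    have h1 : min c ((Tf.inf' hTfne D) / 2) ≤ Tf.inf' hTfne D / 2 := min_le_right _ _
    have h2 : Tf.inf' hTfne D ≤ D s := Finset.inf'_le _ (hTfin.mem_toFinset.mpr hs)
    have h3 : dist x y < D s := by have := hDpos s; linarith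
    exact (hD s x y h3).le
  -- Step C : there are distinct points arbitrarily close
  have hclose : ∀ η > (0 : ℝ), ∃ x y : X, x ≠ y ∧ dist x y < η := by
    intro η hη
    by_contra h
    push_neg at h
    apply hinf
    have : DiscreteTopology X := by
      rw [discreteTopology_iff_isOpen_singleton]
      intro x
      have hball : Metric.ball x η = {x} := by
        ext y
        simp only [Metric.mem_ball, Set.mem_singleton_iff]
        constructor
        · intro hy
          by_contra hne
          have := h y x hne
          linarith
        · rintro rfl; simpa using hη
      rw [← hball]
      exact Metric.isOpen_ball
    exact finite_of_compact_of_discrete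
  -- the nested family of closed sets
  set Ω : ℕ → Set (X × X) := fun m =>
    {z : X × X | δ ≤ dist z.1 z.2} ∩
      ⋂ k ∈ Set.Iic m, ⋃ p ∈ B (k + 1), ⋂ b ∈ B k,
        {z : X × X | dist ((b * p⁻¹) • z.1) ((b * p⁻¹) • z.2) ≤ δ} with hΩdef
  have hΩclosed : ∀ m, IsClosed (Ω m) := by
    intro m
    refine IsClosed.inter (isClosed_le continuous_const
      (continuous_fst.dist continuous_snd)) ?_
    refine isClosed_biInter fun k _ => ?_
    refine (hBfin (k + 1)).isClosed_biUnion fun p _ => ?_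
    refine isClosed_biInter fun b _ => ?_
    exact isClosed_le (((hcont _).comp continuous_fst).dist
      ((hcont _).comp continuous_snd)) continuous_const
  have hΩnested : ∀ m, Ω (m + 1) ⊆ Ω m := by
    intro m z hz
    refine ⟨hz.1, ?_⟩
    have h2 := hz.2
    rw [Set.mem_iInter₂] at h2 ⊢
    exact fun k hk => h2 k (le_trans hk (Nat.le_succ m))
  have hΩne : ∀ m, (Ω m).Nonempty := by
    intro m
    -- choose close points
    choose E hEpos hE using fun g : G => hUC g δ hδpos
    set Bf := (hBfin (m + 1)).toFinset with hBf
    have hBfne : Bf.Nonempty := ⟨1, by simp [hBf]; exact hB1 (m + 1)⟩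
    set η := Bf.inf' hBfne E with hη
    have hηpos : 0 < η := by rw [hη, Finset.lt_inf'_iff]; exact fun i _ => hEpos i
    obtain ⟨x, y, hxy, hxyd⟩ := hclose η hηpos
    have hsmall : ∀ g ∈ B (m + 1), dist (g • x) (g • y) ≤ δ := by
      intro g hg
      have hle : η ≤ E g := Finset.inf'_le _ (by simp [hBf]; exact hg)
      exact (hE g x y (lt_of_lt_of_le hxyd hle)).le
    -- first word-length where the pair separates past δ
    have hPex : ∃ n, ∃ g ∈ B n, δ < dist (g • x) (g • y) := by
      obtain ⟨g, hgd⟩ := hexp x y hxy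
      obtain ⟨n, hgn⟩ := hBcover g
      exact ⟨n, g, hgn, lt_of_le_of_lt hδc hgd⟩
    set n₀ := Nat.find hPex with hn₀def
    obtain ⟨gs, hgs, hgsd⟩ := Nat.find_spec hPex
    have hn₀ : m + 2 ≤ n₀ := by
      by_contra h
      push_neg at h
      have hle : n₀ ≤ m + 1 := by omega
      exact absurd (hsmall gs (hBmono hle hgs)) (not_le.mpr hgsd)
    have hbelow : ∀ g ∈ B (n₀ - 1), dist (g • x) (g • y) ≤ δ := by
      have hmin := Nat.find_min hPex (show n₀ - 1 < n₀ by omega)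
      push_neg at hmin
      exact hmin
    refine ⟨(gs • x, gs • y), le_of_lt hgsd, ?_⟩
    rw [Set.mem_iInter₂]
    intro k hk
    have hk' : k ≤ m := hk
    obtain ⟨p, hp, w, hw, hgseq⟩ := wordBall_decomp (show k + 1 ≤ n₀ by omega) hgs
    refine Set.mem_iUnion₂.mpr ⟨p, hp, Set.mem_iInter₂.mpr fun b hb => ?_⟩
    have hbw : b * w ∈ B (n₀ - 1) := by
      have h1 : b * w ∈ B (k + (n₀ - (k + 1))) := wordBall_mul hb hw
      have h2 : k + (n₀ - (k + 1)) = n₀ - 1 := by omega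
      rwa [h2] at h1
    have hbwd := hbelow _ hbw
    have key : b * p⁻¹ * gs = b * w := by
      rw [hgseq]; group
    show dist ((b * p⁻¹) • (gs • x)) ((b * p⁻¹) • (gs • y)) ≤ δ
    rw [smul_smul, smul_smul, key]
    exact hbwd
  -- the limit pair
  obtain ⟨⟨u, v⟩, huv⟩ :=
    IsCompact.nonempty_iInter_of_sequence_nonempty_isCompact_isClosed Ω hΩnested hΩne
      ((hΩclosed 0).isCompact) hΩclosed
  have huvm : ∀ m, (u, v) ∈ Ω m := fun m => Set.mem_iInter.mp huv m
  have huvd : δ ≤ dist u v := (huvm 0).1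
  have hune : u ≠ v := by
    intro h
    rw [h] at huvd
    simp at huvd
    linarith
  have hρpos := hdistal u v hune
  set ρ := ⨅ g : G, dist (g • u) (g • v) with hρdef
  -- Step B : uniform expansivity
  have hstepB : ∃ m, ∀ p q : X,
      (∀ b ∈ B m, dist (b • p) (b • q) ≤ δ) → dist p q < ρ / 2 := by
    by_contra h
    push_neg at h
    choose P Q hPQ hsep using h
    set V : ℕ → Set (X × X) := fun m =>
      {z : X × X | (∀ b ∈ B m, dist (b • z.1) (b • z.2) ≤ δ) ∧ ρ / 2 ≤ dist z.1 z.2} with hV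
    have hVclosed : ∀ m, IsClosed (V m) := by
      intro m
      have h1 : IsClosed {z : X × X | ∀ b ∈ B m, dist (b • z.1) (b • z.2) ≤ δ} := by
        have : {z : X × X | ∀ b ∈ B m, dist (b • z.1) (b • z.2) ≤ δ} =
            ⋂ b ∈ B m, {z : X × X | dist (b • z.1) (b • z.2) ≤ δ} := by
          ext z; simp [Set.mem_iInter]
        rw [this]
        refine isClosed_biInter fun b _ => ?_
        exact isClosed_le (((hcont _).comp continuous_fst).dist
          ((hcont _).comp continuous_snd)) continuous_const
      exact h1.inter (isClosed_le continuous_const (continuous_fst.dist continuous_snd))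
    have hVnested : ∀ m, V (m + 1) ⊆ V m := by
      intro m z hz
      exact ⟨fun b hb => hz.1 b (hBmono (Nat.le_succ m) hb), hz.2⟩
    have hVne : ∀ m, (V m).Nonempty := fun m => ⟨(P m, Q m), hPQ m, hsep m⟩
    obtain ⟨⟨p, q⟩, hpq⟩ :=
      IsCompact.nonempty_iInter_of_sequence_nonempty_isCompact_isClosed V hVnested hVne
        ((hVclosed 0).isCompact) hVclosed
    have hpqm : ∀ m, (p, q) ∈ V m := fun m => Set.mem_iInter.mp hpq m
    have hpqne : p ≠ q := by
      intro h
      have := (hpqm 0).2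
      rw [h] at this
      simp at this
      linarith
    obtain ⟨g, hgd⟩ := hexp p q hpqne
    obtain ⟨n, hgn⟩ := hBcover g
    have := (hpqm n).1 g hgn
    linarith
  obtain ⟨m, hm⟩ := hstepB
  -- extract the witness at level m
  have h2 := (huvm m).2
  rw [Set.mem_iInter₂] at h2
  have h3 := h2 m (Set.mem_Iic.mpr le_rfl)
  obtain ⟨p, hp, hmem⟩ := Set.mem_iUnion₂.mp h3
  rw [Set.mem_iInter₂] at hmem
  have hd : dist (p⁻¹ • u) (p⁻¹ • v) < ρ / 2 := by
    refine hm _ _ fun b hb => ?_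
    have := hmem b hb
    rw [smul_smul, smul_smul]
    exact this
  have hge : ρ ≤ dist (p⁻¹ • u) (p⁻¹ • v) := by
    refine ciInf_le ⟨0, ?_⟩ p⁻¹
    rintro r ⟨g, rfl⟩
    exact dist_nonneg
  linarith
end

section
/- Let π : (X,G) → (Y,G) be an equicontinuous extension between minimal distal systems on compact metric spaces. If the action of G on X is expansive, then there exists N ∈ ℕ such that the fiber π⁻¹(y) has exactly N elements for every y ∈ Y. -/
open Metric Set

/-- A `δ`-separated set covered by finitely many balls of radius `δ/3` is finite,
with cardinality at most the number of balls. -/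
lemma sep_finite_aux {X : Type*} [MetricSpace X] {δ : ℝ} (hδ : 0 < δ) {S T : Set X}
    (hT : T.Finite) (hcov : S ⊆ ⋃ c ∈ T, Metric.ball c (δ / 3))
    (hsep : ∀ a ∈ S, ∀ b ∈ S, a ≠ b → δ ≤ dist a b) :
    S.Finite ∧ S.ncard ≤ T.ncard := by
  classical
  have hex : ∀ a ∈ S, ∃ c ∈ T, a ∈ Metric.ball c (δ / 3) := by
    intro a ha
    simpa using hcov ha
  set f : X → X := fun a =>
    if h : ∃ c ∈ T, a ∈ Metric.ball c (δ / 3) then h.choose else a with hf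
  have hfT : ∀ a ∈ S, f a ∈ T ∧ dist a (f a) < δ / 3 := by
    intro a ha
    have h := hex a ha
    simp only [hf, dif_pos h]
    exact ⟨h.choose_spec.1, Metric.mem_ball.mp h.choose_spec.2⟩
  have hinj : Set.InjOn f S := by
    intro a ha b hb hab
    by_contra hne
    have h1 := hfT a ha
    have h2 := hfT b hb
    have hd : dist a b < δ := by
      have htri := dist_triangle a (f b) b
      have h2' : dist (f b) b < δ / 3 := by rw [dist_comm]; exact h2.2
      have h1' : dist a (f b) < δ / 3 := hab ▸ h1.2
      linarith
    exact absurd hd (not_lt.mpr (hsep a ha b hb hne))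
  have himg : f '' S ⊆ T := by
    rintro _ ⟨a, ha, rfl⟩
    exact (hfT a ha).1
  have hSfin : S.Finite := Set.Finite.of_finite_image (hT.subset himg) hinj
  refine ⟨hSfin, ?_⟩
  calc S.ncard = (f '' S).ncard := (Set.ncard_image_of_injOn hinj).symm
    _ ≤ T.ncard := Set.ncard_le_ncard himg hT

/-- If `π : (X,G) → (Y,G)` is an equicontinuous extension between
minimal distal systems on compact metric spaces and the action on `X` is expansive,
then all fibers of `π` have the same finite cardinality `N`. -/
theorem stmt_1 {G X Y : Type*} [Group G] [MetricSpace X] [CompactSpace X]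
    [MetricSpace Y] [CompactSpace Y] [MulAction G X] [MulAction G Y]
    (hcontX : ∀ g : G, Continuous fun x : X => g • x)
    (hcontY : ∀ g : G, Continuous fun y : Y => g • y)
    (hminX : ∀ x : X, Dense (MulAction.orbit G x : Set X))
    (hminY : ∀ y : Y, Dense (MulAction.orbit G y : Set Y))
    (hdistalX : ∀ x x' : X, x ≠ x' → 0 < ⨅ g : G, dist (g • x) (g • x'))
    (hdistalY : ∀ y y' : Y, y ≠ y' → 0 < ⨅ g : G, dist (g • y) (g • y'))
    (π : X → Y) (hπcont : Continuous π) (hπsurj : Function.Surjective π)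
    (hπequiv : ∀ (g : G) (x : X), π (g • x) = g • π x)
    (hequi : ∀ ε > 0, ∃ δ > 0, ∀ x x' : X, π x = π x' → dist x x' < δ →
      ∀ g : G, dist (g • x) (g • x') < ε)
    (hexpansive : ∃ c > 0, ∀ x x' : X, x ≠ x' → ∃ g : G, c < dist (g • x) (g • x')) :
    ∃ N : ℕ, ∀ y : Y, (π ⁻¹' {y}).Finite ∧ (π ⁻¹' {y}).ncard = N := by
  classical
  rcases isEmpty_or_nonempty Y with hY | hY
  · exact ⟨0, fun y => (IsEmpty.false y).elim⟩
  obtain ⟨c, hc, hexp⟩ := hexpansive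
  obtain ⟨δ0, hδ0, hkey⟩ := hequi c hc
  -- Distinct points in the same fiber are at distance ≥ δ0.
  have hsep : ∀ a b : X, π a = π b → a ≠ b → δ0 ≤ dist a b := by
    intro a b hab hne
    by_contra h
    push_neg at h
    obtain ⟨g, hg⟩ := hexp a b hne
    exact absurd (hkey a b hab h g) (not_lt.mpr hg.le)
  -- a global finite cover of X by balls of radius δ0/3
  obtain ⟨t, -, htfin, htcov⟩ :=
    finite_cover_balls_of_compact (isCompact_univ (X := X)) (by positivity : (0:ℝ) < δ0 / 3)
  have hsepfib : ∀ z : Y, ∀ a ∈ π ⁻¹' {z}, ∀ b ∈ π ⁻¹' {z}, a ≠ b → δ0 ≤ dist a b := by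
    intro z a ha b hb hne
    exact hsep a b (by simp only [Set.mem_preimage, Set.mem_singleton_iff] at ha hb; rw [ha, hb])
      hne
  -- every fiber is finite with uniformly bounded cardinality
  have hfin_bound : ∀ y : Y, (π ⁻¹' {y}).Finite ∧ (π ⁻¹' {y}).ncard ≤ t.ncard := by
    intro y
    exact sep_finite_aux hδ0 htfin (fun x _ => htcov (Set.mem_univ x)) (hsepfib y)
  -- equivariance of fibers
  have hfiber_smul : ∀ (g : G) (y : Y), π ⁻¹' {g • y} = (fun x : X => g • x) '' (π ⁻¹' {y}) := by
    intro g y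
    ext x
    simp only [Set.mem_preimage, Set.mem_singleton_iff, Set.mem_image]
    constructor
    · intro h
      refine ⟨g⁻¹ • x, ?_, smul_inv_smul g x⟩
      rw [hπequiv, h, inv_smul_smul]
    · rintro ⟨x', hx', rfl⟩
      rw [hπequiv, hx']
  have hk_smul : ∀ (g : G) (y : Y), (π ⁻¹' {g • y}).ncard = (π ⁻¹' {y}).ncard := by
    intro g y
    rw [hfiber_smul g y]
    exact Set.ncard_image_of_injective _ (MulAction.injective g)
  -- upper semicontinuity of fiber cardinality
  have husc : ∀ y : Y, ∃ U : Set Y, IsOpen U ∧ y ∈ U ∧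
      ∀ z ∈ U, (π ⁻¹' {z}).ncard ≤ (π ⁻¹' {y}).ncard := by
    intro y
    set F := π ⁻¹' {y} with hFdef
    have hF : F.Finite := (hfin_bound y).1
    set V := ⋃ c ∈ F, Metric.ball c (δ0 / 3) with hVdef
    have hVopen : IsOpen V := isOpen_biUnion fun _ _ => Metric.isOpen_ball
    have hKclosed : IsClosed (π '' Vᶜ) :=
      ((hVopen.isClosed_compl).isCompact.image hπcont).isClosed
    have hyU : y ∈ (π '' Vᶜ)ᶜ := by
      rintro ⟨x, hxV, hxy⟩
      apply hxV
      have hxF : x ∈ F := by simp [hFdef, hxy]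
      exact Set.mem_biUnion hxF (Metric.mem_ball_self (by positivity))
    refine ⟨(π '' Vᶜ)ᶜ, hKclosed.isOpen_compl, hyU, ?_⟩
    intro z hz
    have hcov : π ⁻¹' {z} ⊆ V := by
      intro x hx
      by_contra hxV
      exact hz ⟨x, hxV, by simpa using hx⟩
    exact (sep_finite_aux hδ0 hF hcov (hsepfib z)).2
  -- take a point with maximal fiber cardinality
  set k : Y → ℕ := fun y => (π ⁻¹' {y}).ncard with hkdef
  have hrange : Set.range k ⊆ Set.Iic t.ncard := by
    rintro _ ⟨y, rfl⟩
    exact (hfin_bound y).2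
  have hfinr : (Set.range k).Finite := (Set.finite_Iic _).subset hrange
  obtain ⟨N, hNmem, hNmax⟩ :=
    Set.Finite.exists_maximalFor id (Set.range k) hfinr (Set.range_nonempty k)
  obtain ⟨y0, hy0⟩ := hNmem
  have hmax : ∀ y : Y, k y ≤ N := by
    intro y
    rcases le_or_gt (k y) N with h | h
    · exact h
    · exact hNmax ⟨y, rfl⟩ h.le
  refine ⟨N, fun y => ⟨(hfin_bound y).1, ?_⟩⟩
  refine le_antisymm (hmax y) ?_
  obtain ⟨U, hUopen, hyU, hUle⟩ := husc y
  obtain ⟨p, hporbit, hpU⟩ := (hminY y0).exists_mem_open hUopen ⟨y, hyU⟩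
  obtain ⟨g, rfl⟩ := MulAction.mem_orbit_iff.mp hporbit
  calc N = k y0 := hy0.symm
    _ = k (g • y0) := (hk_smul g y0).symm
    _ ≤ k y := hUle _ hpU
end

section
/- Let π : (X,G) → (Y,G) be an equicontinuous extension between minimal distal systems on compact metric spaces. If the action of G on X is expansive, then π : X → Y is a covering map. -/
open Metric Set Filter Topology

/-- If `π : (X,G) → (Y,G)` is an equicontinuous extension between
minimal distal systems on compact metric spaces and the action on `X` is expansive,
then `π` is a covering map. -/
theorem stmt_2 {G X Y : Type*} [Group G] [MetricSpace X] [CompactSpace X]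
    [MetricSpace Y] [CompactSpace Y] [MulAction G X] [MulAction G Y]
    (hcontX : ∀ g : G, Continuous fun x : X => g • x)
    (hcontY : ∀ g : G, Continuous fun y : Y => g • y)
    (hminX : ∀ x : X, Dense (MulAction.orbit G x : Set X))
    (hminY : ∀ y : Y, Dense (MulAction.orbit G y : Set Y))
    (hdistalX : ∀ x x' : X, x ≠ x' → 0 < ⨅ g : G, dist (g • x) (g • x'))
    (hdistalY : ∀ y y' : Y, y ≠ y' → 0 < ⨅ g : G, dist (g • y) (g • y'))
    (π : X → Y) (hπcont : Continuous π) (hπsurj : Function.Surjective π)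
    (hπequiv : ∀ (g : G) (x : X), π (g • x) = g • π x)
    (hequi : ∀ ε > 0, ∃ δ > 0, ∀ x x' : X, π x = π x' → dist x x' < δ →
      ∀ g : G, dist (g • x) (g • x') < ε)
    (hexpansive : ∃ c > 0, ∀ x x' : X, x ≠ x' → ∃ g : G, c < dist (g • x) (g • x')) :
    IsCoveringMap π := by
  classical
  -- trivial case: X empty
  rcases isEmpty_or_nonempty X with hX | hX
  · intro y; exact absurd (hπsurj y) (by simp)
  have hYne : Nonempty Y := ⟨π (Classical.arbitrary X)⟩
  obtain ⟨c, hc, hexp⟩ := hexpansive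
  obtain ⟨δ, hδ, hδequi⟩ := hequi c hc
  -- separation of fibers
  have hsep : ∀ x x' : X, π x = π x' → dist x x' < δ → x = x' := by
    intro x x' h hd
    by_contra hne
    obtain ⟨g, hg⟩ := hexp x x' hne
    exact absurd (hδequi x x' h hd g) (not_lt.2 hg.le)
  have hsep' : ∀ x x' : X, π x = π x' → x ≠ x' → δ ≤ dist x x' := fun x x' h hne =>
    le_of_not_gt fun hd => hne (hsep x x' h hd)
  -- fibers are finite with uniformly bounded cardinality
  obtain ⟨t, -, htfin, htcover⟩ :=
    finite_cover_balls_of_compact (isCompact_univ (X := X)) (by positivity : (0:ℝ) < δ/2)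
  haveI : Finite ↥t := htfin.to_subtype
  have hinjt : ∀ y : Y, ∃ f : ↥(π ⁻¹' {y}) → ↥t, Function.Injective f := by
    intro y
    have hx : ∀ x : ↥(π ⁻¹' {y}), ∃ z : ↥t, (x : X) ∈ ball (z : X) (δ/2) := by
      intro x
      have := htcover (mem_univ (x : X))
      simp only [mem_iUnion] at this
      obtain ⟨z, hz, hball⟩ := this
      exact ⟨⟨z, hz⟩, hball⟩
    choose f hf using hx
    refine ⟨f, fun a b hab => ?_⟩
    have h1 := hf a
    have h2 := hf b
    rw [hab, mem_ball] at h1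
    rw [mem_ball] at h2
    have h3 := dist_triangle (a : X) ((f b : X)) (b : X)
    rw [dist_comm ((f b : X)) (b : X)] at h3
    have hd : dist (a : X) (b : X) < δ := by linarith
    exact Subtype.ext (hsep a b (by rw [a.2.out, b.2.out]) hd)
  have hfin : ∀ y : Y, Finite ↥(π ⁻¹' {y}) := by
    intro y
    obtain ⟨f, hf⟩ := hinjt y
    exact Finite.of_injective f hf
  have hcard_le : ∀ y : Y, Nat.card ↥(π ⁻¹' {y}) ≤ Nat.card ↥t := by
    intro y
    obtain ⟨f, hf⟩ := hinjt y
    exact Nat.card_le_card_of_injective f hf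
  -- n : the maximal fiber cardinality
  set n : ℕ := sSup (Set.range fun y : Y => Nat.card ↥(π ⁻¹' {y})) with hn
  have hbdd : BddAbove (Set.range fun y : Y => Nat.card ↥(π ⁻¹' {y})) :=
    ⟨Nat.card ↥t, by rintro k ⟨y, rfl⟩; exact hcard_le y⟩
  have hne : (Set.range fun y : Y => Nat.card ↥(π ⁻¹' {y})).Nonempty :=
    Set.range_nonempty _
  obtain ⟨y0, hy0⟩ := Nat.sSup_mem hne hbdd
  have hy0' : Nat.card ↥(π ⁻¹' {y0}) = n := hy0
  have hle : ∀ y : Y, Nat.card ↥(π ⁻¹' {y}) ≤ n := fun y => le_csSup hbdd (mem_range_self y)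
  -- invariance of fiber cardinality
  have hinv : ∀ (g : G) (y : Y), Nat.card ↥(π ⁻¹' {g • y}) = Nat.card ↥(π ⁻¹' {y}) := by
    intro g y
    apply Nat.card_congr
    refine (Equiv.subtypeEquiv (MulAction.toPerm g) fun x => ?_).symm
    simp only [mem_preimage, mem_singleton_iff, MulAction.toPerm_apply, hπequiv]
    exact ⟨fun h => by rw [h], fun h => smul_left_cancel g h⟩
  -- key compactness selection lemma
  have hkey : ∀ (u : ℕ → Y) (y : Y), Tendsto u atTop (𝓝 y) →
      (∀ k, Nat.card ↥(π ⁻¹' {u k}) = n) →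
      ∃ (v : ℕ → Fin n → X) (φ : ℕ → ℕ) (w : Fin n → X), StrictMono φ ∧
        (∀ k i, π (v k i) = u k) ∧ Function.Injective w ∧ (∀ i, π (w i) = y) ∧
        (∀ i, Tendsto (fun k => v (φ k) i) atTop (𝓝 (w i))) := by
    intro u y hu hcard
    have hsel : ∀ k, ∃ v : Fin n → X, (∀ i, π (v i) = u k) ∧ Function.Injective v := by
      intro k
      haveI := hfin (u k)
      have e := (Finite.equivFinOfCardEq (hcard k)).symm
      refine ⟨fun i => (e i : X), fun i => (e i).2.out, fun i j hij => ?_⟩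
      exact e.injective (Subtype.ext hij)
    choose v hv1 hv2 using hsel
    obtain ⟨w, -, φ, hφ, hconv⟩ := isCompact_univ.tendsto_subseq
      (fun k => (mem_univ (v k) : v k ∈ (univ : Set (Fin n → X))))
    have hptconv : ∀ i, Tendsto (fun k => v (φ k) i) atTop (𝓝 (w i)) := by
      intro i
      exact (tendsto_pi_nhds.1 hconv) i
    refine ⟨v, φ, w, hφ, hv1, ?_, ?_, hptconv⟩
    · -- injectivity of w
      intro i j hij
      by_contra hne
      have hdist : ∀ k, δ ≤ dist (v (φ k) i) (v (φ k) j) := fun k =>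
        hsep' _ _ (by rw [hv1, hv1]) fun h => hne (hv2 (φ k) h)
      have htd : Tendsto (fun k => dist (v (φ k) i) (v (φ k) j)) atTop
          (𝓝 (dist (w i) (w j))) := (hptconv i).dist (hptconv j)
      have : δ ≤ dist (w i) (w j) := le_of_tendsto_of_tendsto tendsto_const_nhds htd
        (Eventually.of_forall hdist)
      rw [hij] at this
      simp at this
      linarith
    · -- π (w i) = y
      intro i
      have h1 : Tendsto (fun k => π (v (φ k) i)) atTop (𝓝 (π (w i))) :=
        (hπcont.tendsto _).comp (hptconv i)
      have h2 : Tendsto (fun k => π (v (φ k) i)) atTop (𝓝 y) := by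
        simp only [hv1]
        exact hu.comp hφ.tendsto_atTop
      exact tendsto_nhds_unique h1 h2
  -- all fibers have cardinality exactly n
  have hcardn : ∀ y : Y, Nat.card ↥(π ⁻¹' {y}) = n := by
    intro y
    refine le_antisymm (hle y) ?_
    have horb : ∀ z ∈ MulAction.orbit G y0, Nat.card ↥(π ⁻¹' {z}) = n := by
      rintro z ⟨g, rfl⟩
      rw [hinv g y0, hy0']
    have hyc : y ∈ closure (MulAction.orbit G y0) := hminY y0 y
    obtain ⟨u, hu1, hu2⟩ := mem_closure_iff_seq_limit.1 hyc
    obtain ⟨v, φ, w, hφ, hv1, hwinj, hwfib, hconv⟩ :=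
      hkey u y hu2 (fun k => horb _ (hu1 k))
    haveI := hfin y
    have : Nat.card (Fin n) ≤ Nat.card ↥(π ⁻¹' {y}) := by
      refine Nat.card_le_card_of_injective (fun i => (⟨w i, hwfib i⟩ : ↥(π ⁻¹' {y}))) ?_
      intro i j hij
      exact hwinj (by simpa [Subtype.ext_iff] using hij)
    simpa using this
  -- π is an open map
  have hopen : IsOpenMap π := by
    intro U hU
    rw [isOpen_iff_mem_nhds]
    intro y hy
    by_contra hny
    have hyc : y ∈ closure ((π '' U)ᶜ) := by
      rw [mem_closure_iff_nhds]
      intro N hN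
      rcases eq_empty_or_nonempty (N ∩ (π '' U)ᶜ) with h | h
      · exact absurd (Filter.mem_of_superset hN (fun z hz => by_contra fun hz' =>
          (eq_empty_iff_forall_notMem.1 h z) ⟨hz, hz'⟩)) hny
      · exact h
    obtain ⟨u, hu1, hu2⟩ := mem_closure_iff_seq_limit.1 hyc
    obtain ⟨v, φ, w, hφ, hv1, hwinj, hwfib, hconv⟩ :=
      hkey u y hu2 (fun k => hcardn (u k))
    obtain ⟨x, hxU, hxy⟩ := hy
    -- w is surjective onto the fiber of y
    haveI := hfin y
    have hw' : Function.Bijective (fun i => (⟨w i, hwfib i⟩ : ↥(π ⁻¹' {y}))) := by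
      rw [Nat.bijective_iff_injective_and_card]
      constructor
      · intro i j hij
        exact hwinj (by simpa [Subtype.ext_iff] using hij)
      · rw [Nat.card_fin]; exact (hcardn y).symm
    obtain ⟨i, hi⟩ := hw'.2 ⟨x, by simp [hxy]⟩
    have hxi : w i = x := by simpa [Subtype.ext_iff] using hi
    have hev : ∀ᶠ k in atTop, v (φ k) i ∈ U := by
      have := hconv i
      rw [hxi] at this
      exact this (hU.mem_nhds hxU)
    obtain ⟨k, hk⟩ := hev.exists
    exact hu1 (φ k) ⟨v (φ k) i, hk, hv1 (φ k) i⟩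
  -- Discreteness of fibers
  have hdisc : ∀ y : Y, DiscreteTopology ↥(π ⁻¹' {y}) := by
    intro y
    rw [discreteTopology_iff_isOpen_singleton]
    intro z
    have hzy : π (z : X) = y := z.2.out
    have : ({z} : Set ↥(π ⁻¹' {y})) = Subtype.val ⁻¹' ball (z : X) δ := by
      ext a
      simp only [mem_singleton_iff, mem_preimage, mem_ball]
      constructor
      · rintro rfl; simpa using hδ
      · intro h
        exact Subtype.ext (hsep a z (by rw [a.2.out, hzy]) h)
    rw [this]
    exact isOpen_ball.preimage continuous_subtype_val
  -- Now build the trivializations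
  intro y
  haveI := hdisc y
  suffices h : ∃ t : Bundle.Trivialization (π ⁻¹' {y}) π, y ∈ t.baseSet from
    (let ⟨_, ht⟩ := h; IsEvenlyCovered.of_trivialization ht)
  set A : Set X := π ⁻¹' {y} with hA
  haveI hAfin : Finite ↥A := hfin y
  have hAfinset : A.Finite := Set.toFinite A
  haveI hAne : Nonempty ↥A := by
    obtain ⟨x, hx⟩ := hπsurj y
    exact ⟨⟨x, by simp [hA, hx]⟩⟩
  set r : ℝ := δ/2 with hrdef
  have hr : 0 < r := by positivity
  -- disjointness of balls around fiber points
  have hballdisj : ∀ (z z' : ↥A) (x : X), x ∈ ball (z : X) r → x ∈ ball (z' : X) r →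
      z = z' := by
    intro z z' x hx hx'
    by_contra hne
    have hne' : (z : X) ≠ (z' : X) := fun h => hne (Subtype.ext h)
    have := hsep' (z : X) (z' : X) (by rw [z.2.out, z'.2.out]) hne'
    rw [mem_ball] at hx hx'
    have := dist_triangle (z : X) x (z' : X)
    rw [dist_comm ((z : X)) x] at this
    simp only [hrdef] at hx hx'
    linarith
  -- injectivity of π on balls
  have hinj : ∀ (z : X) (x x' : X), x ∈ ball z r → x' ∈ ball z r → π x = π x' → x = x' := by
    intro z x x' hx hx' hπ
    apply hsep x x' hπ
    rw [mem_ball] at hx hx'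
    have := dist_triangle x z x'
    rw [dist_comm z x'] at this
    simp only [hrdef] at hx hx'
    linarith
  set W : Set X := ⋃ z : ↥A, ball (z : X) r with hW
  have hWopen : IsOpen W := isOpen_iUnion fun z => isOpen_ball
  have hAW : A ⊆ W := fun a ha => mem_iUnion.2 ⟨⟨a, ha⟩, mem_ball_self hr⟩
  have hKclosed : IsClosed (π '' Wᶜ) :=
    (hWopen.isClosed_compl.isCompact.image hπcont).isClosed
  set V1 : Set Y := (⋂ z : ↥A, π '' ball (z : X) r) \ π '' Wᶜ with hV1
  have hV1open : IsOpen V1 := by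
    apply IsOpen.sdiff _ hKclosed
    exact isOpen_iInter_of_finite fun z => hopen _ isOpen_ball
  have hyV1 : y ∈ V1 := by
    constructor
    · refine mem_iInter.2 fun z => ⟨(z : X), mem_ball_self hr, z.2.out⟩
    · rintro ⟨x, hxW, hxy⟩
      exact hxW (hAW (by simp [hA, hxy]))
  obtain ⟨ρ, hρ, hρsub⟩ := (Metric.nhds_basis_closedBall.mem_iff).1 (hV1open.mem_nhds hyV1)
  set Vc : Set Y := closedBall y ρ with hVc
  set V : Set Y := ball y ρ with hVdef
  have hVVc : V ⊆ Vc := ball_subset_closedBall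
  have hpre : π ⁻¹' Vc ⊆ W := by
    intro x hx
    by_contra hxW
    exact (hρsub hx).2 ⟨x, hxW, rfl⟩
  have hVcim : ∀ z : ↥A, Vc ⊆ π '' ball (z : X) r := by
    intro z v hv
    exact mem_iInter.1 (hρsub hv).1 z
  -- the local continuous sections
  have hψex : ∀ z : ↥A, ∃ ψz : ↥Vc → X, Continuous ψz ∧ (∀ w, π (ψz w) = (w : Y)) ∧
      (∀ w, ψz w ∈ ball (z : X) r) := by
    intro z
    set C : Set X := π ⁻¹' Vc ∩ ball (z : X) r with hC
    have hCclosed : IsClosed C := by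
      have : C = π ⁻¹' Vc ∩ (⋃ z' : {z' : ↥A // z' ≠ z}, ball ((z' : ↥A) : X) r)ᶜ := by
        ext x
        simp only [hC, mem_inter_iff, mem_preimage, mem_compl_iff, mem_iUnion]
        constructor
        · rintro ⟨h1, h2⟩
          refine ⟨h1, ?_⟩
          rintro ⟨z', hz'⟩
          exact z'.2 (hballdisj _ _ x hz' h2)
        · rintro ⟨h1, h2⟩
          refine ⟨h1, ?_⟩
          have hxW := hpre h1
          rw [hW] at hxW
          obtain ⟨s, ⟨z', rfl⟩, hxs⟩ := hxW
          by_cases hzz : z' = z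
          · rwa [hzz] at hxs
          · exact absurd ⟨⟨z', hzz⟩, hxs⟩ h2
      rw [this]
      exact IsClosed.inter ((isClosed_closedBall.preimage hπcont))
        (isOpen_iUnion fun _ => isOpen_ball).isClosed_compl
    haveI : CompactSpace ↥C := isCompact_iff_compactSpace.1 hCclosed.isCompact
    have hbij : Function.Bijective (fun u : ↥C => (⟨π (u : X), u.2.1⟩ : ↥Vc)) := by
      constructor
      · intro a b hab
        exact Subtype.ext (hinj (z : X) _ _ a.2.2 b.2.2 (by simpa [Subtype.ext_iff] using hab))
      · intro v
        obtain ⟨b, hb, hπb⟩ := hVcim z v.2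
        have hbC : b ∈ C := ⟨by simp [mem_preimage, hπb, v.2], hb⟩
        exact ⟨⟨b, hbC⟩, Subtype.ext hπb⟩
    have hcont : Continuous (fun u : ↥C => (⟨π (u : X), u.2.1⟩ : ↥Vc)) :=
      (hπcont.comp continuous_subtype_val).subtype_mk _
    set E := Equiv.ofBijective _ hbij with hE
    have HE : Continuous ⇑E := hcont
    set H := Continuous.homeoOfEquivCompactToT2 (f := E) HE with hH
    refine ⟨fun w => (H.symm w : X), continuous_subtype_val.comp H.symm.continuous, ?_, ?_⟩
    · intro w
      have : H (H.symm w) = w := H.apply_symm_apply w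
      have h2 : (⟨π ((H.symm w : ↥C) : X), (H.symm w).2.1⟩ : ↥Vc) = w := this
      simpa [Subtype.ext_iff] using h2
    · intro w
      exact (H.symm w).2.2
  choose ψ hψcont hψπ hψball using hψex
  -- the index function
  have hidxex : ∃ idx : X → ↥A, ∀ (z : ↥A) (x : X), x ∈ ball (z : X) r → idx x = z := by
    refine ⟨fun x => if h : ∃ z : ↥A, x ∈ ball (z : X) r then h.choose
      else Classical.arbitrary _, ?_⟩
    intro z x hx
    have h : ∃ z : ↥A, x ∈ ball (z : X) r := ⟨z, hx⟩
    simp only [dif_pos h]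
    exact hballdisj _ _ x h.choose_spec hx
  obtain ⟨idx, hidx⟩ := hidxex
  have hidxball : ∀ x ∈ π ⁻¹' Vc, x ∈ ball ((idx x : ↥A) : X) r := by
    intro x hx
    have hxW := hpre hx
    rw [hW] at hxW
    obtain ⟨s, ⟨z, rfl⟩, hxs⟩ := hxW
    rw [hidx z x hxs]
    exact hxs
  -- assemble the trivialization
  refine ⟨⟨⟨⟨⟨fun x => (π x, idx x),
      fun p => if h : p.1 ∈ Vc then ψ p.2 ⟨p.1, h⟩ else Classical.arbitrary X,
      π ⁻¹' V, V ×ˢ (univ : Set ↥A), ?_, ?_, ?_, ?_⟩, ?_, ?_⟩,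
      isOpen_ball.preimage hπcont, isOpen_ball.prod isOpen_univ⟩,
      V, isOpen_ball, rfl, rfl, fun p hp => rfl⟩, mem_ball_self hρ⟩
  · -- map_source
    intro x hx
    exact ⟨hx, trivial⟩
  · -- map_target
    rintro ⟨v, z⟩ ⟨hv, -⟩
    have hvc : v ∈ Vc := hVVc hv
    simp only [dif_pos hvc, mem_preimage]
    rw [hψπ z ⟨v, hvc⟩]
    exact hv
  · -- left_inv
    intro x hx
    have hxc : π x ∈ Vc := hVVc hx
    simp only [dif_pos hxc]
    refine hinj ((idx x : ↥A) : X) _ _ (hψball _ _) (hidxball x hxc) (hψπ _ _)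
  · -- right_inv
    rintro ⟨v, z⟩ ⟨hv, -⟩
    have hvc : v ∈ Vc := hVVc hv
    simp only [dif_pos hvc]
    have h1 : π (ψ z ⟨v, hvc⟩) = v := hψπ z ⟨v, hvc⟩
    have h2 : idx (ψ z ⟨v, hvc⟩) = z := hidx z _ (hψball z ⟨v, hvc⟩)
    rw [h1, h2]
  · -- continuousOn_toFun
    apply continuousOn_of_forall_continuousAt
    intro x hx
    have hxc : π x ∈ Vc := hVVc hx
    have hxb : x ∈ ball ((idx x : ↥A) : X) r := hidxball x hxc
    have hidxcont : ContinuousAt idx x := by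
      have hev : ∀ᶠ x' in 𝓝 x, idx x' = idx x := by
        filter_upwards [isOpen_ball.mem_nhds hxb] with x' hx' using hidx _ x' hx'
      exact continuousAt_const.congr (by filter_upwards [hev] with x' h using h.symm)
    exact hπcont.continuousAt.prodMk hidxcont
  · -- continuousOn_invFun
    rintro ⟨v, z⟩ ⟨hv, -⟩
    have hO : ((univ : Set Y) ×ˢ ({z} : Set ↥A)) ∈ 𝓝 ((v, z) : Y × ↥A) := by
      haveI := hdisc y
      exact (isOpen_univ.prod (isOpen_discrete ({z} : Set ↥A))).mem_nhds ⟨trivial, rfl⟩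
    rw [← continuousWithinAt_inter hO]
    set g : Y → X := fun v' => if h : v' ∈ Vc then ψ z ⟨v', h⟩ else Classical.arbitrary X
      with hg
    have hgOn : ContinuousOn g Vc := by
      rw [continuousOn_iff_continuous_restrict]
      have : Vc.domRestrict g = ψ z := by
        funext w
        simp only [Set.domRestrict_apply, hg, dif_pos w.2]
      rw [this]
      exact hψcont z
    have hgw : ContinuousWithinAt g Vc v := hgOn v (hVVc hv)
    have hcomp : ContinuousWithinAt (fun p : Y × ↥A => g p.1)
        ((V ×ˢ (univ : Set ↥A)) ∩ ((univ : Set Y) ×ˢ ({z} : Set ↥A))) (v, z) := by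
      refine ContinuousWithinAt.comp (x := (v, z)) hgw continuousWithinAt_fst ?_
      rintro ⟨v', z'⟩ ⟨⟨hv', -⟩, -⟩
      exact hVVc hv'
    refine hcomp.congr ?_ ?_
    · rintro ⟨v', z'⟩ ⟨⟨hv', -⟩, ⟨-, hz'⟩⟩
      simp only [mem_singleton_iff] at hz'
      subst hz'
      rfl
    · rfl
end

section
/- Let G be a finitely generated group and π : (X,G) → (Y,G) a factor map between continuous G-actions on compact metric spaces. If π is a finite-fold covering map and the action of G on X is expansive, then the action of G on Y is expansive. -/
/-- Uniform fiber separation for a covering map on a compact metric space. -/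
lemma aux_fiber_sep {X Y : Type*} [MetricSpace X] [CompactSpace X] [TopologicalSpace Y]
    {π : X → Y} (h : IsLocalHomeomorph π) :
    ∃ δ > 0, ∀ x x' : X, π x = π x' → x ≠ x' → δ ≤ dist x x' := by
  choose e hmem heq using fun x => h x
  obtain ⟨δ, hδ, hball⟩ := lebesgue_number_lemma_of_metric (isCompact_univ (X := X))
    (fun x => (e x).open_source)
    (fun x _ => Set.mem_iUnion.2 ⟨x, hmem x⟩)
  refine ⟨δ, hδ, fun x x' hπ hne => ?_⟩
  by_contra hlt
  push_neg at hlt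
  obtain ⟨i, hi⟩ := hball x trivial
  have hx : x ∈ (e i).source := hi (Metric.mem_ball_self hδ)
  have hx' : x' ∈ (e i).source := hi (by simpa [Metric.mem_ball, dist_comm] using hlt)
  exact hne ((e i).injOn hx hx' (by rw [← heq i]; exact hπ))

/-- Uniform local lifting for a covering map on a compact metric space. -/
lemma aux_lift {X Y : Type*} [MetricSpace X] [CompactSpace X] [MetricSpace Y]
    {π : X → Y} (h : IsLocalHomeomorph π) {δ : ℝ} (hδ : 0 < δ) :
    ∃ ε > 0, ∀ (x : X) (y' : Y), dist (π x) y' < ε →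
      ∃ x', π x' = y' ∧ dist x x' < δ := by
  rcases isEmpty_or_nonempty X with hX | hX
  · exact ⟨1, one_pos, fun x => isEmptyElim x⟩
  have key : ∀ x : X, ∃ r > 0, ∀ y' : Y, dist (π x) y' < 2 * r →
      ∃ x', π x' = y' ∧ dist x x' < δ / 2 := by
    intro x
    obtain ⟨e, hmem, heq⟩ := h x
    have hxt : π x ∈ e.target := by rw [heq]; exact e.map_source hmem
    have hsymm : e.symm (π x) = x := by rw [heq]; exact e.left_inv hmem
    obtain ⟨r₁, hr₁, H⟩ := Metric.continuousAt_iff.mp (e.continuousAt_symm hxt)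
      (δ / 2) (by positivity)
    obtain ⟨r₂, hr₂, hball⟩ := Metric.isOpen_iff.mp e.open_target (π x) hxt
    refine ⟨min r₁ r₂ / 2, by positivity, fun y' hy' => ?_⟩
    have h2 : 2 * (min r₁ r₂ / 2) = min r₁ r₂ := by ring
    rw [h2] at hy'
    have hy1 : dist y' (π x) < r₁ := by rw [dist_comm]; exact hy'.trans_le (min_le_left _ _)
    have hy2 : y' ∈ e.target := hball (by
      rw [Metric.mem_ball, dist_comm]; exact hy'.trans_le (min_le_right _ _))
    refine ⟨e.symm y', ?_, ?_⟩
    · rw [heq]; exact e.right_inv hy2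
    · have := H hy1
      rw [hsymm] at this
      rw [dist_comm]
      exact this
  choose r hr hkey using key
  set W : X → Set X := fun x => Metric.ball x (δ / 2) ∩ π ⁻¹' Metric.ball (π x) (r x) with hW
  have hWopen : ∀ x, IsOpen (W x) := fun x =>
    (Metric.isOpen_ball).inter ((Metric.isOpen_ball).preimage (h.continuous))
  have hWcover : (Set.univ : Set X) ⊆ ⋃ x, W x := fun x _ =>
    Set.mem_iUnion.2 ⟨x, Metric.mem_ball_self (by positivity),
      by simp [Metric.mem_ball_self (hr x)]⟩
  obtain ⟨t, ht⟩ := isCompact_univ.elim_finite_subcover W hWopen hWcover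
  have htne : t.Nonempty := by
    obtain ⟨x⟩ := hX
    obtain ⟨i, hi⟩ := Set.mem_iUnion₂.1 (ht (Set.mem_univ x))
    exact ⟨i, hi.1⟩
  refine ⟨t.inf' htne r, by
    apply (Finset.lt_inf'_iff _).2
    intro i _; exact hr i, fun z y' hzy => ?_⟩
  obtain ⟨x, hxt, hzW⟩ := Set.mem_iUnion₂.1 (ht (Set.mem_univ z))
  have hz1 : dist z x < δ / 2 := by simpa [Metric.mem_ball, dist_comm] using hzW.1
  have hz2 : dist (π x) (π z) < r x := by
    have := hzW.2
    simpa [Metric.mem_ball, dist_comm] using this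
  have hεle : t.inf' htne r ≤ r x := Finset.inf'_le r hxt
  have : dist (π x) y' < 2 * r x := by
    calc dist (π x) y' ≤ dist (π x) (π z) + dist (π z) y' := dist_triangle _ _ _
      _ < r x + r x := by
          have := hzy.trans_le hεle
          linarith
      _ = 2 * r x := by ring
  obtain ⟨x', hx'π, hx'd⟩ := hkey x y' this
  refine ⟨x', hx'π, ?_⟩
  calc dist z x' ≤ dist z x + dist x x' := dist_triangle _ _ _
    _ < δ / 2 + δ / 2 := add_lt_add hz1 hx'd
    _ = δ := by ring

/-- Uniform equicontinuity of a finite set of continuous self-maps of a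
compact metric space (here: the maps `x ↦ s • x`). -/
lemma aux_unif {G X : Type*} [Group G] [MetricSpace X] [CompactSpace X] [MulAction G X]
    (hcontX : ∀ g : G, Continuous fun x : X => g • x) (S : Finset G) {η : ℝ} (hη : 0 < η) :
    ∃ δ > 0, ∀ s ∈ S, ∀ a b : X, dist a b < δ → dist (s • a) (s • b) < η := by
  classical
  have huc : ∀ s : G, ∃ δ > 0, ∀ a b : X, dist a b < δ → dist (s • a) (s • b) < η := by
    intro s
    have : UniformContinuous fun x : X => s • x :=
      CompactSpace.uniformContinuous_of_continuous (hcontX s)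
    obtain ⟨δ, hδ, H⟩ := Metric.uniformContinuous_iff.mp this η hη
    exact ⟨δ, hδ, fun a b hab => H hab⟩
  choose d hd hds using huc
  rcases S.eq_empty_or_nonempty with hS | hS
  · exact ⟨1, one_pos, by simp [hS]⟩
  refine ⟨S.inf' hS d, (Finset.lt_inf'_iff _).2 fun s _ => hd s, fun s hs a b hab => ?_⟩
  exact hds s a b (hab.trans_le (Finset.inf'_le d hs))

/-- Let `G` be a finitely generated group and `π : (X,G) → (Y,G)` a
factor map between continuous actions on compact metric spaces. If `π` is a
finite-fold covering map and the action on `X` is expansive, then the action on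
`Y` is expansive. -/
theorem stmt_4 {G X Y : Type*} [Group G] [MetricSpace X] [CompactSpace X]
    [MetricSpace Y] [CompactSpace Y] [MulAction G X] [MulAction G Y]
    (hfg : Group.FG G)
    (hcontX : ∀ g : G, Continuous fun x : X => g • x)
    (hcontY : ∀ g : G, Continuous fun y : Y => g • y)
    (π : X → Y) (hπcont : Continuous π) (hπsurj : Function.Surjective π)
    (hπequiv : ∀ (g : G) (x : X), π (g • x) = g • π x)
    (hπcov : IsCoveringMap π)
    (hfin : ∃ N : ℕ, ∀ y : Y, (π ⁻¹' {y}).Finite ∧ (π ⁻¹' {y}).ncard ≤ N)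
    (hexpansiveX : ∃ c > 0, ∀ x x' : X, x ≠ x' → ∃ g : G, c < dist (g • x) (g • x')) :
    ∃ c > 0, ∀ y y' : Y, y ≠ y' → ∃ g : G, c < dist (g • y) (g • y') := by
  classical
  obtain ⟨c, hc, hexp⟩ := hexpansiveX
  have hloc : IsLocalHomeomorph π := hπcov.isLocalHomeomorph
  obtain ⟨δ₀, hδ₀, hsep⟩ := aux_fiber_sep hloc
  obtain ⟨S, hSgen, hSfin⟩ := Group.fg_iff.mp hfg
  obtain ⟨δ₁, hδ₁, hunif⟩ := aux_unif hcontX hSfin.toFinset (by positivity : (0:ℝ) < δ₀ / 3)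
  set δ' : ℝ := min δ₁ (min (δ₀ / 3) c) with hδ'def
  have hδ'pos : 0 < δ' := lt_min hδ₁ (lt_min (by positivity) hc)
  have hδ'le1 : δ' ≤ δ₁ := min_le_left _ _
  have hδ'le2 : δ' ≤ δ₀ / 3 := (min_le_right _ _).trans (min_le_left _ _)
  have hδ'le3 : δ' ≤ c := (min_le_right _ _).trans (min_le_right _ _)
  obtain ⟨ε, hε, hlift⟩ := aux_lift hloc hδ'pos
  refine ⟨ε / 2, by positivity, fun y y' hne => ?_⟩
  by_contra hcon
  push_neg at hcon
  obtain ⟨x, hx⟩ := hπsurj y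
  -- choose lifts of the orbit of y'
  have hex : ∀ g : G, ∃ x', π x' = g • y' ∧ dist (g • x) x' < δ' := by
    intro g
    apply hlift (g • x) (g • y')
    have : π (g • x) = g • y := by rw [hπequiv, hx]
    rw [this]
    exact (hcon g).trans_lt (by linarith)
  choose f hfπ hfd using hex
  -- key step: compatibility along generators
  have key : ∀ s ∈ S, ∀ g : G, f (s * g) = s • f g := by
    intro s hs g
    by_contra hnef
    have hfiber : π (f (s * g)) = π (s • f g) := by
      rw [hfπ, hπequiv, hfπ, mul_smul]
    have hd1 : dist ((s * g) • x) (f (s * g)) < δ' := hfd (s * g)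
    have hd2 : dist (s • (g • x)) (s • f g) < δ₀ / 3 :=
      hunif s (hSfin.mem_toFinset.2 hs) _ _ ((hfd g).trans_le hδ'le1)
    have hmul : s • (g • x) = (s * g) • x := (mul_smul s g x).symm
    rw [hmul] at hd2
    have : dist (f (s * g)) (s • f g) < δ₀ := by
      calc dist (f (s * g)) (s • f g)
          ≤ dist (f (s * g)) ((s * g) • x) + dist ((s * g) • x) (s • f g) :=
            dist_triangle _ _ _
        _ < δ' + δ₀ / 3 := add_lt_add (by rw [dist_comm]; exact hd1) hd2
        _ ≤ δ₀ / 3 + δ₀ / 3 := by linarith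
        _ < δ₀ := by linarith
    exact absurd (hsep _ _ hfiber hnef) (not_le.2 this)
  -- propagate to all of G by closure induction
  have hall : ∀ g h : G, f (g * h) = g • f h := by
    intro g
    have hg : g ∈ Subgroup.closure S := by rw [hSgen]; trivial
    refine Subgroup.closure_induction (p := fun g _ => ∀ h : G, f (g * h) = g • f h)
      (fun s hs => key s hs) ?_ ?_ ?_ hg
    · intro h; rw [one_mul, one_smul]
    · intro a b _ _ ha hb h
      rw [mul_assoc, ha, hb, mul_smul]
    · intro a _ ha h
      have := ha (a⁻¹ * h)
      rw [mul_inv_cancel_left] at this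
      rw [this, inv_smul_smul]
  -- derive the contradiction with expansiveness on X
  set x' : X := f 1 with hx'def
  have hπx' : π x' = y' := by rw [hx'def, hfπ 1, one_smul]
  have hxx' : x ≠ x' := by
    intro hcontra
    exact hne (by rw [← hx, ← hπx', hcontra])
  obtain ⟨g, hg⟩ := hexp x x' hxx'
  have : g • x' = f g := by rw [hx'def, ← hall g 1, mul_one]
  rw [this] at hg
  exact absurd ((hfd g).trans_le hδ'le3) (not_lt.2 hg.le)
end

section
/- Let G be a finitely generated group and π : (X,G) → (Y,G) an equicontinuous extension between minimal distal systems on compact metric spaces. If the action of G on X is expansive, then the action of G on Y is expansive. -/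
open Metric Filter

/-- A `δ`-separated subset of a compact metric space is finite. -/
private lemma sep_finite {X : Type*} [MetricSpace X] [CompactSpace X] {s : Set X} {δ : ℝ}
    (hδ : 0 < δ) (hsep : ∀ x ∈ s, ∀ y ∈ s, x ≠ y → δ ≤ dist x y) : s.Finite := by
  obtain ⟨t, htf, hcov⟩ := Metric.totallyBounded_iff.mp
    (isCompact_univ (X := X)).totallyBounded (δ/2) (by linarith)
  have hch : ∀ x : X, ∃ c ∈ t, x ∈ ball c (δ/2) := by
    intro x
    have hx := hcov (Set.mem_univ x)
    simpa using hx
  choose c hc hc2 using hch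
  have hinj : Set.InjOn c s := by
    intro a ha b hb hab
    by_contra hne
    have h1 : dist a b ≤ dist a (c a) + dist (c b) b := by
      rw [hab]; exact (dist_triangle a (c b) b).trans (by rw [dist_comm (c b) b])
    have h2 : dist a (c a) < δ/2 := mem_ball.mp (hc2 a)
    have h3 : dist (c b) b < δ/2 := by rw [dist_comm]; exact mem_ball.mp (hc2 b)
    have := hsep a ha b hb hne
    linarith
  exact Set.Finite.of_finite_image (htf.subset (by rintro _ ⟨x, hx, rfl⟩; exact hc x)) hinj

/-- Enumerate a finite set by `Fin s.ncard`. -/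
private lemma exists_enum {α : Type*} {s : Set α} (hs : s.Finite) :
    ∃ f : Fin s.ncard → α, Function.Injective f ∧ Set.range f = s := by
  have : Finite s := hs
  have e : s ≃ Fin (Nat.card s) := Finite.equivFin s
  have hcard : Nat.card s = s.ncard := Nat.card_coe_set_eq s
  refine ⟨fun i => (e.symm (Fin.cast hcard.symm i) : α), ?_, ?_⟩
  · intro i j hij
    have := e.symm.injective (Subtype.ext hij)
    simpa [Fin.ext_iff] using congrArg Fin.val this
  · ext x
    constructor
    · rintro ⟨i, rfl⟩; exact (e.symm _).2
    · intro hx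
      exact ⟨Fin.cast hcard (e ⟨x, hx⟩), by simp; exact congrArg Subtype.val (e.symm_apply_apply _)⟩

/-- Simultaneous convergent subsequence for tuples in a compact metric space. -/
private lemma tuple_subseq {X : Type*} [MetricSpace X] [CompactSpace X] {k : ℕ}
    (u : ℕ → Fin k → X) :
    ∃ (v : Fin k → X) (φ : ℕ → ℕ), StrictMono φ ∧
      ∀ i, Filter.Tendsto (fun m => u (φ m) i) Filter.atTop (nhds (v i)) := by
  obtain ⟨v, φ, hφ, hconv⟩ := SeqCompactSpace.tendsto_subseq u
  exact ⟨v, φ, hφ, fun i => (continuous_apply i).continuousAt.tendsto.comp hconv⟩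

private lemma one_div_succ_le {m n : ℕ} (h : m ≤ n) : (1:ℝ)/(n+1) ≤ 1/(m+1) := by
  apply one_div_le_one_div_of_le <;> [positivity; exact_mod_cast by omega]

private lemma one_div_succ_pos (m : ℕ) : (0:ℝ) < 1/(m+1) := by positivity



/-- Let `G` be a finitely generated group and `π : (X,G) → (Y,G)` an
equicontinuous extension between minimal distal systems on compact metric spaces.
If the action on `X` is expansive, then so is the action on `Y`. -/
theorem stmt_5 {G X Y : Type*} [Group G] [MetricSpace X] [CompactSpace X]
    [MetricSpace Y] [CompactSpace Y] [MulAction G X] [MulAction G Y]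
    (hfg : Group.FG G)
    (hcontX : ∀ g : G, Continuous fun x : X => g • x)
    (hcontY : ∀ g : G, Continuous fun y : Y => g • y)
    (hminX : ∀ x : X, Dense (MulAction.orbit G x : Set X))
    (hminY : ∀ y : Y, Dense (MulAction.orbit G y : Set Y))
    (hdistalX : ∀ x x' : X, x ≠ x' → 0 < ⨅ g : G, dist (g • x) (g • x'))
    (hdistalY : ∀ y y' : Y, y ≠ y' → 0 < ⨅ g : G, dist (g • y) (g • y'))
    (π : X → Y) (hπcont : Continuous π) (hπsurj : Function.Surjective π)
    (hπequiv : ∀ (g : G) (x : X), π (g • x) = g • π x)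
    (hequi : ∀ ε > 0, ∃ δ > 0, ∀ x x' : X, π x = π x' → dist x x' < δ →
      ∀ g : G, dist (g • x) (g • x') < ε)
    (hexpansiveX : ∃ c > 0, ∀ x x' : X, x ≠ x' → ∃ g : G, c < dist (g • x) (g • x')) :
    ∃ c > 0, ∀ y y' : Y, y ≠ y' → ∃ g : G, c < dist (g • y) (g • y') := by
  classical
  obtain ⟨c, hc, hexp⟩ := hexpansiveX
  obtain ⟨δ, hδ, hδprop⟩ := hequi c hc
  -- Step 1: points in a common fiber are δ-separated.
  have hsepa : ∀ x x' : X, π x = π x' → dist x x' < δ → x = x' := by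
    intro x x' h hd
    by_contra hne
    obtain ⟨g, hg⟩ := hexp x x' hne
    exact absurd (hδprop x x' h hd g) (not_lt.mpr hg.le)
  have hsep' : ∀ x x' : X, π x = π x' → x ≠ x' → δ ≤ dist x x' :=
    fun x x' h hne => le_of_not_gt (fun hd => hne (hsepa x x' h hd))
  -- Step 2: fibers are finite.
  have hfibfin : ∀ y : Y, (π ⁻¹' {y}).Finite := by
    intro y
    apply sep_finite hδ
    intro a ha b hb hne
    exact hsep' a b (by simp only [Set.mem_preimage, Set.mem_singleton_iff] at ha hb; rw [ha, hb]) hne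
  -- Step 3: fiber cardinality is constant (uses minimality of Y).
  have hconst : ∀ y y' : Y, (π ⁻¹' {y}).ncard ≤ (π ⁻¹' {y'}).ncard := by
    intro y y'
    obtain ⟨f, hfinj, hfrange⟩ := exists_enum (hfibfin y)
    have hfmem : ∀ i, π (f i) = y := by
      intro i
      have : f i ∈ π ⁻¹' {y} := hfrange ▸ Set.mem_range_self i
      simpa using this
    -- approximate y' by orbit points of y
    have happrox : ∀ m : ℕ, ∃ g : G, dist (g • y) y' < 1/(m+1) := by
      intro m
      have hy' : y' ∈ closure (MulAction.orbit G y) := hminY y y'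
      obtain ⟨b, hb, hd⟩ := Metric.mem_closure_iff.mp hy' (1/(m+1)) (one_div_succ_pos m)
      obtain ⟨g, rfl⟩ := hb
      exact ⟨g, by rwa [dist_comm]⟩
    choose gs hgs using happrox
    set u : ℕ → Fin (π ⁻¹' {y}).ncard → X := fun m i => gs m • f i with hu
    obtain ⟨v, φ, hφ, hconv⟩ := tuple_subseq u
    have hulim : Tendsto (fun m => gs (φ m) • y) atTop (nhds y') := by
      rw [tendsto_iff_dist_tendsto_zero]
      apply squeeze_zero (fun m => dist_nonneg)
        (fun m => (hgs (φ m)).le.trans (one_div_succ_le (hφ.le_apply)))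
      exact tendsto_one_div_add_atTop_nhds_zero_nat
    have hπu : ∀ (m : ℕ) (i : Fin (π ⁻¹' {y}).ncard), π (u m i) = gs m • y := by
      intro m i
      show π (gs m • f i) = gs m • y
      rw [hπequiv, hfmem]
    have hπv : ∀ i, π (v i) = y' := by
      intro i
      have h1 : Tendsto (fun m => π (u (φ m) i)) atTop (nhds (π (v i))) :=
        (hπcont.tendsto _).comp (hconv i)
      have h2 : (fun m => π (u (φ m) i)) = fun m => gs (φ m) • y := by
        funext m; exact hπu (φ m) i
      rw [h2] at h1
      exact tendsto_nhds_unique h1 hulim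
    have hvsep : ∀ i j : Fin (π ⁻¹' {y}).ncard, i ≠ j → δ ≤ dist (v i) (v j) := by
      intro i j hij
      have hdist : ∀ m, δ ≤ dist (u m i) (u m j) := by
        intro m
        apply hsep'
        · rw [hπu m i, hπu m j]
        · exact fun h => hij (hfinj (smul_left_cancel (gs m) h))
      have : Tendsto (fun m => dist (u (φ m) i) (u (φ m) j)) atTop
          (nhds (dist (v i) (v j))) := (hconv i).dist (hconv j)
      exact le_of_tendsto_of_tendsto' tendsto_const_nhds this (fun m => hdist (φ m))
    have hvinj : Function.Injective v := by
      intro i j hij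
      by_contra hne
      have := hvsep i j hne
      rw [hij, dist_self] at this
      linarith
    have hvsub : Set.range v ⊆ π ⁻¹' {y'} := by
      rintro _ ⟨i, rfl⟩
      simp [hπv i]
    have hkv : (Set.range v).ncard = (π ⁻¹' {y}).ncard := by
      rw [← Nat.card_coe_set_eq, Nat.card_range_of_injective hvinj,
        Nat.card_eq_fintype_card, Fintype.card_fin]
    calc (π ⁻¹' {y}).ncard = (Set.range v).ncard := hkv.symm
      _ ≤ (π ⁻¹' {y'}).ncard := Set.ncard_le_ncard hvsub (hfibfin y')
  -- Step 4: the lifting lemma.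
  have hlift : ∀ γ : ℝ, 0 < γ → ∃ η > 0, ∀ (y y' : Y) (x : X), dist y y' < η → π x = y →
      ∃ x', π x' = y' ∧ dist x x' < γ := by
    intro γ hγ
    by_contra hno
    push_neg at hno
    have hseq : ∀ m : ℕ, ∃ (y y' : Y) (x : X), dist y y' < 1/(m+1) ∧ π x = y ∧
        ∀ x', π x' = y' → γ ≤ dist x x' := fun m => hno (1/(m+1)) (one_div_succ_pos m)
    choose ys ys' xs hd hπx hfar using hseq
    obtain ⟨x, φ, hφ, hxconv⟩ := CompactSpace.tendsto_subseq xs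
    set k := (π ⁻¹' {π x}).ncard with hk
    -- an enumeration of each fiber by `Fin k`
    have henum : ∀ y' : Y, ∃ f : Fin k → X, Function.Injective f ∧ Set.range f = π ⁻¹' {y'} := by
      intro y'
      have hcc : (π ⁻¹' {y'}).ncard = k := le_antisymm (hconst y' (π x)) (hconst (π x) y')
      obtain ⟨f, hfinj, hfrange⟩ := exists_enum (hfibfin y')
      refine ⟨fun i => f (Fin.cast hcc.symm i), ?_, ?_⟩
      · intro i j hij
        have h2 := hfinj hij
        simpa [Fin.ext_iff] using congrArg Fin.val h2
      · ext z
        simp only [Set.mem_range]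
        constructor
        · rintro ⟨i, rfl⟩
          have hm : f (Fin.cast hcc.symm i) ∈ Set.range f := Set.mem_range_self _
          rw [hfrange] at hm
          exact hm
        · intro hz
          rw [← hfrange] at hz
          obtain ⟨j, rfl⟩ := hz
          exact ⟨Fin.cast hcc j, congrArg f (Fin.ext (by simp))⟩
    choose fe hfeinj hferange using henum
    set u : ℕ → Fin k → X := fun m i => fe (ys' (φ m)) i with hu
    obtain ⟨v, ψ, hψ, hconv⟩ := tuple_subseq u
    have hπu : ∀ m i, π (u m i) = ys' (φ m) := by
      intro m i
      have : u m i ∈ π ⁻¹' {ys' (φ m)} := (hferange (ys' (φ m))) ▸ Set.mem_range_self i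
      simpa using this
    -- limits
    have hxconv2 : Tendsto (fun m => xs (φ (ψ m))) atTop (nhds x) :=
      hxconv.comp (hψ.tendsto_atTop)
    have hyslim : Tendsto (fun m => ys' (φ m)) atTop (nhds (π x)) := by
      rw [tendsto_iff_dist_tendsto_zero]
      have hb : ∀ m, dist (ys' (φ m)) (π x) ≤ 1/(m+1) + dist (π (xs (φ m))) (π x) := by
        intro m
        have h1 : dist (ys' (φ m)) (π (xs (φ m))) ≤ 1/(m+1) := by
          rw [hπx, dist_comm]
          exact (hd (φ m)).le.trans (one_div_succ_le hφ.le_apply)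
        calc dist (ys' (φ m)) (π x)
            ≤ dist (ys' (φ m)) (π (xs (φ m))) + dist (π (xs (φ m))) (π x) := dist_triangle _ _ _
          _ ≤ 1/(m+1) + dist (π (xs (φ m))) (π x) := add_le_add_left h1 _
      have hlim0 : Tendsto (fun m => 1/(m+1) + dist (π (xs (φ m))) (π x)) atTop (nhds 0) := by
        have h1 : Tendsto (fun m : ℕ => (1:ℝ)/(m+1)) atTop (nhds 0) :=
          tendsto_one_div_add_atTop_nhds_zero_nat
        have h2 : Tendsto (fun m => dist (π (xs (φ m))) (π x)) atTop (nhds 0) := by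
          rw [← tendsto_iff_dist_tendsto_zero]
          exact (hπcont.tendsto x).comp (hxconv)
        simpa using h1.add h2
      exact squeeze_zero (fun m => dist_nonneg) hb hlim0
    have hyslim2 : Tendsto (fun m => ys' (φ (ψ m))) atTop (nhds (π x)) :=
      hyslim.comp (hψ.tendsto_atTop)
    have hπv : ∀ i, π (v i) = π x := by
      intro i
      have h1 : Tendsto (fun m => π (u (ψ m) i)) atTop (nhds (π (v i))) :=
        (hπcont.tendsto _).comp (hconv i)
      have h2 : (fun m => π (u (ψ m) i)) = fun m => ys' (φ (ψ m)) := by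
        funext m; exact hπu (ψ m) i
      rw [h2] at h1
      exact tendsto_nhds_unique h1 hyslim2
    have hvsep : ∀ i j : Fin k, i ≠ j → δ ≤ dist (v i) (v j) := by
      intro i j hij
      have hdist : ∀ m, δ ≤ dist (u m i) (u m j) := by
        intro m
        apply hsep'
        · rw [hπu, hπu]
        · exact fun h => hij (hfeinj (ys' (φ m)) h)
      have : Tendsto (fun m => dist (u (ψ m) i) (u (ψ m) j)) atTop
          (nhds (dist (v i) (v j))) := (hconv i).dist (hconv j)
      exact le_of_tendsto_of_tendsto' tendsto_const_nhds this (fun m => hdist (ψ m))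
    have hvinj : Function.Injective v := by
      intro i j hij
      by_contra hne
      have := hvsep i j hne
      rw [hij, dist_self] at this
      linarith
    have hvrange : Set.range v = π ⁻¹' {π x} := by
      apply Set.eq_of_subset_of_ncard_le
      · rintro _ ⟨i, rfl⟩; simp [hπv i]
      · rw [← Nat.card_coe_set_eq (Set.range v), Nat.card_range_of_injective hvinj,
          Nat.card_eq_fintype_card, Fintype.card_fin]
      · exact hfibfin (π x)
    have hxmem : x ∈ Set.range v := by rw [hvrange]; simp
    obtain ⟨i, hi⟩ := hxmem
    -- contradiction : γ ≤ dist (xs (φ (ψ m))) (u (ψ m) i) → γ ≤ 0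
    have hfar2 : ∀ m, γ ≤ dist (xs (φ (ψ m))) (u (ψ m) i) := by
      intro m
      exact hfar (φ (ψ m)) (u (ψ m) i) (hπu (ψ m) i)
    have hlim : Tendsto (fun m => dist (xs (φ (ψ m))) (u (ψ m) i)) atTop
        (nhds (dist x (v i))) := hxconv2.dist (hconv i)
    have : γ ≤ dist x (v i) :=
      le_of_tendsto_of_tendsto' tendsto_const_nhds hlim hfar2
    rw [hi, dist_self] at this
    linarith
  -- Step 5: uniform continuity over a finite set of group elements.
  have hUC : ∀ (T : Finset G) (α : ℝ), 0 < α → ∃ β > 0, ∀ s ∈ T, ∀ a b : X,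
      dist a b < β → dist (s • a) (s • b) < α := by
    intro T α hα
    induction T using Finset.induction_on with
    | empty => exact ⟨1, one_pos, by simp⟩
    | @insert s T hsT ih =>
      obtain ⟨β₀, hβ₀, hprop₀⟩ := ih
      have huc : UniformContinuous (fun x : X => s • x) :=
        CompactSpace.uniformContinuous_of_continuous (hcontX s)
      obtain ⟨β₁, hβ₁, hprop₁⟩ := Metric.uniformContinuous_iff.mp huc α hα
      refine ⟨min β₀ β₁, lt_min hβ₀ hβ₁, ?_⟩
      intro t ht a b hab
      rcases Finset.mem_insert.mp ht with rfl | htT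
      · exact hprop₁ (hab.trans_le (min_le_right _ _))
      · exact hprop₀ t htT a b (hab.trans_le (min_le_left _ _))
  -- Step 6: finite generating set.
  obtain ⟨S, hS⟩ : ∃ S : Finset G, Submonoid.closure (↑S : Set G) = ⊤ := by
    have h1 := hfg.out
    have h2 := (Subgroup.fg_iff_submonoid_fg ⊤).mp h1
    rw [Subgroup.top_toSubmonoid] at h2
    exact h2
  obtain ⟨β, hβ, hβprop⟩ := hUC S (δ/4) (by linarith)
  set γ := min (min β (δ/4)) c with hγdef
  have hγ : 0 < γ := lt_min (lt_min hβ (by linarith)) hc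
  have hγβ : γ ≤ β := (min_le_left _ _).trans (min_le_left _ _)
  have hγδ : γ ≤ δ/4 := (min_le_left _ _).trans (min_le_right _ _)
  have hγc : γ ≤ c := min_le_right _ _
  obtain ⟨η, hη, hliftγ⟩ := hlift γ hγ
  refine ⟨η/2, by positivity, ?_⟩
  intro y y' hyy'
  by_contra hcon
  push_neg at hcon
  obtain ⟨x, hx⟩ := hπsurj y
  have hdyy' : dist y y' < η := by
    have := hcon 1
    rw [one_smul, one_smul] at this
    linarith
  obtain ⟨x', hπx', hxx'⟩ := hliftγ y y' x hdyy' hx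
  -- the chain argument
  have key : ∀ l : List G, (∀ z ∈ l, z ∈ (S : Set G)) →
      dist (l.prod • x) (l.prod • x') < γ := by
    intro l
    induction l with
    | nil => intro _; simpa using hxx'
    | cons s t ih =>
      intro hmem
      have hT := ih (fun z hz => hmem z (List.mem_cons_of_mem _ hz))
      have hsS : s ∈ S := hmem s List.mem_cons_self
      rw [List.prod_cons]
      set h := t.prod with hh
      have h1 : dist ((s * h) • x) ((s * h) • x') < δ/4 := by
        rw [mul_smul, mul_smul]
        exact hβprop s hsS _ _ (hT.trans_le hγβ)
      have h2 : dist ((s * h) • y) ((s * h) • y') < η := by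
        have := hcon (s * h)
        linarith
      obtain ⟨z, hπz, hz⟩ := hliftγ ((s * h) • y) ((s * h) • y') ((s * h) • x) h2
        (by rw [hπequiv, hx])
      have hsame : π z = π ((s * h) • x') := by rw [hπz, hπequiv, hπx']
      have hzx' : dist z ((s * h) • x') < δ := by
        calc dist z ((s * h) • x') ≤ dist z ((s * h) • x) + dist ((s * h) • x) ((s * h) • x') :=
              dist_triangle _ _ _
          _ < γ + δ/4 := by rw [dist_comm z]; exact add_lt_add hz h1
          _ ≤ δ/4 + δ/4 := by linarith
          _ < δ := by linarith
      have hzz : z = (s * h) • x' := hsepa z ((s * h) • x') hsame hzx'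
      rw [← hzz]
      exact hz
  have keyg : ∀ g : G, dist (g • x) (g • x') < γ := by
    intro g
    have hg : g ∈ Submonoid.closure (↑S : Set G) := by rw [hS]; trivial
    obtain ⟨l, hl, rfl⟩ := Submonoid.exists_list_of_mem_closure hg
    exact key l hl
  have hxne : x ≠ x' := by
    intro h
    apply hyy'
    rw [← hx, ← hπx', h]
  obtain ⟨g, hgc⟩ := hexp x x' hxne
  have := keyg g
  linarith
end

section
/- Let η be a countable limit ordinal, and for each ordinal α < η let (X_α, G) be a continuous action of a group G on a nonempty compact metric space X_α. Suppose that for all β < α < η there are factor maps π_{α,β} : X_α → X_β satisfying π_{α,γ} = π_{β,γ} ∘ π_{α,β} for all γ < β < α, and that no π_{α,β} is injective. Let X = { (x_α)_{α<η} ∈ ∏_{α<η} X_α : π_{α,β}(x_α) = x_β for all β < α < η } carry the subspace topology of the product topology and the diagonal G-action g·(x_α) = (g·x_α). Then for every metric d on X compatible with its topology, the action of G on (X,d) is not expansive. -/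
set_option maxHeartbeats 1000000

private noncomputable def ordSeq (η : Ordinal.{0}) (hη : Order.IsSuccLimit η)
    (e : ℕ → {α : Ordinal.{0} // α < η}) : ℕ → {α : Ordinal.{0} // α < η}
  | 0 => e 0
  | n + 1 => ⟨Order.succ (max (ordSeq η hη e n).1 (e (n + 1)).1),
      hη.succ_lt (max_lt (ordSeq η hη e n).2 (e (n + 1)).2)⟩

private lemma ordSeq_step (η : Ordinal.{0}) (hη : Order.IsSuccLimit η)
    (e : ℕ → {α : Ordinal.{0} // α < η}) (n : ℕ) :
    (ordSeq η hη e n).1 < (ordSeq η hη e (n + 1)).1 :=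
  lt_of_le_of_lt (le_max_left _ _) (Order.lt_succ _)

private lemma le_ordSeq (η : Ordinal.{0}) (hη : Order.IsSuccLimit η)
    (e : ℕ → {α : Ordinal.{0} // α < η}) (n : ℕ) :
    (e n).1 ≤ (ordSeq η hη e n).1 := by
  cases n with
  | zero => exact le_rfl
  | succ n => exact le_trans (le_max_right _ _) (Order.le_succ _)

private lemma exists_ext {η : Ordinal.{0}}
    {Xs : {α : Ordinal.{0} // α < η} → Type}
    (f : ∀ a b : {α : Ordinal.{0} // α < η}, b.1 < a.1 → Xs a → Xs b)
    (hfsurj : ∀ a b h, Function.Surjective (f a b h))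
    (hfcomp : ∀ (a b c) (hab : b.1 < a.1) (hbc : c.1 < b.1) (x : Xs a),
      f b c hbc (f a b hab x) = f a c (hbc.trans hab) x)
    (o : ℕ → {α : Ordinal.{0} // α < η})
    (hostep : ∀ n, (o n).1 < (o (n + 1)).1)
    (hcof : ∀ b : {α : Ordinal.{0} // α < η}, ∃ N, b.1 ≤ (o N).1)
    (p : Xs (o 0)) :
    ∃ x : {x : ∀ a, Xs a // ∀ (a b) (h : b.1 < a.1), f a b h (x a) = x b},
      x.1 (o 0) = p := by
  have ho : StrictMono fun n => (o n).1 := strictMono_nat_of_lt_succ hostep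
  let z : ∀ m : ℕ, Xs (o m) := fun m =>
    Nat.rec (motive := fun m => Xs (o m)) p
      (fun m zm => Function.surjInv (hfsurj (o (m + 1)) (o m) (hostep m)) zm) m
  have hz : ∀ m (h : (o m).1 < (o (m + 1)).1),
      f (o (m + 1)) (o m) h (z (m + 1)) = z m :=
    fun m h => Function.surjInv_eq _ _
  have chain : ∀ k m (h : (o m).1 < (o (m + k + 1)).1),
      f (o (m + k + 1)) (o m) h (z (m + k + 1)) = z m := by
    intro k
    induction k with
    | zero => intro m h; exact hz m h
    | succ k ih =>
      intro m h
      have h1 : (o m).1 < (o (m + k + 1)).1 := ho (by omega)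
      have h2 : (o (m + k + 1)).1 < (o (m + k + 1 + 1)).1 := hostep _
      have e1 := hfcomp (o (m + k + 1 + 1)) (o (m + k + 1)) (o m) h2 h1 (z (m + k + 1 + 1))
      rw [hz (m + k + 1) h2] at e1
      show f (o (m + k + 1 + 1)) (o m) h (z (m + k + 1 + 1)) = z m
      rw [← e1]
      exact ih m h1
  have chain' : ∀ M M', M < M' → ∀ h, f (o M') (o M) h (z M') = z M := by
    intro M M' hMM' h
    obtain ⟨k, rfl⟩ := Nat.exists_eq_add_of_lt hMM'
    exact chain k M h
  have welldef : ∀ (b : {α : Ordinal.{0} // α < η}) N N' (_ : N ≤ N')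
      (h : b.1 < (o (N + 1)).1) (h' : b.1 < (o (N' + 1)).1),
      f (o (N' + 1)) b h' (z (N' + 1)) = f (o (N + 1)) b h (z (N + 1)) := by
    intro b N N' hN h h'
    rcases eq_or_lt_of_le hN with rfl | hlt
    · rfl
    · have hoo : (o (N + 1)).1 < (o (N' + 1)).1 := ho (by omega)
      have e1 := hfcomp (o (N' + 1)) (o (N + 1)) b hoo h (z (N' + 1))
      rw [chain' (N + 1) (N' + 1) (by omega) hoo] at e1
      exact e1.symm
  have hlt : ∀ b : {α : Ordinal.{0} // α < η},
      b.1 < (o (Classical.choose (hcof b) + 1)).1 :=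
    fun b => lt_of_le_of_lt (Classical.choose_spec (hcof b)) (hostep _)
  refine ⟨⟨fun b => f (o (Classical.choose (hcof b) + 1)) b (hlt b)
      (z (Classical.choose (hcof b) + 1)), ?_⟩, ?_⟩
  · intro a b h
    have hKa : a.1 < (o (max (Classical.choose (hcof a)) (Classical.choose (hcof b)) + 1)).1 :=
      lt_of_lt_of_le (hlt a) (ho.monotone (by omega))
    have hKb : b.1 < (o (max (Classical.choose (hcof a)) (Classical.choose (hcof b)) + 1)).1 :=
      lt_of_lt_of_le (hlt b) (ho.monotone (by omega))
    beta_reduce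
    rw [← welldef a (Classical.choose (hcof a)) _ (le_max_left _ _) (hlt a) hKa,
        ← welldef b (Classical.choose (hcof b)) _ (le_max_right _ _) (hlt b) hKb]
    exact hfcomp _ a b hKa h _
  · exact chain' 0 _ (Nat.succ_pos _) (hlt (o 0))

/-- A strict projective limit of nonempty compact metric `G`-systems
indexed by a countable limit ordinal (with non-injective connecting factor maps)
is never expansive, for any metric compatible with its (subspace of the product)
topology. -/
theorem stmt_6 {G : Type} [Group G] (η : Ordinal.{0}) (hη : Order.IsSuccLimit η)
    (hcount : η.card ≤ Cardinal.aleph0)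
    (Xs : {α : Ordinal.{0} // α < η} → Type)
    [∀ a, MetricSpace (Xs a)] [∀ a, CompactSpace (Xs a)] [∀ a, Nonempty (Xs a)]
    [∀ a, MulAction G (Xs a)]
    (hcont : ∀ (a) (g : G), Continuous fun x : Xs a => g • x)
    (f : ∀ a b : {α : Ordinal.{0} // α < η}, b.1 < a.1 → Xs a → Xs b)
    (hfcont : ∀ a b h, Continuous (f a b h))
    (hfsurj : ∀ a b h, Function.Surjective (f a b h))
    (hfequiv : ∀ a b h (g : G) (x : Xs a), f a b h (g • x) = g • f a b h x)
    (hfcomp : ∀ (a b c) (hab : b.1 < a.1) (hbc : c.1 < b.1) (x : Xs a),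
      f b c hbc (f a b hab x) = f a c (hbc.trans hab) x)
    (hnoninj : ∀ a b h, ¬ Function.Injective (f a b h)) :
    ∀ d : {x : ∀ a, Xs a // ∀ (a b) (h : b.1 < a.1), f a b h (x a) = x b} →
          {x : ∀ a, Xs a // ∀ (a b) (h : b.1 < a.1), f a b h (x a) = x b} → ℝ,
      (∀ x, d x x = 0) → (∀ x y, x ≠ y → 0 < d x y) → (∀ x y, d x y = d y x) →
      (∀ x y z, d x z ≤ d x y + d y z) →
      (∀ x s, s ∈ nhds x ↔ ∃ ε > 0, Set.Subset {y | d x y < ε} s) →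
      ¬ ∃ c > 0,
        ∀ x y : {x : ∀ a, Xs a // ∀ (a b) (h : b.1 < a.1), f a b h (x a) = x b},
          x ≠ y → ∃ g : G,
            c < d ⟨fun a => g • x.1 a, fun a b h =>
                    show f a b h (g • x.1 a) = g • x.1 b by rw [hfequiv, x.2 a b h]⟩
                  ⟨fun a => g • y.1 a, fun a b h =>
                    show f a b h (g • y.1 a) = g • y.1 b by rw [hfequiv, y.2 a b h]⟩ := by
  intro d hd0 hdpos hdsymm hdtri hdnhds
  rintro ⟨c, hcpos, hexp⟩
  haveI hne' : Nonempty {α : Ordinal.{0} // α < η} := ⟨⟨0, hη.pos⟩⟩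
  haveI hcnt : Countable {α : Ordinal.{0} // α < η} := by
    rw [← Cardinal.mk_le_aleph0_iff]
    calc (Cardinal.mk {α : Ordinal.{0} // α < η})
        = Cardinal.lift.{1} η.card := Ordinal.mk_Iio_ordinal η
      _ ≤ Cardinal.lift.{1} Cardinal.aleph0 := Cardinal.lift_le.mpr hcount
      _ = Cardinal.aleph0 := Cardinal.lift_aleph0
  obtain ⟨e, he⟩ := exists_surjective_nat {α : Ordinal.{0} // α < η}
  let o : ℕ → {α : Ordinal.{0} // α < η} := ordSeq η hη e
  have hostep : ∀ n, (o n).1 < (o (n + 1)).1 := ordSeq_step η hη e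
  have ho : StrictMono fun n => (o n).1 := strictMono_nat_of_lt_succ hostep
  have hcof : ∀ b : {α : Ordinal.{0} // α < η}, ∃ N, b.1 ≤ (o N).1 := by
    intro b
    obtain ⟨N, rfl⟩ := he b
    exact ⟨N, le_ordSeq η hη e N⟩
  -- pairs agreeing up to o n
  have hpairs : ∀ n : ℕ,
      ∃ x y : {x : ∀ a, Xs a // ∀ (a b) (h : b.1 < a.1), f a b h (x a) = x b}, x ≠ y ∧
      ∀ b : {α : Ordinal.{0} // α < η}, b.1 ≤ (o n).1 → x.1 b = y.1 b := by
    intro n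
    obtain ⟨p, q, hpq, hpqne⟩ :=
      Function.not_injective_iff.mp (hnoninj (o (n + 1)) (o n) (hostep n))
    have hostep' : ∀ m, (o (n + 1 + m)).1 < (o (n + 1 + (m + 1))).1 :=
      fun m => hostep (n + 1 + m)
    have hcof' : ∀ b : {α : Ordinal.{0} // α < η}, ∃ N, b.1 ≤ (o (n + 1 + N)).1 := by
      intro b
      obtain ⟨N, hN⟩ := hcof b
      exact ⟨N, hN.trans (ho.monotone (by omega))⟩
    obtain ⟨x, hx⟩ := exists_ext f hfsurj hfcomp (fun m => o (n + 1 + m)) hostep' hcof' p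
    obtain ⟨y, hy⟩ := exists_ext f hfsurj hfcomp (fun m => o (n + 1 + m)) hostep' hcof' q
    have hx' : x.1 (o (n + 1)) = p := hx
    have hy' : y.1 (o (n + 1)) = q := hy
    have hxon : x.1 (o n) = y.1 (o n) := by
      rw [← x.2 (o (n + 1)) (o n) (hostep n), ← y.2 (o (n + 1)) (o n) (hostep n),
        hx', hy', hpq]
    refine ⟨x, y, ?_, ?_⟩
    · intro hxy
      apply hpqne
      rw [← hx', ← hy', hxy]
    · intro b hb
      rcases eq_or_lt_of_le hb with heq | hlt
      · have hbo : b = o n := Subtype.ext heq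
        rw [hbo, hxon]
      · rw [← x.2 (o n) b hlt, ← y.2 (o n) b hlt, hxon]
  choose xs ys hne hagree using hpairs
  choose g hgd using fun n => hexp (xs n) (ys n) (hne n)
  let u : ℕ → {x : ∀ a, Xs a // ∀ (a b) (h : b.1 < a.1), f a b h (x a) = x b} :=
    fun n => ⟨fun a => g n • (xs n).1 a, fun a b h =>
      show f a b h (g n • (xs n).1 a) = g n • (xs n).1 b by
        rw [hfequiv, (xs n).2 a b h]⟩
  let v : ℕ → {x : ∀ a, Xs a // ∀ (a b) (h : b.1 < a.1), f a b h (x a) = x b} :=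
    fun n => ⟨fun a => g n • (ys n).1 a, fun a b h =>
      show f a b h (g n • (ys n).1 a) = g n • (ys n).1 b by
        rw [hfequiv, (ys n).2 a b h]⟩
  have hd : ∀ n, c < d (u n) (v n) := fun n => hgd n
  have hu_agree : ∀ (n : ℕ) (b : {α : Ordinal.{0} // α < η}),
      b.1 ≤ (o n).1 → (u n).1 b = (v n).1 b := by
    intro n b hb
    show g n • (xs n).1 b = g n • (ys n).1 b
    rw [hagree n b hb]
  -- compactness
  have hclosed : IsClosed {x : ∀ a, Xs a |
      ∀ (a b) (h : b.1 < a.1), f a b h (x a) = x b} := by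
    have hset : {x : ∀ a, Xs a | ∀ (a b) (h : b.1 < a.1), f a b h (x a) = x b} =
        ⋂ (a) (b) (h : b.1 < a.1), {x : ∀ a, Xs a | f a b h (x a) = x b} := by
      ext x; simp only [Set.mem_setOf_eq, Set.mem_iInter]
    rw [hset]
    exact isClosed_iInter fun a => isClosed_iInter fun b => isClosed_iInter fun h =>
      isClosed_eq ((hfcont a b h).comp (continuous_apply a)) (continuous_apply b)
  haveI : CompactSpace {x : ∀ a, Xs a // ∀ (a b) (h : b.1 < a.1), f a b h (x a) = x b} := by
    exact isCompact_iff_compactSpace.mp hclosed.isCompact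
  let w : ℕ → ({x : ∀ a, Xs a // ∀ (a b) (h : b.1 < a.1), f a b h (x a) = x b} ×
      {x : ∀ a, Xs a // ∀ (a b) (h : b.1 < a.1), f a b h (x a) = x b}) :=
    fun n => (u n, v n)
  obtain ⟨pq, hpq⟩ := exists_clusterPt_of_compactSpace (Filter.map w Filter.atTop)
  have hmem : ∀ s, IsClosed s → (∀ᶠ n in Filter.atTop, w n ∈ s) → pq ∈ s := by
    intro s hs hev
    have h1 : s ∈ Filter.map w Filter.atTop := hev
    have h2 := hpq.mono (Filter.le_principal_iff.mpr h1)
    rwa [← mem_closure_iff_clusterPt, hs.closure_eq] at h2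
  have hcoord : ∀ b, pq.1.1 b = pq.2.1 b := by
    intro b
    have c1 : Continuous (fun r : ({x : ∀ a, Xs a // ∀ (a b) (h : b.1 < a.1), f a b h (x a) = x b} ×
        {x : ∀ a, Xs a // ∀ (a b) (h : b.1 < a.1), f a b h (x a) = x b}) => r.1.1 b) := by
      exact (continuous_apply b).comp (continuous_subtype_val.comp continuous_fst)
    have c2 : Continuous (fun r : ({x : ∀ a, Xs a // ∀ (a b) (h : b.1 < a.1), f a b h (x a) = x b} ×
        {x : ∀ a, Xs a // ∀ (a b) (h : b.1 < a.1), f a b h (x a) = x b}) => r.2.1 b) := by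
      exact (continuous_apply b).comp (continuous_subtype_val.comp continuous_snd)
    have hsb := isClosed_eq c1 c2
    obtain ⟨N, hN⟩ := hcof b
    refine hmem _ hsb (Filter.eventually_atTop.mpr ⟨N, fun n hn => ?_⟩)
    exact hu_agree n b (hN.trans (ho.monotone hn))
  have hE : IsClosed {r : ({x : ∀ a, Xs a // ∀ (a b) (h : b.1 < a.1), f a b h (x a) = x b} ×
      {x : ∀ a, Xs a // ∀ (a b) (h : b.1 < a.1), f a b h (x a) = x b}) | c ≤ d r.1 r.2} := by
    rw [← isOpen_compl_iff, isOpen_iff_mem_nhds]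
    rintro ⟨x, y⟩ hxy
    simp only [Set.mem_compl_iff, Set.mem_setOf_eq, not_le] at hxy
    rw [mem_nhds_prod_iff]
    refine ⟨{z | d x z < (c - d x y) / 2}, ?_, {z | d y z < (c - d x y) / 2}, ?_, ?_⟩
    · rw [hdnhds]
      exact ⟨(c - d x y) / 2, by linarith, fun z hz => hz⟩
    · rw [hdnhds]
      exact ⟨(c - d x y) / 2, by linarith, fun z hz => hz⟩
    · rintro ⟨z, z'⟩ ⟨hz, hz'⟩
      simp only [Set.mem_compl_iff, Set.mem_setOf_eq, not_le]
      have t1 : d z z' ≤ d z x + d x z' := hdtri z x z'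
      have t2 : d x z' ≤ d x y + d y z' := hdtri x y z'
      have t3 : d z x = d x z := hdsymm z x
      simp only [Set.mem_setOf_eq] at hz hz'
      linarith
  have hcd : c ≤ d pq.1 pq.2 :=
    hmem _ hE (Filter.Eventually.of_forall fun n => (hd n).le)
  have hpq12 : pq.1 = pq.2 := Subtype.ext (funext hcoord)
  rw [hpq12, hd0] at hcd
  linarith
end

section
/- Let G be a finitely generated group, A a finite discrete set, and X a closed subset of A^G (with the product topology) that is invariant under the shift action of G defined by (g·x)(h) = x(g⁻¹h). If every G-orbit in X is finite, then X is a finite set. -/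
open Filter Topology
open scoped Classical

namespace Stmt8

variable {G A : Type*} [Group G]


def shift (g : G) (x : G → A) : G → A := fun h => x (g⁻¹ * h)

lemma shift_one (x : G → A) : shift (1:G) x = x := by
  funext h; simp [shift]

lemma shift_shift (a b : G) (x : G → A) : shift a (shift b x) = shift (a*b) x := by
  funext h; simp [shift, mul_assoc]

def stab (x : G → A) : Subgroup G where
  carrier := {g | shift g x = x}
  one_mem' := shift_one x
  mul_mem' := by
    intro a b ha hb
    have : shift (a*b) x = shift a (shift b x) := (shift_shift a b x).symm
    simp only [Set.mem_setOf_eq] at *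
    rw [this, hb, ha]
  inv_mem' := by
    intro a ha
    simp only [Set.mem_setOf_eq] at *
    have := congrArg (shift a⁻¹) ha
    rw [shift_shift, inv_mul_cancel, shift_one] at this
    exact this.symm

lemma mem_stab_iff {x : G → A} {g : G} : g ∈ stab x ↔ shift g x = x := Iff.rfl

lemma mk_eq_of_shift_eq {x : G → A} {a b : G} (h : shift a x = shift b x) :
    (a : G ⧸ stab x) = b := by
  rw [QuotientGroup.eq]
  show shift (a⁻¹ * b) x = x
  calc shift (a⁻¹ * b) x = shift a⁻¹ (shift b x) := (shift_shift _ _ _).symm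
    _ = shift a⁻¹ (shift a x) := by rw [h]
    _ = shift (a⁻¹ * a) x := shift_shift _ _ _
    _ = x := by rw [inv_mul_cancel, shift_one]

/-- orbit -/
def orb (x : G → A) : Set (G → A) := {y | ∃ g : G, y = shift g x}

lemma finite_quotient_stab (x : G → A) (hx : (orb x).Finite) : Finite (G ⧸ stab x) := by
  haveI : Finite (orb x) := hx.to_subtype
  refine Finite.of_injective
    (fun q : G ⧸ stab x => (⟨shift q.out x, q.out, rfl⟩ : orb x)) ?_
  intro q q' hqq'
  have h : shift q.out x = shift q'.out x := congrArg Subtype.val hqq'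
  have := mk_eq_of_shift_eq h
  rwa [QuotientGroup.out_eq', QuotientGroup.out_eq'] at this

lemma finite_quotient_inf {H K : Subgroup G} (hH : Finite (G ⧸ H)) (hK : Finite (G ⧸ K)) :
    Finite (G ⧸ (H ⊓ K)) := by
  refine Finite.of_injective
    (fun q : G ⧸ (H ⊓ K) => ((q.out : G ⧸ H), (q.out : G ⧸ K))) ?_
  intro q q' h
  have h1 : (q.out : G ⧸ H) = q'.out := congrArg Prod.fst h
  have h2 : (q.out : G ⧸ K) = q'.out := congrArg Prod.snd h
  have : (q.out : G ⧸ (H ⊓ K)) = q'.out := by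
    rw [QuotientGroup.eq] at h1 h2 ⊢
    exact ⟨h1, h2⟩
  rwa [QuotientGroup.out_eq', QuotientGroup.out_eq'] at this





def IsWordLen (S : Finset G) (g : G) (n : ℕ) : Prop :=
  ∃ l : List G, (∀ a ∈ l, a ∈ S ∨ a⁻¹ ∈ S) ∧ l.length ≤ n ∧ l.prod = g

lemma isWordLen_mono {S : Finset G} {g : G} {m n : ℕ} (h : m ≤ n) (hw : IsWordLen S g m) :
    IsWordLen S g n := by
  obtain ⟨l, h1, h2, h3⟩ := hw
  exact ⟨l, h1, h2.trans h, h3⟩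

lemma exists_isWordLen (S : Finset G) (hS : Subgroup.closure (S : Set G) = ⊤) (g : G) :
    ∃ n, IsWordLen S g n := by
  have hg : g ∈ Subgroup.closure (S : Set G) := hS ▸ Subgroup.mem_top g
  induction hg using Subgroup.closure_induction with
  | mem a ha => exact ⟨1, [a], by simpa using Or.inl ha, by simp, by simp⟩
  | one => exact ⟨0, [], by simp, by simp, by simp⟩
  | mul a b _ _ iha ihb =>
    obtain ⟨m, l, hl1, hl2, hl3⟩ := iha
    obtain ⟨n, l', hl1', hl2', hl3'⟩ := ihb
    refine ⟨m + n, l ++ l', ?_, ?_, ?_⟩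
    · intro a ha
      rcases List.mem_append.mp ha with h | h
      · exact hl1 a h
      · exact hl1' a h
    · simpa using Nat.add_le_add hl2 hl2'
    · simp [hl3, hl3']
  | inv a _ ih =>
    obtain ⟨m, l, hl1, hl2, hl3⟩ := ih
    refine ⟨m, (l.map (·⁻¹)).reverse, ?_, ?_, ?_⟩
    · intro a ha
      simp only [List.mem_reverse, List.mem_map] at ha
      obtain ⟨b, hb, rfl⟩ := ha
      rcases hl1 b hb with h | h
      · exact Or.inr (by simpa using h)
      · exact Or.inl h
    · simpa using hl2
    · rw [← hl3, ← List.prod_inv_reverse]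

variable (S : Finset G) (hS : Subgroup.closure (S : Set G) = ⊤)

noncomputable def len (g : G) : ℕ := Nat.find (exists_isWordLen S hS g)

lemma len_spec (g : G) : IsWordLen S g (len S hS g) := Nat.find_spec (exists_isWordLen S hS g)

lemma len_le {g : G} {n : ℕ} (h : IsWordLen S g n) : len S hS g ≤ n :=
  Nat.find_le h

lemma len_one : len S hS (1 : G) = 0 :=
  Nat.le_zero.mp (len_le S hS ⟨[], by simp, by simp, by simp⟩)

lemma eq_one_of_len_eq_zero {g : G} (h : len S hS g = 0) : g = 1 := by
  obtain ⟨l, h1, h2, h3⟩ := len_spec S hS g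
  rw [h] at h2
  rw [List.length_eq_zero_iff.mp (Nat.le_zero.mp h2)] at h3
  simpa using h3.symm

lemma len_mul (g u : G) : len S hS (g * u) ≤ len S hS g + len S hS u := by
  obtain ⟨l, h1, h2, h3⟩ := len_spec S hS g
  obtain ⟨l', h1', h2', h3'⟩ := len_spec S hS u
  refine len_le S hS ⟨l ++ l', ?_, ?_, ?_⟩
  · intro a ha
    rcases List.mem_append.mp ha with h | h
    · exact h1 a h
    · exact h1' a h
  · simpa using Nat.add_le_add h2 h2'
  · simp [h3, h3']

lemma len_single {a : G} (h : a ∈ S ∨ a⁻¹ ∈ S) : len S hS a ≤ 1 :=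
  len_le S hS ⟨[a], by simpa using h, by simp, by simp⟩

lemma len_descent {g : G} (hg : g ≠ 1) :
    ∃ s : G, (s ∈ S ∨ s⁻¹ ∈ S) ∧ len S hS (g * s) + 1 = len S hS g := by
  obtain ⟨l, h1, h2, h3⟩ := len_spec S hS g
  have hl : l ≠ [] := by rintro rfl; exact hg (by simpa using h3.symm)
  set a := l.getLast hl with ha
  have hla : l.dropLast ++ [a] = l := List.dropLast_append_getLast hl
  have hamem : a ∈ l := List.getLast_mem hl
  refine ⟨a⁻¹, ?_, ?_⟩
  · rcases h1 a hamem with h | h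
    · exact Or.inr (by simpa using h)
    · exact Or.inl h
  · have hprod : l.dropLast.prod * a = g := by
      rw [← h3, ← hla]; simp
    have hgs : g * a⁻¹ = l.dropLast.prod := by
      rw [← hprod]; group
    have hlen1 : len S hS (g * a⁻¹) ≤ l.dropLast.length := by
      refine len_le S hS ⟨l.dropLast, ?_, le_rfl, hgs.symm⟩
      intro b hb
      exact h1 b (List.mem_of_mem_dropLast hb)
    have hlenl : l.dropLast.length + 1 = l.length := by
      rw [← hla]; simp
    have hup : len S hS g ≤ len S hS (g * a⁻¹) + 1 := by
      have : g = (g * a⁻¹) * a := by group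
      calc len S hS g = len S hS ((g * a⁻¹) * a) := by rw [← this]
        _ ≤ len S hS (g * a⁻¹) + len S hS a := len_mul S hS _ _
        _ ≤ len S hS (g * a⁻¹) + 1 := by
            have := len_single S hS (h1 a hamem)
            omega
    have hdown : len S hS (g * a⁻¹) + 1 ≤ len S hS g := by
      have : l.length ≤ len S hS g := h2
      omega
    omega




lemma isWordLen_finite (S : Finset G) : ∀ n : ℕ, {g : G | IsWordLen S g n}.Finite := by
  intro n
  induction n with
  | zero =>
    refine Set.Finite.subset (Set.finite_singleton 1) ?_
    rintro g ⟨l, h1, h2, h3⟩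
    rw [List.length_eq_zero_iff.mp (Nat.le_zero.mp h2)] at h3
    simpa using h3.symm
  | succ n ih =>
    have hE : ((S : Set G) ∪ (Inv.inv '' (S : Set G))).Finite :=
      S.finite_toSet.union (S.finite_toSet.image _)
    refine Set.Finite.subset
      ((hE.biUnion (fun a _ => ih.image (· * a))).union ih) ?_
    rintro g ⟨l, h1, h2, h3⟩
    rcases eq_or_ne l [] with rfl | hl
    · exact Or.inr ⟨[], by simp, by simp, h3⟩
    · set a := l.getLast hl
      have hla : l.dropLast ++ [a] = l := List.dropLast_append_getLast hl
      have hamem : a ∈ l := List.getLast_mem hl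
      left
      have hA : a ∈ (S : Set G) ∪ (Inv.inv '' (S : Set G)) := by
        rcases h1 a hamem with h | h
        · exact Or.inl h
        · exact Or.inr ⟨a⁻¹, h, by simp⟩
      refine Set.mem_biUnion hA ⟨l.dropLast.prod, ⟨l.dropLast, ?_, ?_, rfl⟩, ?_⟩
      · intro b hb; exact h1 b (List.mem_of_mem_dropLast hb)
      · have : l.dropLast.length + 1 = l.length := by rw [← hla]; simp
        omega
      · rw [← h3, ← hla]; simp

lemma ball_finite (S : Finset G) (hS : Subgroup.closure (S : Set G) = ⊤) (n : ℕ) :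
    {g : G | len S hS g ≤ n}.Finite := by
  refine Set.Finite.subset (isWordLen_finite S n) ?_
  intro g hg
  exact isWordLen_mono hg (len_spec S hS g)



/-- ultrafilter pigeonhole -/
lemma ultra_pigeonhole {ι β : Type*} (𝒰 : Ultrafilter ι) {p : ι → Prop}
    (hp : {k | p k} ∈ 𝒰) (f : ι → β) {E : Set β} (hE : E.Finite)
    (hf : ∀ k, p k → f k ∈ E) : ∃ e ∈ E, {k | p k ∧ f k = e} ∈ 𝒰 := by
  by_contra hcon
  push_neg at hcon
  have hcompl : ∀ e ∈ E, {k | ¬(p k ∧ f k = e)} ∈ 𝒰 := by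
    intro e he
    have := hcon e he
    rwa [← Ultrafilter.compl_mem_iff_notMem] at this
  have hint : (⋂ e ∈ E, {k | ¬(p k ∧ f k = e)}) ∈ 𝒰 :=
    (Filter.biInter_mem hE).mpr hcompl
  have hne : ({k | p k} ∩ ⋂ e ∈ E, {k | ¬(p k ∧ f k = e)}).Nonempty :=
    Ultrafilter.nonempty_of_mem (Filter.inter_mem hp hint)
  obtain ⟨k, hk1, hk2⟩ := hne
  simp only [Set.mem_iInter, Set.mem_setOf_eq] at hk2
  exact hk2 (f k) (hf k hk1) ⟨hk1, rfl⟩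

lemma countable_of_fg (hfg : Group.FG G) : Countable G := by
  obtain ⟨S, hS⟩ : ∃ S : Finset G, Subgroup.closure (S : Set G) = ⊤ := hfg.out
  set e : (↥(S : Set G) × Bool) → G := fun p => cond p.2 (p.1 : G) (p.1 : G)⁻¹ with he
  set f : List (↥(S : Set G) × Bool) → G := fun l => (l.map e).prod with hf
  have haux : ∀ l, f ((l.map (fun p => (p.1, !p.2))).reverse) = (f l)⁻¹ := by
    intro l
    induction l with
    | nil => simp [hf]
    | cons p l ih =>
      have h1 : f ((l.map (fun p => (p.1, !p.2))).reverse ++ [(p.1, !p.2)])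
          = f ((l.map (fun p => (p.1, !p.2))).reverse) * e (p.1, !p.2) := by
        simp [hf]
      have he2 : e (p.1, !p.2) = (e p)⁻¹ := by
        rcases p with ⟨a, b⟩
        cases b <;> simp [he]
      simp only [List.map_cons, List.reverse_cons, h1, ih, he2]
      simp [hf, mul_comm]
  have hsurj : Function.Surjective f := by
    intro g
    have hg : g ∈ Subgroup.closure (S : Set G) := hS ▸ Subgroup.mem_top g
    induction hg using Subgroup.closure_induction with
    | mem a ha => exact ⟨[(⟨a, ha⟩, true)], by simp [hf, he]⟩
    | one => exact ⟨[], by simp [hf]⟩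
    | mul a b _ _ iha ihb =>
      obtain ⟨l, rfl⟩ := iha
      obtain ⟨l', rfl⟩ := ihb
      exact ⟨l ++ l', by simp [hf]⟩
    | inv a _ ih =>
      obtain ⟨l, rfl⟩ := ih
      exact ⟨(l.map (fun p => (p.1, !p.2))).reverse, haux l⟩
  exact hsurj.countable


lemma fix_finite [Finite A] {H : Subgroup G} (hQ : Finite (G ⧸ H)) {T : Set G}
    (hT : Subgroup.closure T = H) :
    {x : G → A | ∀ t ∈ T, shift t x = x}.Finite := by
  rw [← Set.finite_coe_iff]
  refine Finite.of_injective
    (fun x : {x : G → A | ∀ t ∈ T, shift t x = x} =>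
      (fun q : G ⧸ H => x.1 (Quotient.out q)⁻¹)) ?_
  intro x y hxy
  have hinvx : ∀ h ∈ H, shift h x.1 = x.1 := by
    intro h hh
    have : Subgroup.closure T ≤ stab x.1 := (Subgroup.closure_le _).mpr (fun t ht => x.2 t ht)
    exact (hT ▸ this) hh
  have hinvy : ∀ h ∈ H, shift h y.1 = y.1 := by
    intro h hh
    have : Subgroup.closure T ≤ stab y.1 := (Subgroup.closure_le _).mpr (fun t ht => y.2 t ht)
    exact (hT ▸ this) hh
  apply Subtype.ext
  funext u
  set q : G ⧸ H := ((u⁻¹ : G) : G ⧸ H) with hq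
  have hout : ((Quotient.out q : G) : G ⧸ H) = q := QuotientGroup.out_eq' q
  have hmem : (Quotient.out q)⁻¹ * u⁻¹ ∈ H := by
    rw [hq] at hout
    exact (QuotientGroup.eq).mp hout
  set h := (Quotient.out q)⁻¹ * u⁻¹ with hh
  have hu : h⁻¹ * (Quotient.out q)⁻¹ = u := by
    rw [hh]; group
  have hx : x.1 u = x.1 (Quotient.out q)⁻¹ := by
    conv_lhs => rw [← hu]
    have := congrFun (hinvx h hmem) (Quotient.out q)⁻¹
    exact this
  have hy : y.1 u = y.1 (Quotient.out q)⁻¹ := by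
    conv_lhs => rw [← hu]
    exact congrFun (hinvy h hmem) (Quotient.out q)⁻¹
  rw [hx, hy]
  exact congrFun hxy q


end Stmt8

open Stmt8 Filter Topology

/-- Let `G` be a finitely generated group, `A` a finite discrete set,
and `X ⊆ A^G` a closed subset invariant under the shift action
`(g • x) h = x (g⁻¹ * h)`. If every `G`-orbit in `X` is finite, then `X` is finite. -/
theorem stmt_8 {G A : Type*} [Group G] [Finite A]
    [TopologicalSpace A] [DiscreteTopology A]
    (hfg : Group.FG G)
    (X : Set (G → A)) (hclosed : IsClosed X)
    (hinv : ∀ (g : G), ∀ x ∈ X, (fun h => x (g⁻¹ * h)) ∈ X)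
    (horb : ∀ x ∈ X, {y : G → A | ∃ g : G, y = fun h => x (g⁻¹ * h)}.Finite) :
    X.Finite := by
  by_contra hXfin
  haveI : Countable G := countable_of_fg hfg
  have hXcomp : IsCompact X := hclosed.isCompact
  -- orbit finiteness in terms of `orb`
  have horb' : ∀ x ∈ X, (orb x).Finite := by
    intro x hx
    exact horb x hx
  have hinv' : ∀ (g : G), ∀ x ∈ X, shift g x ∈ X := by
    intro g x hx
    exact hinv g x hx
  -- find a non-isolated point
  have hy : ∃ y ∈ X, y ∈ closure (X \ {y}) := by
    by_contra hno
    push_neg at hno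
    apply hXfin
    have hU : ∀ y ∈ X, ∃ U : Set (G → A), IsOpen U ∧ y ∈ U ∧ U ∩ X ⊆ {y} := by
      intro y hyX
      refine ⟨(closure (X \ {y}))ᶜ, isClosed_closure.isOpen_compl, hno y hyX, ?_⟩
      rintro z ⟨hz1, hz2⟩
      by_contra hzy
      exact hz1 (subset_closure ⟨hz2, hzy⟩)
    choose! U hUopen hUmem hUsub using hU
    obtain ⟨F, hFsub, hFfin, hFcover⟩ :=
      hXcomp.elim_finite_subcover_image hUopen
        (fun z hz => Set.mem_biUnion hz (hUmem z hz))
    refine hFfin.subset ?_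
    intro z hz
    obtain ⟨yy, hyyF, hzU⟩ := Set.mem_iUnion₂.mp (hFcover hz)
    have : z ∈ U yy ∩ X := ⟨hzU, hz⟩
    have hzyy : z = yy := hUsub yy (hFsub hyyF) this
    rwa [hzyy]
  obtain ⟨y, hyX, hyacc⟩ := hy
  obtain ⟨x, hxmem, hxconv⟩ := mem_closure_iff_seq_limit.mp hyacc
  have hxX : ∀ k, x k ∈ X := fun k => (hxmem k).1
  have hxne : ∀ k, x k ≠ y := fun k hEq => (hxmem k).2 (by simp [hEq])
  -- pointwise eventual agreement
  have hpt : ∀ gp : G, ∀ᶠ k in atTop, x k gp = y gp := by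
    intro gp
    have ht : Tendsto (fun k => x k gp) atTop (𝓝 (y gp)) :=
      ((continuous_apply gp).tendsto y).comp hxconv
    have hsing : {y gp} ∈ 𝓝 (y gp) := (isOpen_discrete _).mem_nhds rfl
    filter_upwards [ht hsing] with k hk
    exact hk
  -- stabilizer of y
  set H : Subgroup G := stab y with hHdef
  haveI hQH : Finite (G ⧸ H) := finite_quotient_stab y (horb' y hyX)
  haveI : H.FiniteIndex := H.finiteIndex_of_finite_quotient
  haveI : Group.FG G := hfg
  have hHfg : H.FG := (Group.fg_iff_subgroup_fg H).mp H.fg_of_index_ne_zero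
  obtain ⟨T, hT⟩ := hHfg
  have hTsub : (T : Set G) ⊆ (H : Set G) := hT ▸ Subgroup.subset_closure
  -- generating set and length function
  obtain ⟨S, hS⟩ : ∃ S : Finset G, Subgroup.closure (S : Set G) = ⊤ := hfg.out
  set L : G → ℕ := len S hS with hLdef
  set c : ℕ := T.sup (fun t => L t⁻¹) with hcdef
  have hc : ∀ t ∈ T, L t⁻¹ ≤ c := fun t ht => Finset.le_sup (f := fun t => L t⁻¹) ht
  -- the finite set of T-fixed configurations
  set FixT : Set (G → A) := {x0 : G → A | ∀ t ∈ (T : Set G), shift t x0 = x0} with hFixdef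
  have hyFix : y ∈ FixT := by
    intro t ht
    exact hTsub ht
  have hFixFin : FixT.Finite := fix_finite hQH hT
  -- ultrafilter
  set 𝒰 : Ultrafilter ℕ := Ultrafilter.of atTop with h𝒰def
  have h𝒰 : (𝒰 : Filter ℕ) ≤ atTop := Ultrafilter.of_le atTop
  have hptU : ∀ gp : G, {k | x k gp = y gp} ∈ 𝒰 := fun gp => h𝒰 (hpt gp)
  -- eventually the x k are not T-fixed
  have h1 : {k | x k ∉ FixT} ∈ 𝒰 := by
    by_contra hcon
    rw [← Ultrafilter.compl_mem_iff_notMem] at hcon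
    have hcon' : {k | x k ∈ FixT} ∈ 𝒰 := by
      convert hcon using 1
      ext k
      simp
    obtain ⟨x', hx'Fix, hW⟩ := ultra_pigeonhole 𝒰 hcon' x hFixFin (fun k hk => hk)
    have hx'y : x' = y := by
      funext gp
      obtain ⟨k, hk1, hk2⟩ := Ultrafilter.nonempty_of_mem (Filter.inter_mem hW (hptU gp))
      rw [← hk1.2, hk2]
    obtain ⟨k, hk⟩ := Ultrafilter.nonempty_of_mem hW
    exact hxne k (hk.2.trans hx'y)
  -- ball agreement
  have hball : ∀ n : ℕ, {k | ∀ g' : G, L g' ≤ n → x k g' = y g'} ∈ 𝒰 := by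
    intro n
    apply h𝒰
    have hfin : {g' : G | L g' ≤ n}.Finite := ball_finite S hS n
    have := (eventually_all_finite hfin).mpr (fun g' _ => hpt g')
    filter_upwards [this] with k hk
    intro g' hg'
    exact hk g' hg'
  -- choose minimal breaks
  have hdata : ∀ k, ∃ tg : G × G, x k ∉ FixT →
      tg.1 ∈ T ∧ x k (tg.1⁻¹ * tg.2) ≠ x k tg.2 ∧
        ∀ t' ∈ T, ∀ g' : G, L g' < L tg.2 → x k (t'⁻¹ * g') = x k g' := by
    intro k
    by_cases hk : x k ∈ FixT
    · exact ⟨(1, 1), fun h => absurd hk h⟩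
    · have hbreak : ∃ t0 ∈ T, ∃ g0 : G, x k (t0⁻¹ * g0) ≠ x k g0 := by
        by_contra hcon
        push_neg at hcon
        apply hk
        intro t ht
        funext u
        exact hcon t ht u
      obtain ⟨t0, ht0, g0, hg0⟩ := hbreak
      have hexists : ∃ n : ℕ, ∃ t1 ∈ T, ∃ g1 : G, L g1 ≤ n ∧ x k (t1⁻¹ * g1) ≠ x k g1 :=
        ⟨L g0, t0, ht0, g0, le_rfl, hg0⟩
      set n0 := Nat.find hexists with hn0
      obtain ⟨t1, ht1, g1, hg1le, hg1ne⟩ := Nat.find_spec hexists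
      refine ⟨(t1, g1), fun _ => ⟨ht1, hg1ne, ?_⟩⟩
      intro t' ht' g' hg'
      by_contra hne
      have : ∃ t1 ∈ T, ∃ g1 : G, L g1 ≤ L g' ∧ x k (t1⁻¹ * g1) ≠ x k g1 :=
        ⟨t', ht', g', le_rfl, hne⟩
      have hlt : L g' < n0 := lt_of_lt_of_le hg' hg1le
      exact Nat.find_min hexists hlt this
  choose tg htg using hdata
  set tk : ℕ → G := fun k => (tg k).1 with htkdef
  set gk : ℕ → G := fun k => (tg k).2 with hgkdef
  -- breaks go to infinity
  have h3 : ∀ n : ℕ, {k | n < L (gk k)} ∈ 𝒰 := by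
    intro n
    have hmem : {k | x k ∉ FixT} ∩ {k | ∀ g' : G, L g' ≤ n + c → x k g' = y g'} ∈ 𝒰 :=
      Filter.inter_mem h1 (hball (n + c))
    refine Filter.mem_of_superset hmem ?_
    rintro k ⟨hk1, hk2⟩
    obtain ⟨htkT, hbrk, _⟩ := htg k hk1
    simp only [Set.mem_setOf_eq]
    by_contra hle
    push_neg at hle
    have e1 : x k (gk k) = y (gk k) := hk2 _ (le_trans hle (Nat.le_add_right n c))
    have e2 : x k ((tk k)⁻¹ * gk k) = y ((tk k)⁻¹ * gk k) := by
      apply hk2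
      calc L ((tk k)⁻¹ * gk k) ≤ L (tk k)⁻¹ + L (gk k) := len_mul S hS _ _
        _ ≤ c + n := Nat.add_le_add (hc _ htkT) hle
        _ = n + c := Nat.add_comm c n
    have e3 : y ((tk k)⁻¹ * gk k) = y (gk k) := by
      have hstab : shift (tk k) y = y := hTsub htkT
      exact congrFun hstab (gk k)
    exact hbrk (e2.trans (e3.trans e1.symm))
  -- limits v and w
  set vfun : ℕ → (G → A) := fun k => shift (gk k)⁻¹ (x k) with hvfundef
  set wfun : ℕ → (G → A) := fun k => shift ((gk k)⁻¹ * tk k) (x k) with hwfundef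
  have hvfunX : ∀ k, vfun k ∈ X := fun k => hinv' _ _ (hxX k)
  have hwfunX : ∀ k, wfun k ∈ X := fun k => hinv' _ _ (hxX k)
  obtain ⟨v, hvX, hvle⟩ := hXcomp.ultrafilter_le_nhds (𝒰.map vfun)
    (by rw [Filter.le_principal_iff]
        exact Filter.mem_map.mpr (Filter.univ_mem' hvfunX))
  obtain ⟨w, hwX, hwle⟩ := hXcomp.ultrafilter_le_nhds (𝒰.map wfun)
    (by rw [Filter.le_principal_iff]
        exact Filter.mem_map.mpr (Filter.univ_mem' hwfunX))
  have hvpt : ∀ u : G, {k | vfun k u = v u} ∈ 𝒰 := by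
    intro u
    have ht : Tendsto (fun k => vfun k u) 𝒰 (𝓝 (v u)) :=
      ((continuous_apply u).tendsto v).comp hvle
    exact ht (show {b : A | b = v u} ∈ 𝓝 (v u) from (isOpen_discrete _).mem_nhds rfl)
  have hwpt : ∀ u : G, {k | wfun k u = w u} ∈ 𝒰 := by
    intro u
    have ht : Tendsto (fun k => wfun k u) 𝒰 (𝓝 (w u)) :=
      ((continuous_apply u).tendsto w).comp hwle
    exact ht (show {b : A | b = w u} ∈ 𝓝 (w u) from (isOpen_discrete _).mem_nhds rfl)
  -- finite index of the combined stabilizer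
  haveI hQv : Finite (G ⧸ stab v) := finite_quotient_stab v (horb' v hvX)
  haveI hQw : Finite (G ⧸ stab w) := finite_quotient_stab w (horb' w hwX)
  set M : Subgroup G := stab v ⊓ stab w with hMdef
  haveI hQM : Finite (G ⧸ M) := finite_quotient_inf hQv hQw
  obtain ⟨D, hD⟩ : ∃ D : ℕ, ∀ q : G ⧸ M, L (Quotient.out q) ≤ D := by
    obtain ⟨D, hD⟩ := (Set.finite_range (fun q : G ⧸ M => L (Quotient.out q))).bddAbove
    exact ⟨D, fun q => hD (Set.mem_range_self q)⟩
  -- the descending ray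
  have hray : ∀ n : ℕ, ∃ un : G, {k | L (gk k * un) + n = L (gk k)} ∈ 𝒰 := by
    intro n
    induction n with
    | zero =>
      refine ⟨1, Filter.univ_mem' ?_⟩
      intro k
      simp
    | succ n ih =>
      obtain ⟨un, hun⟩ := ih
      have hW : {k | L (gk k * un) + n = L (gk k)} ∩ {k | n < L (gk k)} ∈ 𝒰 :=
        Filter.inter_mem hun (h3 n)
      have hstep : ∀ k, ∃ s : G,
          k ∈ {k | L (gk k * un) + n = L (gk k)} ∩ {k | n < L (gk k)} →
          ((s ∈ S ∨ s⁻¹ ∈ S) ∧ L ((gk k * un) * s) + 1 = L (gk k * un)) := by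
        intro k
        by_cases hk : k ∈ {k | L (gk k * un) + n = L (gk k)} ∩ {k | n < L (gk k)}
        · obtain ⟨hk1, hk2⟩ := hk
          simp only [Set.mem_setOf_eq] at hk1 hk2
          have hne : gk k * un ≠ 1 := by
            intro hEq
            have : L (gk k * un) = 0 := by rw [hEq]; exact len_one S hS
            omega
          obtain ⟨s, hs1, hs2⟩ := len_descent S hS hne
          exact ⟨s, fun _ => ⟨hs1, hs2⟩⟩
        · exact ⟨1, fun h => absurd h hk⟩
      choose sfn hsfn using hstep
      have hEfin : ((S : Set G) ∪ (Inv.inv '' (S : Set G))).Finite :=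
        S.finite_toSet.union (S.finite_toSet.image _)
      obtain ⟨e, _, hVe⟩ := ultra_pigeonhole 𝒰 hW sfn hEfin
        (by
          intro k hk
          rcases (hsfn k hk).1 with h | h
          · exact Or.inl h
          · exact Or.inr ⟨(sfn k)⁻¹, h, by simp⟩)
      refine ⟨un * e, ?_⟩
      refine Filter.mem_of_superset hVe ?_
      rintro k ⟨hk, hke⟩
      obtain ⟨hk1, hk2⟩ := hk
      have := (hsfn k ⟨hk1, hk2⟩).2
      simp only [Set.mem_setOf_eq] at hk1 hk2
      rw [hke] at this
      have hassoc : gk k * (un * e) = (gk k * un) * e := (mul_assoc _ _ _).symm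
      simp only [Set.mem_setOf_eq, hassoc]
      omega
  obtain ⟨un, hun⟩ := hray (D + 1)
  -- the element m of M deep in the no-break region
  set r : G := Quotient.out ((un⁻¹ : G) : G ⧸ M) with hrdef
  have hrm : un * r ∈ M := by
    have hout : ((r : G) : G ⧸ M) = ((un⁻¹ : G) : G ⧸ M) := QuotientGroup.out_eq' _
    have : r⁻¹ * un⁻¹ ∈ M := (QuotientGroup.eq).mp hout
    have h2 : (un * r)⁻¹ ∈ M := by
      rw [mul_inv_rev]; exact this
    exact (inv_mem_iff).mp h2
  set m : G := un * r with hmdef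
  have hrD : L r ≤ D := hD _
  -- the grand intersection
  have hbig : {k | x k ∉ FixT} ∩ {k | L (gk k * un) + (D+1) = L (gk k)} ∩
      {k | vfun k 1 = v 1} ∩ {k | wfun k 1 = w 1} ∩
      {k | vfun k m = v m} ∩ {k | wfun k m = w m} ∈ 𝒰 :=
    Filter.inter_mem (Filter.inter_mem (Filter.inter_mem (Filter.inter_mem
      (Filter.inter_mem h1 hun) (hvpt 1)) (hwpt 1)) (hvpt m)) (hwpt m)
  obtain ⟨k, hk⟩ := Ultrafilter.nonempty_of_mem hbig
  obtain ⟨⟨⟨⟨⟨hkFix, hkray⟩, hkv1⟩, hkw1⟩, hkvm⟩, hkwm⟩ := hk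
  simp only [Set.mem_setOf_eq] at hkFix hkray hkv1 hkw1 hkvm hkwm
  obtain ⟨htkT, hbrk, hmin⟩ := htg k hkFix
  -- length bound for g_k * m
  have hlm : L (gk k * m) < L (gk k) := by
    have h1' : L (gk k * m) ≤ L (gk k * un) + L r := by
      have : gk k * m = (gk k * un) * r := by rw [hmdef, mul_assoc]
      rw [this]
      exact len_mul S hS _ _
    omega
  -- no break at position g_k * m
  have hnobrk : x k ((tk k)⁻¹ * (gk k * m)) = x k (gk k * m) := hmin _ htkT _ hlm
  -- translate into values of vfun/wfun
  have hv_eval : ∀ u : G, vfun k u = x k (gk k * u) := by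
    intro u
    show x k (((gk k)⁻¹)⁻¹ * u) = x k (gk k * u)
    rw [inv_inv]
  have hw_eval : ∀ u : G, wfun k u = x k ((tk k)⁻¹ * (gk k * u)) := by
    intro u
    show x k (((gk k)⁻¹ * tk k)⁻¹ * u) = x k ((tk k)⁻¹ * (gk k * u))
    rw [mul_inv_rev, inv_inv, mul_assoc]
  have hvm_wm : v m = w m := by
    rw [← hkvm, ← hkwm, hv_eval, hw_eval, hnobrk]
  have hv1 : v 1 = x k (gk k) := by
    rw [← hkv1, hv_eval, mul_one]
  have hw1 : w 1 = x k ((tk k)⁻¹ * gk k) := by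
    rw [← hkw1, hw_eval, mul_one]
  -- invariance of v and w under m
  have hvminv : v 1 = v m := by
    have hm : shift m v = v := (hrm.1 : shift m v = v)
    have := congrFun hm m
    show v 1 = v m
    calc v 1 = v (m⁻¹ * m) := by rw [inv_mul_cancel]
      _ = shift m v m := rfl
      _ = v m := congrFun hm m
  have hwminv : w 1 = w m := by
    have hm : shift m w = w := (hrm.2 : shift m w = w)
    calc w 1 = w (m⁻¹ * m) := by rw [inv_mul_cancel]
      _ = shift m w m := rfl
      _ = w m := congrFun hm m
  have : x k (gk k) = x k ((tk k)⁻¹ * gk k) := by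
    rw [← hv1, ← hw1, hvminv, hwminv, hvm_wm]
  exact hbrk this.symm
end

section
/- There exist an infinite compact metric space X and a countable group G that is not finitely generated, together with a continuous action of G on X that is pointwise periodic (every orbit is finite) and expansive. (Concretely, one may take X = A × ℤ/2ℤ where A = {0} ∪ {1/n : n ∈ ℕ, n ≥ 1} ⊆ ℝ with the Euclidean topology, and G the group of homeomorphisms of X generated by the maps σ_n (n ≥ 1), where σ_n(x,y) = (x, y+1) if x = 1/n and σ_n(x,y) = (x,y) otherwise.) -/
open Set Filter

namespace Stmt9

noncomputable section

def av (n : ℕ) : ℝ := 1 / (n + 1)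

lemma av_pos (n : ℕ) : 0 < av n := by unfold av; positivity

lemma av_inj : Function.Injective av := by
  intro n m h
  unfold av at h
  field_simp at h
  exact_mod_cast (by linarith [h] : (n:ℝ) = m)

lemma av_anti : StrictAnti av := by
  intro n m h
  unfold av
  apply one_div_lt_one_div_of_lt (by positivity)
  exact_mod_cast by omega

def Aset : Set ℝ := insert 0 (Set.range av)

def Sset : Set (ℝ × ℝ) := Aset ×ˢ ({0, 1} : Set ℝ)

lemma isCompact_Aset : IsCompact Aset :=
  tendsto_one_div_add_atTop_nhds_zero_nat.isCompact_insert_range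

lemma isCompact_Sset : IsCompact Sset :=
  isCompact_Aset.prod (Set.toFinite ({0,1} : Set ℝ)).isCompact

abbrev Xt : Type := ↥Sset

instance : CompactSpace Xt := isCompact_iff_compactSpace.mp isCompact_Sset

instance : Infinite Xt := by
  apply Infinite.of_injective (fun n : ℕ => (⟨(av n, 0), Or.inr ⟨n, rfl⟩, Or.inl rfl⟩ : Xt))
  intro n m h
  exact av_inj (congrArg (fun x : Xt => x.1.1) h)

/-- the "flip" applied `e` times on the second coordinate value. -/
def cf (e : ZMod 2) (b : ℝ) : ℝ := if e = 1 then 1 - b else b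

lemma cf_add (e f : ZMod 2) (b : ℝ) : cf (e + f) b = cf e (cf f b) := by
  rcases (by decide : ∀ e : ZMod 2, e = 0 ∨ e = 1) e with rfl | rfl <;>
    rcases (by decide : ∀ e : ZMod 2, e = 0 ∨ e = 1) f with rfl | rfl <;> simp +decide [cf]

lemma cf_mem {e : ZMod 2} {b : ℝ} (hb : b ∈ ({0, 1} : Set ℝ)) :
    cf e b ∈ ({0, 1} : Set ℝ) := by
  rcases hb with hb | hb <;> subst hb <;> rcases (by decide : ∀ e : ZMod 2, e = 0 ∨ e = 1) e with rfl | rfl <;> simp +decide [cf]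

open Classical in
/-- Evaluation of a finsupp at the index determined by a point of `A`. -/
def evalAt (a : ℝ) (g : ℕ →₀ ZMod 2) : ZMod 2 :=
  if h : ∃ n : ℕ, a = av n then g h.choose else 0

lemma evalAt_av (n : ℕ) (g : ℕ →₀ ZMod 2) : evalAt (av n) g = g n := by
  have h : ∃ m : ℕ, av n = av m := ⟨n, rfl⟩
  rw [evalAt, dif_pos h, av_inj h.choose_spec.symm]

lemma evalAt_zero' (g : ℕ →₀ ZMod 2) : evalAt 0 g = 0 := by
  rw [evalAt, dif_neg]
  rintro ⟨n, hn⟩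
  exact absurd hn.symm (ne_of_gt (av_pos n))

lemma evalAt_add (a : ℝ) (g h : ℕ →₀ ZMod 2) :
    evalAt a (g + h) = evalAt a g + evalAt a h := by
  unfold evalAt
  split <;> simp

lemma evalAt_zero (a : ℝ) : evalAt a 0 = 0 := by
  unfold evalAt; split <;> simp

abbrev Gt : Type := Multiplicative (ℕ →₀ ZMod 2)

instance : MulAction Gt Xt where
  smul g x := ⟨(x.1.1, cf (evalAt x.1.1 g.toAdd) x.1.2), x.2.1, cf_mem x.2.2⟩
  one_smul x := by
    apply Subtype.ext
    show (x.1.1, cf (evalAt x.1.1 0) x.1.2) = x.1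
    rw [evalAt_zero]
    simp [cf]
  mul_smul g h x := by
    apply Subtype.ext
    show (x.1.1, cf (evalAt x.1.1 (g.toAdd + h.toAdd)) x.1.2) = _
    rw [evalAt_add, cf_add]
    rfl

lemma smul_def (g : Gt) (x : Xt) :
    (g • x : Xt).1 = (x.1.1, cf (evalAt x.1.1 g.toAdd) x.1.2) := rfl

/-- global flip-or-identity map -/
def Fe (e : ZMod 2) (y : Xt) : Xt := ⟨(y.1.1, cf e y.1.2), y.2.1, cf_mem y.2.2⟩

lemma cont_Fe (e : ZMod 2) : Continuous (Fe e) := by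
  apply Continuous.subtype_mk
  apply Continuous.prodMk
  · exact continuous_fst.comp continuous_subtype_val
  · have h2 : Continuous fun y : Xt => y.1.2 := continuous_snd.comp continuous_subtype_val
    unfold cf
    split
    · exact continuous_const.sub h2
    · exact h2

lemma dist_fst (x y : Xt) : |x.1.1 - y.1.1| ≤ dist x y := by
  rw [Subtype.dist_eq, Prod.dist_eq, ← Real.dist_eq]
  exact le_max_left _ _

lemma dist_snd (x y : Xt) : |x.1.2 - y.1.2| ≤ dist x y := by
  rw [Subtype.dist_eq, Prod.dist_eq, ← Real.dist_eq]
  exact le_max_right _ _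

/-- each point of the form `av n` is isolated in `Aset`. -/
lemma isolated (n : ℕ) : ∃ r > 0, ∀ a ∈ Aset, |a - av n| < r → a = av n := by
  have hgap : 0 < av n - av (n + 1) := by
    have := av_anti (show n < n + 1 by omega); linarith
  refine ⟨av n - av (n + 1), hgap, ?_⟩
  rintro a (rfl | ⟨m, rfl⟩) h
  · exfalso
    rw [zero_sub, abs_neg, abs_of_pos (av_pos n)] at h
    have := av_pos (n + 1)
    linarith
  · rcases lt_trichotomy m n with hm | rfl | hm
    · exfalso
      have h1 : av m - av n ≥ av n - av (n + 1) := by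
        have hm1 : (m : ℝ) + 1 ≤ n := by exact_mod_cast Nat.succ_le_of_lt hm
        have p1 : (0:ℝ) < (m:ℝ) + 1 := by positivity
        have p2 : (0:ℝ) < (n:ℝ) + 1 := by positivity
        have p3 : (0:ℝ) < (n:ℝ) + 1 + 1 := by positivity
        have hnm : (1:ℝ) ≤ (n:ℝ) - m := by linarith
        have key : 1/((n:ℝ)+1) - 1/((n:ℝ)+1+1) ≤ 1/((m:ℝ)+1) - 1/((n:ℝ)+1) := by
          rw [div_sub_div _ _ (ne_of_gt p2) (ne_of_gt p3),
            div_sub_div _ _ (ne_of_gt p1) (ne_of_gt p2),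
            div_le_div_iff₀ (by positivity) (by positivity)]
          nlinarith [mul_le_mul_of_nonneg_right hnm (le_of_lt (mul_pos p2 p3)),
            mul_le_mul_of_nonneg_right (show (m:ℝ)+1 ≤ (n:ℝ)+1+1 by linarith) (le_of_lt p2)]
        unfold av
        push_cast
        linarith
      rw [abs_of_pos (by have := av_anti hm; linarith)] at h
      linarith
    · rfl
    · exfalso
      have h1 : av m ≤ av (n + 1) := av_anti.antitone (by omega)
      have h2 : av m < av n := av_anti hm
      rw [abs_of_neg (by linarith)] at h
      linarith

/-- key locality: evalAt is locally constant along points of X. -/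
lemma loc (g : ℕ →₀ ZMod 2) (x : Xt) :
    ∃ r > 0, ∀ y : Xt, dist y x < r → evalAt y.1.1 g = evalAt x.1.1 g := by
  rcases x.2.1 with hx0 | ⟨n, hxn⟩
  · -- x.1.1 = 0
    set N := g.support.sup id + 1 with hN
    refine ⟨av N, av_pos N, fun y hy => ?_⟩
    have hy1 : |y.1.1 - x.1.1| < av N := lt_of_le_of_lt (dist_fst y x) hy
    rw [hx0, sub_zero] at hy1
    rw [hx0, evalAt_zero']
    rcases y.2.1 with h0 | ⟨m, hm⟩
    · rw [h0, evalAt_zero']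
    · rw [← hm, evalAt_av]
      rw [← hm, abs_of_pos (av_pos m)] at hy1
      have hNm : N < m := av_anti.lt_iff_gt.mp hy1
      rw [← Finsupp.notMem_support_iff]
      intro hmem
      have := Finset.le_sup (f := id) hmem
      simp only [id] at this
      omega
  · -- x.1.1 = av n
    obtain ⟨r, hr, hiso⟩ := isolated n
    refine ⟨r, hr, fun y hy => ?_⟩
    have h1 : |y.1.1 - av n| < r := by
      rw [hxn]; exact lt_of_le_of_lt (dist_fst y x) hy
    rw [hiso y.1.1 y.2.1 h1, ← hxn]

lemma cont (g : Gt) : Continuous fun x : Xt => g • x := by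
  rw [continuous_iff_continuousAt]
  intro x
  obtain ⟨r, hr, hloc⟩ := loc g.toAdd x
  refine (cont_Fe (evalAt x.1.1 g.toAdd)).continuousAt.congr ?_
  filter_upwards [Metric.ball_mem_nhds x hr] with y hy
  apply Subtype.ext
  show (y.1.1, cf (evalAt x.1.1 g.toAdd) y.1.2) = (y.1.1, cf (evalAt y.1.1 g.toAdd) y.1.2)
  rw [hloc y hy]

lemma orbit_finite (x : Xt) : (MulAction.orbit Gt x).Finite := by
  apply Set.Finite.subset ((Set.finite_singleton (Fe 1 x)).insert x)
  rintro _ ⟨g, rfl⟩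
  simp only [Set.mem_insert_iff, Set.mem_singleton_iff]
  have h0 : (g • x : Xt) = Fe (evalAt x.1.1 g.toAdd) x := Subtype.ext (smul_def g x)
  have he : evalAt x.1.1 g.toAdd = 0 ∨ evalAt x.1.1 g.toAdd = 1 := by
    generalize evalAt x.1.1 g.toAdd = e
    revert e; decide
  rcases he with he | he
  · left
    show g • x = x
    rw [h0, he]
    apply Subtype.ext
    show (x.1.1, cf 0 x.1.2) = x.1
    simp [cf]
  · right
    show g • x = Fe 1 x
    rw [h0, he]

lemma sep (n : ℕ) (x y : Xt) (hx : x.1.1 = av n) (hne : y.1.1 ≠ x.1.1)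
    (hb : x.1.2 = y.1.2) :
    (1:ℝ)/2 < dist ((Multiplicative.ofAdd (Finsupp.single n (1 : ZMod 2)) : Gt) • x)
      ((Multiplicative.ofAdd (Finsupp.single n (1 : ZMod 2)) : Gt) • y) := by
  set g : Gt := Multiplicative.ofAdd (Finsupp.single n (1 : ZMod 2)) with hg
  have hx2 : (g • x : Xt).1.2 = 1 - x.1.2 := by
    rw [smul_def]
    show cf (evalAt x.1.1 (Finsupp.single n 1)) x.1.2 = _
    rw [hx, evalAt_av, Finsupp.single_eq_same]
    simp [cf]
  have hy2 : (g • y : Xt).1.2 = y.1.2 := by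
    rw [smul_def]
    show cf (evalAt y.1.1 (Finsupp.single n 1)) y.1.2 = _
    have : evalAt y.1.1 (Finsupp.single n 1) = 0 := by
      rcases y.2.1 with h0 | ⟨m, hm⟩
      · rw [h0, evalAt_zero']
      · rw [← hm, evalAt_av, Finsupp.single_eq_of_ne']
        intro hnm
        exact hne (by rw [← hm, ← hnm]; exact hx.symm)
    rw [this]
    simp [cf]
  have hd := dist_snd (g • x) (g • y)
  rw [hx2, hy2, ← hb] at hd
  have hbv : x.1.2 = 0 ∨ x.1.2 = 1 := x.2.2
  rcases hbv with h | h <;> rw [h] at hd <;> norm_num at hd <;> linarith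

lemma not_fg : ¬ Group.FG Gt := by
  rw [← AddGroup.fg_iff_mul_fg, AddGroup.fg_iff]
  rintro ⟨S, hS, hfin⟩
  set P : AddSubgroup (ℕ →₀ ZMod 2) :=
    { carrier := {f | ∀ m, f m ≠ 0 → ∃ s ∈ S, s m ≠ 0}
      zero_mem' := by intro m hm; simp at hm
      add_mem' := by
        intro f g hf hg m hm
        rw [Finsupp.add_apply] at hm
        by_cases h : f m = 0
        · exact hg m (by rwa [h, zero_add] at hm)
        · exact hf m h
      neg_mem' := by
        intro f hf m hm
        apply hf m
        rwa [Finsupp.neg_apply, neg_ne_zero] at hm } with hP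
  have hle : AddSubgroup.closure S ≤ P :=
    (AddSubgroup.closure_le P).mpr (fun s hs m hm => ⟨s, hs, hm⟩)
  rw [hS] at hle
  have hU : {m : ℕ | ∃ s ∈ S, s m ≠ 0}.Finite := by
    apply Set.Finite.subset (hfin.biUnion fun s _ => (s.support : Set ℕ).toFinite)
    rintro m ⟨s, hs, h⟩
    exact Set.mem_biUnion hs (Finsupp.mem_support_iff.mpr h)
  obtain ⟨k, hk⟩ := hU.infinite_compl.nonempty
  have hmem : Finsupp.single k (1 : ZMod 2) ∈ P := hle (AddSubgroup.mem_top _)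
  exact hk (hmem k (by rw [Finsupp.single_eq_same]; exact one_ne_zero))

end

end Stmt9



/-- There exist an infinite compact metric space `X` and a countable,
non-finitely-generated group `G`, together with a continuous `G`-action on `X`
that is pointwise periodic and expansive. -/
theorem stmt_9 :
    ∃ (X : Type) (_ : MetricSpace X) (G : Type) (_ : Group G) (_ : MulAction G X),
      CompactSpace X ∧ Infinite X ∧ Countable G ∧ ¬ Group.FG G ∧
      (∀ g : G, Continuous fun x : X => g • x) ∧
      (∀ x : X, (MulAction.orbit G x).Finite) ∧
      (∃ c > 0, ∀ x y : X, x ≠ y → ∃ g : G, c < dist (g • x) (g • y)) := by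
  have hc : Countable Stmt9.Gt := Countable.of_equiv _ Multiplicative.ofAdd
  refine ⟨Stmt9.Xt, inferInstance, Stmt9.Gt, inferInstance, inferInstance,
    inferInstance, inferInstance, hc, Stmt9.not_fg, Stmt9.cont,
    Stmt9.orbit_finite, 1/2, by norm_num, ?_⟩
  intro x y hxy
  by_cases hb : x.1.2 = y.1.2
  · have ha : x.1.1 ≠ y.1.1 := by
      intro h
      exact hxy (Subtype.ext (Prod.ext h hb))
    have hcase : (∃ n, x.1.1 = Stmt9.av n) ∨ (∃ n, y.1.1 = Stmt9.av n) := by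
      rcases x.2.1 with h1 | ⟨n, h1⟩
      · rcases y.2.1 with h2 | ⟨n, h2⟩
        · exact absurd (h1.trans h2.symm) ha
        · exact Or.inr ⟨n, h2.symm⟩
      · exact Or.inl ⟨n, h1.symm⟩
    rcases hcase with ⟨n, hn⟩ | ⟨n, hn⟩
    · exact ⟨_, Stmt9.sep n x y hn (fun h => ha h.symm) hb⟩
    · refine ⟨Multiplicative.ofAdd (Finsupp.single n (1 : ZMod 2)), ?_⟩
      rw [dist_comm]
      exact Stmt9.sep n y x hn ha hb.symm
  · refine ⟨1, ?_⟩
    rw [one_smul, one_smul]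
    have hd := Stmt9.dist_snd x y
    rcases x.2.2 with h1 | h1 <;> rcases y.2.2 with h2 | h2 <;>
      first
        | (exact absurd (h1.trans h2.symm) hb)
        | (rw [h1, h2] at hd; norm_num at hd; linarith)
end

section
/- Let G be a finitely generated group acting continuously and expansively on an infinite compact metric space (X,d). Then the action admits a nontrivial proximal pair: there exist x, y ∈ X with x ≠ y and inf_{g∈G} d(g·x, g·y) = 0. -/
open Filter Pointwise

namespace Stmt10Aux

variable {G : Type*} [Group G] {T : Set G}

/-- word balls of radius n over a generating set T -/
def wb (T : Set G) : ℕ → Set G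
  | 0 => {1}
  | n + 1 => T * wb T n

lemma mem_wb_zero {g : G} : g ∈ wb T 0 ↔ g = 1 := Iff.rfl

lemma mem_wb_succ {g : G} {n : ℕ} :
    g ∈ wb T (n + 1) ↔ ∃ s ∈ T, ∃ h ∈ wb T n, s * h = g := by
  simp [wb, Set.mem_mul]

lemma one_mem_wb (hT1 : (1 : G) ∈ T) (n : ℕ) : (1 : G) ∈ wb T n := by
  induction n with
  | zero => exact rfl
  | succ n ih => exact mem_wb_succ.2 ⟨1, hT1, 1, ih, mul_one 1⟩

lemma wb_mul {a b : G} {m n : ℕ} (ha : a ∈ wb T m) (hb : b ∈ wb T n) :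
    a * b ∈ wb T (m + n) := by
  induction m generalizing a with
  | zero =>
    rw [mem_wb_zero] at ha
    simpa [ha] using hb
  | succ m ih =>
    obtain ⟨s, hs, h, hh, rfl⟩ := mem_wb_succ.1 ha
    have : s * (h * b) ∈ wb T (m + n + 1) := mem_wb_succ.2 ⟨s, hs, h * b, ih hh, rfl⟩
    rw [show m + 1 + n = m + n + 1 by omega]
    simpa [mul_assoc] using this

lemma wb_mono (hT1 : (1 : G) ∈ T) {n m : ℕ} (h : n ≤ m) : wb T n ⊆ wb T m := by
  induction h with
  | refl => exact fun _ h => h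
  | step h ih =>
      intro g hg
      exact mem_wb_succ.2 ⟨1, hT1, g, ih hg, one_mul g⟩

lemma wb_inv (hTinv : ∀ s ∈ T, s⁻¹ ∈ T) {g : G} {n : ℕ} (hg : g ∈ wb T n) :
    g⁻¹ ∈ wb T n := by
  induction n generalizing g with
  | zero => rw [mem_wb_zero] at hg ⊢; simp [hg]
  | succ n ih =>
    obtain ⟨s, hs, h, hh, rfl⟩ := mem_wb_succ.1 hg
    have h1 : s⁻¹ ∈ wb T 1 := mem_wb_succ.2 ⟨s⁻¹, hTinv s hs, 1, rfl, mul_one _⟩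
    have := wb_mul (ih hh) h1
    simpa [mul_inv_rev] using this

lemma list_prod_mem_wb {l : List G} (hl : ∀ x ∈ l, x ∈ T) : l.prod ∈ wb T l.length := by
  induction l with
  | nil => exact rfl
  | cons a l ih =>
    simp only [List.prod_cons, List.length_cons]
    exact mem_wb_succ.2 ⟨a, hl a (by simp), l.prod, ih (fun x hx => hl x (by simp [hx])), rfl⟩

lemma wb_exists_list {g : G} {n : ℕ} (hg : g ∈ wb T n) :
    ∃ l : List G, (∀ x ∈ l, x ∈ T) ∧ l.length = n ∧ l.prod = g := by
  induction n generalizing g with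
  | zero =>
    rw [mem_wb_zero] at hg
    exact ⟨[], by simp, rfl, by simp [hg]⟩
  | succ n ih =>
    obtain ⟨s, hs, h, hh, rfl⟩ := mem_wb_succ.1 hg
    obtain ⟨l, h1, h2, h3⟩ := ih hh
    refine ⟨s :: l, ?_, by simp [h2], by simp [h3]⟩
    intro x hx
    rcases List.mem_cons.1 hx with rfl | hx
    · exact hs
    · exact h1 x hx

lemma wb_finite (hTf : T.Finite) (n : ℕ) : (wb T n).Finite := by
  induction n with
  | zero => exact Set.finite_singleton 1
  | succ n ih => exact hTf.mul ih

lemma exists_wb (hT1 : (1 : G) ∈ T) (hTinv : ∀ s ∈ T, s⁻¹ ∈ T)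
    (hgen : Subgroup.closure T = ⊤) (g : G) : ∃ n, g ∈ wb T n := by
  have : g ∈ Subgroup.closure T := by rw [hgen]; trivial
  refine Subgroup.closure_induction ?_ ?_ ?_ ?_ this
  · intro x hx
    exact ⟨1, mem_wb_succ.2 ⟨x, hx, 1, rfl, mul_one _⟩⟩
  · exact ⟨0, rfl⟩
  · rintro x y _ _ ⟨m, hm⟩ ⟨n, hn⟩
    exact ⟨m + n, wb_mul hm hn⟩
  · rintro x _ ⟨n, hn⟩
    exact ⟨n, wb_inv hTinv hn⟩

variable {X : Type*} [MetricSpace X] [MulAction G X]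

/-- pairs whose orbit under the word ball of radius n stays within distance c -/
def aSet (c : ℝ) (T : Set G) (n : ℕ) : Set (X × X) :=
  {p | ∀ g ∈ wb T n, dist (g • p.1) (g • p.2) ≤ c}

lemma isClosed_aSet (hcont : ∀ g : G, Continuous fun x : X => g • x)
    (c : ℝ) (n : ℕ) : IsClosed (aSet (X := X) c T n) := by
  have : aSet (X := X) c T n
      = ⋂ g ∈ wb T n, {p : X × X | dist (g • p.1) (g • p.2) ≤ c} := by
    ext p; simp [aSet]
  rw [this]
  refine isClosed_biInter fun g _ => ?_
  exact isClosed_le (Continuous.dist ((hcont g).comp continuous_fst)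
    ((hcont g).comp continuous_snd)) continuous_const

lemma aSet_smul {c : ℝ} {a b : ℕ} {p : X × X} (hp : p ∈ aSet c T (a + b))
    {g : G} (hg : g ∈ wb T b) : (g • p.1, g • p.2) ∈ aSet c T a := by
  intro h hh
  simp only [smul_smul]
  exact hp _ (wb_mul hh hg)

/-- uniform expansiveness: pairs that stay c-close over a large ball are close -/
lemma unif_exp [CompactSpace X] (hcont : ∀ g : G, Continuous fun x : X => g • x)
    {c : ℝ} (hexp : ∀ x y : X, x ≠ y → ∃ g : G, c < dist (g • x) (g • y))
    (hT1 : (1 : G) ∈ T) (hgen : ∀ g : G, ∃ n, g ∈ wb T n)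
    {t : ℝ} (ht : 0 < t) :
    ∃ N : ℕ, ∀ p ∈ aSet (X := X) c T N, dist p.1 p.2 < t := by
  by_contra hcon
  push_neg at hcon
  set K : ℕ → Set (X × X) := fun n => aSet c T n ∩ {p | t ≤ dist p.1 p.2} with hK
  have hcl : ∀ n, IsClosed (K n) := fun n =>
    (isClosed_aSet hcont c n).inter
      (isClosed_le continuous_const (continuous_fst.dist continuous_snd))
  have hne : ∀ n, (K n).Nonempty := by
    intro n
    obtain ⟨p, hp1, hp2⟩ := hcon n
    exact ⟨p, hp1, hp2⟩
  have hanti : ∀ {n m : ℕ}, n ≤ m → K m ⊆ K n := by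
    intro n m hnm
    refine Set.inter_subset_inter ?_ (fun p hp => hp)
    intro p hp g hg
    exact hp g (wb_mono hT1 hnm hg)
  have hdir : Directed (fun x1 x2 : Set (X × X) => x1 ⊇ x2) K :=
    fun n m => ⟨max n m, hanti (le_max_left n m), hanti (le_max_right n m)⟩
  obtain ⟨p, hp⟩ := IsCompact.nonempty_iInter_of_directed_nonempty_isCompact_isClosed
    K hdir hne (fun n => (hcl n).isCompact) hcl
  simp only [Set.mem_iInter] at hp
  have hpd : p.1 = p.2 := by
    by_contra hne'
    obtain ⟨g, hg⟩ := hexp p.1 p.2 hne'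
    obtain ⟨n, hn⟩ := hgen g
    exact absurd ((hp n).1 g hn) (not_le.2 hg)
  have : t ≤ dist p.1 p.2 := (hp 0).2
  rw [hpd, dist_self] at this
  linarith

/-- uniform continuity of the finitely many generators -/
lemma unif_cont [CompactSpace X] (hcont : ∀ g : G, Continuous fun x : X => g • x)
    (hTf : T.Finite) {η : ℝ} (hη : 0 < η) :
    ∃ ε : ℝ, 0 < ε ∧ ε ≤ η ∧
      ∀ x y : X, dist x y ≤ ε → ∀ s ∈ T, dist (s • x) (s • y) ≤ η := by
  refine Set.Finite.induction_on
    (motive := fun s _ => ∃ ε : ℝ, 0 < ε ∧ ε ≤ η ∧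
      ∀ x y : X, dist x y ≤ ε → ∀ g ∈ s, dist (g • x) (g • y) ≤ η) T hTf
    ⟨η, hη, le_refl η, fun x y _ g hg => absurd hg (Set.notMem_empty g)⟩ ?_
  rintro a s - - ⟨ε, hε, hεη, hεs⟩
  have hu : UniformContinuous fun x : X => a • x :=
    CompactSpace.uniformContinuous_of_continuous (hcont a)
  obtain ⟨δ, hδ, hδ'⟩ := Metric.uniformContinuous_iff.1 hu η hη
  refine ⟨min ε (δ / 2), lt_min hε (by linarith), le_trans (min_le_left _ _) hεη, ?_⟩
  intro x y hxy g hg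
  rcases Set.mem_insert_iff.1 hg with rfl | hg
  · exact le_of_lt (hδ' (lt_of_le_of_lt (le_trans hxy (min_le_right _ _)) (by linarith)))
  · exact hεs x y (le_trans hxy (min_le_left _ _)) g hg

/-- an infinite compact metric space has distinct pairs at all small scales -/
lemma small_pair {Y : Type*} [MetricSpace Y] [CompactSpace Y] [Infinite Y]
    {θ : ℝ} (hθ : 0 < θ) : ∃ x y : Y, x ≠ y ∧ dist x y ≤ θ := by
  by_contra h
  push_neg at h
  haveI : DiscreteTopology Y := by
    refine discreteTopology_iff_isOpen_singleton.2 fun x => ?_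
    have hx : {x} = Metric.ball x θ := by
      ext y
      simp only [Set.mem_singleton_iff, Metric.mem_ball]
      constructor
      · rintro rfl; simpa using hθ
      · intro hy
        by_contra hne
        exact absurd (le_of_lt hy) (not_le.2 (dist_comm x y ▸ h x y (Ne.symm hne)))
    rw [hx]
    exact Metric.isOpen_ball
  exact (not_finite_iff_infinite.2 ‹Infinite Y›) (finite_of_compact_of_discrete (X := Y))

/-- KEY construction: from a very close nontrivial pair, produce a pair at a
definite scale which can be pulled back to any smaller scale by boundedly short words. -/
lemma key {X : Type*} [MetricSpace X] [CompactSpace X] [MulAction G X]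
    (hcont : ∀ g : G, Continuous fun x : X => g • x)
    {c : ℝ} (hc : 0 < c)
    (hexp : ∀ x y : X, x ≠ y → ∃ g : G, c < dist (g • x) (g • y))
    (hT1 : (1 : G) ∈ T) (hTinv : ∀ s ∈ T, s⁻¹ ∈ T)
    (hgen : ∀ g : G, ∃ n, g ∈ wb T n)
    (eps : ℝ → ℝ)
    (heps_pos : ∀ η : ℝ, 0 < η → 0 < eps η)
    (heps_le : ∀ η : ℝ, 0 < η → eps η ≤ η)
    (heps : ∀ η : ℝ, 0 < η →
      ∀ x y : X, dist x y ≤ eps η → ∀ s ∈ T, dist (s • x) (s • y) ≤ η)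
    (Nf : ℝ → ℕ)
    (hNf : ∀ t : ℝ, 0 < t → ∀ p ∈ aSet (X := X) c T (Nf t), dist p.1 p.2 < t)
    {θ : ℝ} (hθ : 0 < θ) (hθc : θ ≤ eps c)
    {x y : X} (hxy : x ≠ y) (hd : dist x y ≤ θ) :
    ∃ u v : X, eps c < dist u v ∧ dist u v ≤ c ∧
      ∀ η : ℝ, 0 < η → θ ≤ min (eps η) (eps c) →
        ∃ w ∈ wb T (Nf (min (eps η) (eps c)) + 1), dist (w • u) (w • v) ≤ η := by
  classical
  obtain ⟨g₀, hg₀⟩ := hexp x y hxy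
  obtain ⟨m₀, hm₀⟩ := hgen g₀
  have hPm : ∃ n, (x, y) ∉ aSet (X := X) c T n :=
    ⟨m₀, fun hmem => absurd (hmem g₀ hm₀) (not_le.2 hg₀)⟩
  set n := Nat.find hPm with hn_def
  have hfind : (x, y) ∉ aSet (X := X) c T n := Nat.find_spec hPm
  have hbefore : ∀ j, j < n → (x, y) ∈ aSet (X := X) c T j :=
    fun j hj => of_not_not (Nat.find_min hPm hj)
  -- extract a separating word
  have hsep : ∃ g ∈ wb T n, c < dist (g • x) (g • y) := by
    by_contra hcon
    push_neg at hcon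
    exact hfind fun g hg => hcon g hg
  obtain ⟨g, hgwb, hgc⟩ := hsep
  obtain ⟨l, hlT, hlen, hprod⟩ := wb_exists_list hgwb
  -- prefix words (suffix products of the list)
  set w : ℕ → G := fun j => (l.drop (n - j)).prod with hw_def
  have hw0 : w 0 = 1 := by
    simp only [hw_def, Nat.sub_zero]
    rw [← hlen, List.drop_length, List.prod_nil]
  have hwn : w n = g := by simp [hw_def, hprod]
  have hdecomp : ∀ {i j : ℕ}, i ≤ j → j ≤ n →
      ∃ m ∈ wb T (j - i), w j = m * w i := by
    intro i j hij hjn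
    set s1 := l.drop (n - j) with hs1
    have hs1len : s1.length = j := by
      simp only [hs1, List.length_drop, hlen]
      omega
    have hdd : s1.drop (j - i) = l.drop (n - i) := by
      rw [hs1, List.drop_drop]
      congr 1
      omega
    refine ⟨(s1.take (j - i)).prod, ?_, ?_⟩
    · have hmem := list_prod_mem_wb (T := T)
        (l := s1.take (j - i))
        (fun z hz => hlT z (List.mem_of_mem_drop (List.mem_of_mem_take hz)))
      have hlen2 : (s1.take (j - i)).length = j - i := by
        rw [List.length_take, hs1len]
        omega
      rwa [hlen2] at hmem
    · calc w j = s1.prod := rfl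
        _ = (s1.take (j - i) ++ s1.drop (j - i)).prod := by rw [List.take_append_drop]
        _ = (s1.take (j - i)).prod * (s1.drop (j - i)).prod := List.prod_append
        _ = (s1.take (j - i)).prod * w i := by rw [hdd]
  have hstep : ∀ j, j + 1 ≤ n → ∃ s ∈ T, w (j + 1) = s * w j := by
    intro j hj
    obtain ⟨m, hm, hmw⟩ := hdecomp (Nat.le_succ j) hj
    rw [show j + 1 - j = 1 by omega] at hm
    obtain ⟨s, hs, h, hh, rfl⟩ := mem_wb_succ.1 hm
    rw [mem_wb_zero] at hh
    exact ⟨s, hs, by rw [hmw, hh, mul_one]⟩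
  have hwj : ∀ j, j ≤ n → w j ∈ wb T j := by
    intro j hj
    obtain ⟨m, hm, hmw⟩ := hdecomp (Nat.zero_le j) hj
    rw [hmw, hw0, mul_one]
    simpa using hm
  set D : ℕ → ℝ := fun j => dist (w j • x) (w j • y) with hD_def
  have hD0 : D 0 ≤ θ := by simp [hD_def, hw0, hd]
  have hDn : c < D n := by simp only [hD_def, hwn]; exact hgc
  -- protection: early along the word, the pair is still tiny
  have hprot : ∀ (N : ℕ) (t : ℝ), (∀ p ∈ aSet (X := X) c T N, dist p.1 p.2 < t) →
      ∀ j, j + N + 1 ≤ n → D j < t := by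
    intro N t hspec j hj
    have hin : (x, y) ∈ aSet (X := X) c T (N + j) := hbefore (N + j) (by omega)
    have := aSet_smul hin (hwj j (by omega))
    exact hspec _ this
  -- threshold crossing times
  have hthr : ∀ t : ℝ, t ≤ c → θ ≤ t →
      ∃ j : ℕ, 1 ≤ j ∧ j ≤ n ∧ t < D j ∧ ∀ i, i < j → D i ≤ t := by
    intro t htc hθt
    have hex : ∃ j, t < D j := ⟨n, lt_of_le_of_lt htc hDn⟩
    refine ⟨Nat.find hex, ?_, Nat.find_le (lt_of_le_of_lt htc hDn), Nat.find_spec hex,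
      fun i hi => not_lt.1 (Nat.find_min hex hi)⟩
    rcases Nat.eq_zero_or_pos (Nat.find hex) with h0 | h1
    · have := Nat.find_spec hex
      rw [h0] at this
      exact absurd this (not_lt.2 (le_trans hD0 hθt))
    · exact h1
  -- the distinguished pair at scale eps c
  have hecc : eps c ≤ c := heps_le c hc
  obtain ⟨J, hJ1, hJn, hJgt, hJmin⟩ := hthr (eps c) hecc hθc
  refine ⟨w J • x, w J • y, hJgt, ?_, ?_⟩
  · -- dist ≤ c : one generator step from an (eps c)-close pair
    obtain ⟨s, hs, hws⟩ := hstep (J - 1) (by omega)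
    have hprev : D (J - 1) ≤ eps c := hJmin (J - 1) (by omega)
    have := heps c hc (w (J - 1) • x) (w (J - 1) • y) hprev s hs
    rw [show J = J - 1 + 1 by omega, hws]
    simpa [mul_smul] using this
  · intro η hη hθt
    set t := min (eps η) (eps c) with ht_def
    have ht0 : 0 < t := lt_min (heps_pos η hη) (heps_pos c hc)
    have htc : t ≤ c := le_trans (min_le_right _ _) hecc
    obtain ⟨j, hj1, hjn, hjgt, hjmin⟩ := hthr t htc hθt
    have hjJ : j ≤ J := by
      by_contra hcon
      push_neg at hcon
      exact absurd (hjmin J hcon) (not_le.2 (lt_of_le_of_lt (min_le_right _ _) hJgt))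
    -- D j ≤ η
    have hDjη : D j ≤ η := by
      obtain ⟨s, hs, hws⟩ := hstep (j - 1) (by omega)
      have hj' : j - 1 + 1 = j := by omega
      rw [hj'] at hws
      have hprev : D (j - 1) ≤ eps η := le_trans (hjmin (j - 1) (by omega)) (min_le_left _ _)
      have hb := heps η hη (w (j - 1) • x) (w (j - 1) • y) hprev s hs
      show dist (w j • x) (w j • y) ≤ η
      rw [hws]
      simpa [mul_smul] using hb
    -- j is late along the word
    have hlate : n ≤ j + Nf t := by
      by_contra hcon
      push_neg at hcon
      exact absurd (hprot (Nf t) t (hNf t ht0) j (by omega)) (not_lt.2 (le_of_lt hjgt))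
    obtain ⟨m, hmwb, hmw⟩ := hdecomp hjJ hJn
    refine ⟨m⁻¹, ?_, ?_⟩
    · exact wb_mono hT1 (by omega) (wb_inv hTinv hmwb)
    · have h1 : m⁻¹ • (w J • x) = w j • x := by
        rw [hmw, mul_smul, inv_smul_smul]
      have h2 : m⁻¹ • (w J • y) = w j • y := by
        rw [hmw, mul_smul, inv_smul_smul]
      rw [h1, h2]
      exact hDjη

end Stmt10Aux

open Stmt10Aux Filter Topology in
/-- An expansive continuous action of a finitely generated group on
an infinite compact metric space admits a nontrivial proximal pair. -/
theorem stmt_10 {G X : Type*} [Group G] [MetricSpace X] [CompactSpace X]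
    [MulAction G X] [Infinite X]
    (hcont : ∀ g : G, Continuous fun x : X => g • x)
    (hfg : Group.FG G)
    (hexpansive : ∃ c > 0, ∀ x y : X, x ≠ y → ∃ g : G, c < dist (g • x) (g • y)) :
    ∃ x y : X, x ≠ y ∧ (⨅ g : G, dist (g • x) (g • y)) = 0 := by
  classical
  obtain ⟨c, hc, hexp⟩ := hexpansive
  -- symmetric finite generating set containing 1
  obtain ⟨S, hSgen, hSfin⟩ := Group.fg_iff.1 hfg
  set T : Set G := S ∪ S⁻¹ ∪ {1} with hT_def
  have hT1 : (1 : G) ∈ T := Or.inr rfl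
  have hTinv : ∀ s ∈ T, s⁻¹ ∈ T := by
    rintro s (⟨hs | hs⟩ | hs)
    · exact Or.inl (Or.inr (by simpa using hs))
    · exact Or.inl (Or.inl (by simpa using hs))
    · rw [Set.mem_singleton_iff] at hs
      subst hs
      exact Or.inr (by simp)
  have hTfin : T.Finite := ((hSfin.union hSfin.inv).union (Set.finite_singleton 1))
  have hTgen : Subgroup.closure T = ⊤ := by
    rw [eq_top_iff, ← hSgen]
    exact Subgroup.closure_mono (fun s hs => Or.inl (Or.inl hs))
  have hgen : ∀ g : G, ∃ n, g ∈ wb T n := exists_wb hT1 hTinv hTgen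
  -- moduli of continuity and of uniform expansiveness
  have hec : ∀ η : ℝ, 0 < η → ∃ ε : ℝ, 0 < ε ∧ ε ≤ η ∧
      ∀ x y : X, dist x y ≤ ε → ∀ s ∈ T, dist (s • x) (s • y) ≤ η :=
    fun η hη => unif_cont hcont hTfin hη
  set eps : ℝ → ℝ := fun η => if h : 0 < η then (hec η h).choose else 1 with heps_def
  have heps_pos : ∀ η : ℝ, 0 < η → 0 < eps η := by
    intro η hη
    rw [heps_def]
    simp only [dif_pos hη]
    exact (hec η hη).choose_spec.1
  have heps_le : ∀ η : ℝ, 0 < η → eps η ≤ η := by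
    intro η hη
    rw [heps_def]
    simp only [dif_pos hη]
    exact (hec η hη).choose_spec.2.1
  have heps : ∀ η : ℝ, 0 < η →
      ∀ x y : X, dist x y ≤ eps η → ∀ s ∈ T, dist (s • x) (s • y) ≤ η := by
    intro η hη
    have : eps η = (hec η hη).choose := by rw [heps_def]; simp only [dif_pos hη]
    rw [this]
    exact (hec η hη).choose_spec.2.2
  have hue : ∀ t : ℝ, 0 < t → ∃ N : ℕ, ∀ p ∈ aSet (X := X) c T N, dist p.1 p.2 < t :=
    fun t ht => unif_exp hcont hexp hT1 hgen ht
  set Nf : ℝ → ℕ := fun t => if h : 0 < t then (hue t h).choose else 0 with hNf_def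
  have hNf : ∀ t : ℝ, 0 < t → ∀ p ∈ aSet (X := X) c T (Nf t), dist p.1 p.2 < t := by
    intro t ht
    have : Nf t = (hue t ht).choose := by rw [hNf_def]; simp only [dif_pos ht]
    rw [this]
    exact (hue t ht).choose_spec
  -- sequence of pairs at scale about eps c, with small-scale pullbacks
  set θk : ℕ → ℝ := fun k => min (eps c) (1 / (k + 1)) with hθk_def
  have hθk_pos : ∀ k : ℕ, 0 < θk k := by
    intro k
    refine lt_min (heps_pos c hc) ?_
    positivity
  have hθk_le : ∀ k : ℕ, θk k ≤ eps c := fun k => min_le_left _ _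
  have hθk_le' : ∀ k : ℕ, θk k ≤ 1 / (k + 1) := fun k => min_le_right _ _
  have hseq : ∀ k : ℕ, ∃ p : X × X, eps c < dist p.1 p.2 ∧ dist p.1 p.2 ≤ c ∧
      ∀ η : ℝ, 0 < η → θk k ≤ min (eps η) (eps c) →
        ∃ w ∈ wb T (Nf (min (eps η) (eps c)) + 1),
          dist (w • p.1) (w • p.2) ≤ η := by
    intro k
    obtain ⟨x, y, hxy, hdxy⟩ := small_pair (Y := X) (hθk_pos k)
    obtain ⟨u, v, h1, h2, h3⟩ := key hcont hc hexp hT1 hTinv hgen eps heps_pos heps_le heps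
      Nf hNf (hθk_pos k) (hθk_le k) hxy hdxy
    exact ⟨(u, v), h1, h2, h3⟩
  choose q hq1 hq2 hq3 using hseq
  obtain ⟨r, -, φ, hφ, hlim⟩ := IsCompact.tendsto_subseq (x := q) isCompact_univ
    (fun n => Set.mem_univ _)
  -- the limit pair is nontrivial
  have hdlim : Tendsto (fun k => dist (q (φ k)).1 (q (φ k)).2) atTop (𝓝 (dist r.1 r.2)) :=
    ((continuous_fst.dist continuous_snd).tendsto r).comp hlim
  have hrge : eps c ≤ dist r.1 r.2 :=
    ge_of_tendsto' hdlim fun k => le_of_lt (hq1 (φ k))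
  have hrne : r.1 ≠ r.2 := by
    intro h
    rw [h, dist_self] at hrge
    exact absurd hrge (not_le.2 (heps_pos c hc))
  refine ⟨r.1, r.2, hrne, ?_⟩
  have hbdd : BddBelow (Set.range fun g : G => dist (g • r.1) (g • r.2)) := by
    refine ⟨0, ?_⟩
    rintro _ ⟨g, rfl⟩
    exact dist_nonneg
  refine le_antisymm ?_ (le_ciInf fun g => dist_nonneg)
  refine le_of_forall_pos_le_add fun η hη => ?_
  rw [zero_add]
  -- find a single word pulling infinitely many of the q's to scale η
  set t : ℝ := min (eps η) (eps c) with ht_def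
  have ht0 : 0 < t := lt_min (heps_pos η hη) (heps_pos c hc)
  set M : ℕ := Nf t + 1 with hM_def
  obtain ⟨K, hK⟩ := exists_nat_one_div_lt ht0
  have hKk : ∀ k : ℕ, K ≤ k → θk k ≤ t := by
    intro k hk
    refine le_trans (hθk_le' k) (le_trans ?_ (le_of_lt hK))
    apply one_div_le_one_div_of_le
    · positivity
    · exact_mod_cast Nat.succ_le_succ hk
  have hfreq : ∃ w ∈ wb T M, ∃ᶠ k in atTop,
      dist (w • (q (φ k)).1) (w • (q (φ k)).2) ≤ η := by
    by_contra hcon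
    push_neg at hcon
    have hev : ∀ᶠ k in atTop, ∀ w ∈ wb T M,
        ¬ dist (w • (q (φ k)).1) (w • (q (φ k)).2) ≤ η :=
      (eventually_all_finite (wb_finite hTfin M)).2
        fun w hw => (hcon w hw).mono fun k hk => not_le.2 hk
    obtain ⟨k, hk1, hk2⟩ := (hev.and (eventually_ge_atTop K)).exists
    have hθφ : θk (φ k) ≤ t := hKk (φ k) (le_trans hk2 hφ.le_apply)
    obtain ⟨w, hw, hd⟩ := hq3 (φ k) η hη hθφ
    exact hk1 w hw hd
  obtain ⟨w, hwM, hwfreq⟩ := hfreq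
  have hcl : IsClosed {p : X × X | dist (w • p.1) (w • p.2) ≤ η} :=
    isClosed_le (((hcont w).comp continuous_fst).dist ((hcont w).comp continuous_snd))
      continuous_const
  have hrmem : r ∈ {p : X × X | dist (w • p.1) (w • p.2) ≤ η} :=
    hcl.mem_of_frequently_of_tendsto hwfreq hlim
  calc (⨅ g : G, dist (g • r.1) (g • r.2)) ≤ dist (w • r.1) (w • r.2) := ciInf_le hbdd w
    _ ≤ η := hrmem
end

section
/- There exist an infinite, zero-dimensional (totally disconnected) compact metric space X and a countable group G that is not finitely generated, together with a continuous action of G on X that is minimal, distal, and expansive; in particular the action is not equicontinuous. -/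
namespace Stmt11

instance : TopologicalSpace (ZMod 2) := ⊥
instance : DiscreteTopology (ZMod 2) := ⟨rfl⟩
instance : ContinuousAdd (ZMod 2) := ⟨continuous_of_discreteTopology⟩
instance : ContinuousMul (ZMod 2) := ⟨continuous_of_discreteTopology⟩

abbrev X : Type := ℕ → ZMod 2

noncomputable instance : MetricSpace X := PiNat.metricSpace

lemma z2_add_self (a : ZMod 2) : a + a = 0 := by
  have h2 : (2 : ZMod 2) = 0 := by decide
  calc a + a = 2 * a := by ring
  _ = 0 := by rw [h2, zero_mul]

lemma fs_add_self (v : ℕ →₀ ZMod 2) : v + v = 0 := by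
  ext n; simp [z2_add_self]

/-- "Dirac at 0" function. -/
def e0 (c : ZMod 2) : X := fun n => if n = 0 then c else 0

@[simp] lemma e0_apply_zero (c : ZMod 2) : e0 c 0 = c := rfl

lemma e0_apply_ne (c : ZMod 2) {n : ℕ} (h : n ≠ 0) : e0 c n = 0 := if_neg h

lemma e0_add (c d : ZMod 2) : e0 (c + d) = e0 c + e0 d := by
  funext n
  rcases eq_or_ne n 0 with rfl | hn
  · rfl
  · simp [e0_apply_ne _ hn]

@[simp] lemma e0_zero : e0 0 = 0 := by
  funext n; rcases eq_or_ne n 0 with rfl | hn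
  · rfl
  · simp [e0_apply_ne _ hn]

/-- The pairing `B φ x = ∑ φ n * x n`. -/
def B (φ : ℕ →₀ ZMod 2) (x : X) : ZMod 2 := φ.sum fun n a => a * x n

lemma B_zero_left (x : X) : B 0 x = 0 := by simp [B]

lemma B_add_left (φ ψ : ℕ →₀ ZMod 2) (x : X) : B (φ + ψ) x = B φ x + B ψ x :=
  Finsupp.sum_add_index' (by simp) (by intros; ring)

lemma B_add_right (φ : ℕ →₀ ZMod 2) (x y : X) : B φ (x + y) = B φ x + B φ y := by
  simp [B, mul_add, Finsupp.sum_add]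

lemma B_single_left (m : ℕ) (x : X) : B (Finsupp.single m 1) x = x m := by
  simp [B, Finsupp.sum_single_index]

lemma B_congr (φ : ℕ →₀ ZMod 2) (hφ : φ 0 = 0) {x y : X}
    (h : ∀ n, n ≠ 0 → x n = y n) : B φ x = B φ y := by
  refine Finset.sum_congr rfl ?_
  intro n hn
  dsimp only
  rcases eq_or_ne n 0 with rfl | hne
  · simp [hφ]
  · rw [h n hne]

lemma B_e0 (φ : ℕ →₀ ZMod 2) (h : φ 0 = 0) (c : ZMod 2) : B φ (e0 c) = 0 := by
  refine Finset.sum_eq_zero ?_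
  intro n _
  dsimp only
  rcases eq_or_ne n 0 with rfl | hne
  · simp [h]
  · simp [e0_apply_ne _ hne]

lemma B_zero_right (φ : ℕ →₀ ZMod 2) : B φ 0 = 0 := by
  refine Finset.sum_eq_zero ?_
  intro n _
  simp

lemma B_coe_add (φ : ℕ →₀ ZMod 2) (γ δ : ℕ →₀ ZMod 2) :
    B φ ⇑(γ + δ) = B φ ⇑γ + B φ ⇑δ := by
  rw [Finsupp.coe_add]; exact B_add_right _ _ _

lemma coe_single0_eq_e0 (c : ZMod 2) : ⇑(Finsupp.single 0 c) = e0 c := by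
  funext n
  rw [Finsupp.single_apply]
  rcases eq_or_ne n 0 with rfl | hn
  · simp [e0]
  · simp [e0_apply_ne _ hn, (Ne.symm hn)]

lemma B_coe_single0 (φ : ℕ →₀ ZMod 2) (h : φ 0 = 0) (c : ZMod 2) :
    B φ ⇑(Finsupp.single 0 c) = 0 := by
  rw [coe_single0_eq_e0]; exact B_e0 φ h c

/-- The group: pairs `(φ, γ)` with `φ 0 = 0`, acting by `x ↦ x + ⟨φ,x⟩ e₀ + γ`. -/
@[ext] structure Gp : Type where
  phi : ℕ →₀ ZMod 2
  gam : ℕ →₀ ZMod 2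
  h0 : phi 0 = 0

noncomputable instance : Mul Gp :=
  ⟨fun a b => ⟨a.phi + b.phi, b.gam + a.gam + Finsupp.single 0 (B a.phi b.gam),
    by simp [a.h0, b.h0]⟩⟩

noncomputable instance : One Gp := ⟨⟨0, 0, by simp⟩⟩

noncomputable instance : Inv Gp :=
  ⟨fun a => ⟨a.phi, a.gam + Finsupp.single 0 (B a.phi a.gam), a.h0⟩⟩

@[simp] lemma mul_phi (a b : Gp) : (a * b).phi = a.phi + b.phi := rfl
@[simp] lemma mul_gam (a b : Gp) :
    (a * b).gam = b.gam + a.gam + Finsupp.single 0 (B a.phi b.gam) := rfl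
@[simp] lemma one_phi : (1 : Gp).phi = 0 := rfl
@[simp] lemma one_gam : (1 : Gp).gam = 0 := rfl
@[simp] lemma inv_phi (a : Gp) : a⁻¹.phi = a.phi := rfl
@[simp] lemma inv_gam (a : Gp) :
    a⁻¹.gam = a.gam + Finsupp.single 0 (B a.phi a.gam) := rfl

noncomputable instance : Group Gp := by
  refine Group.ofLeftAxioms ?_ ?_ ?_
  · intro a b c
    refine Gp.ext ?_ ?_
    · simp [add_assoc]
    · simp only [mul_gam, mul_phi, B_add_left, B_coe_add,
        B_coe_single0 _ a.h0, Finsupp.single_add]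
      simp only [Finsupp.single_zero, add_zero]
      abel
  · intro a
    refine Gp.ext ?_ ?_
    · simp
    · simp [B_zero_left]
  · intro a
    refine Gp.ext ?_ ?_
    · simp [fs_add_self]
    · simp only [mul_gam, inv_gam, inv_phi, one_gam]
      rw [show a.gam + (a.gam + Finsupp.single 0 (B a.phi ⇑a.gam)) +
          Finsupp.single 0 (B a.phi ⇑a.gam)
          = (a.gam + a.gam) + (Finsupp.single 0 (B a.phi ⇑a.gam) +
            Finsupp.single 0 (B a.phi ⇑a.gam)) by abel]
      simp [fs_add_self]

/-- The action. -/
noncomputable def act (g : Gp) (x : X) : X := x + ⇑g.gam + e0 (B g.phi x)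

noncomputable instance : SMul Gp X := ⟨act⟩

lemma smul_def (g : Gp) (x : X) : g • x = x + ⇑g.gam + e0 (B g.phi x) := rfl

noncomputable instance : MulAction Gp X where
  one_smul x := by
    show act 1 x = x
    simp [act, B_zero_left]
  mul_smul a b x := by
    show act (a * b) x = act a (act b x)
    simp only [act, mul_phi, mul_gam, B_add_left, Finsupp.coe_add, B_add_right,
      B_e0 _ a.h0, coe_single0_eq_e0, e0_add, add_zero]
    abel

lemma smul_apply_ne (g : Gp) (x : X) {n : ℕ} (h : n ≠ 0) :
    (g • x) n = x n + g.gam n := by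
  simp [smul_def, e0_apply_ne _ h]

lemma smul_apply_zero (g : Gp) (x : X) :
    (g • x) 0 = x 0 + g.gam 0 + B g.phi x := by
  simp [smul_def]

lemma dist_ge {x y : X} {n : ℕ} (h : x n ≠ y n) : (1 / 2 : ℝ) ^ n ≤ dist x y := by
  by_contra hlt
  push_neg at hlt
  exact h (PiNat.apply_eq_of_dist_lt hlt le_rfl)

lemma dist_le_pow {x y : X} {n : ℕ} (h : ∀ i < n, x i = y i) :
    dist x y ≤ (1 / 2 : ℝ) ^ n :=
  PiNat.mem_cylinder_iff_dist_le.1 (PiNat.mem_cylinder_iff.2 h)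

/-- Subgroup of elements supported in `F`. -/
noncomputable def HF (F : Finset ℕ) (h0 : 0 ∈ F) : Subgroup Gp where
  carrier := {g | g.phi.support ⊆ F ∧ g.gam.support ⊆ F}
  one_mem' := by constructor <;> simp
  mul_mem' := by
    rintro a b ⟨ha1, ha2⟩ ⟨hb1, hb2⟩
    refine ⟨Finsupp.support_add.trans (Finset.union_subset ha1 hb1), ?_⟩
    refine Finsupp.support_add.trans (Finset.union_subset
      (Finsupp.support_add.trans (Finset.union_subset hb2 ha2)) ?_)
    exact Finsupp.support_single_subset.trans (by simpa using h0)
  inv_mem' := by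
    rintro a ⟨h1, h2⟩
    exact ⟨h1, Finsupp.support_add.trans (Finset.union_subset h2
      (Finsupp.support_single_subset.trans (by simpa using h0)))⟩

lemma not_fg : ¬ Group.FG Gp := by
  rw [Group.fg_iff]
  rintro ⟨S, hS, hfin⟩
  classical
  let T : Finset Gp := hfin.toFinset
  let F : Finset ℕ := insert 0 (T.biUnion fun g => g.phi.support ∪ g.gam.support)
  have h0 : (0 : ℕ) ∈ F := Finset.mem_insert_self _ _
  have hSsub : S ⊆ ↑(HF F h0) := by
    intro g hg
    have hgT : g ∈ T := hfin.mem_toFinset.2 hg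
    constructor <;> intro n hn <;>
      exact Finset.mem_insert_of_mem (Finset.mem_biUnion.2
        ⟨g, hgT, Finset.mem_union.2 (by first | exact Or.inl hn | exact Or.inr hn)⟩)
  have hle := (Subgroup.closure_le (HF F h0)).2 hSsub
  rw [hS] at hle
  obtain ⟨m, hm⟩ := Infinite.exists_notMem_finset F
  have hmem : (⟨0, Finsupp.single m 1, by simp⟩ : Gp) ∈ HF F h0 := hle trivial
  have := hmem.2
  rw [Finsupp.support_single_ne_zero m one_ne_zero] at this
  exact hm (this (Finset.mem_singleton_self m))

lemma countable_gp : Countable Gp := by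
  have hinj : Function.Injective (fun g : Gp => (g.phi, g.gam)) := by
    rintro ⟨p1, g1, h1⟩ ⟨p2, g2, h2⟩ h
    simp only [Prod.mk.injEq] at h
    exact Gp.ext h.1 h.2
  exact hinj.countable

end Stmt11

open Stmt11

/-- There exist an infinite, zero-dimensional compact metric space
`X` and a countable, non-finitely-generated group `G`, together with a continuous
`G`-action on `X` that is minimal, distal and expansive; in particular it is not
equicontinuous. -/
theorem stmt_11 :
    ∃ (X : Type) (_ : MetricSpace X) (G : Type) (_ : Group G) (_ : MulAction G X),
      CompactSpace X ∧ Infinite X ∧ TotallyDisconnectedSpace X ∧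
      Countable G ∧ ¬ Group.FG G ∧
      (∀ g : G, Continuous fun x : X => g • x) ∧
      (∀ x : X, Dense (MulAction.orbit G x : Set X)) ∧
      (∀ x y : X, x ≠ y → 0 < ⨅ g : G, dist (g • x) (g • y)) ∧
      (∃ c > 0, ∀ x y : X, x ≠ y → ∃ g : G, c < dist (g • x) (g • y)) ∧
      ¬ (∀ ε > 0, ∃ δ > 0, ∀ x y : X, dist x y < δ → ∀ g : G, dist (g • x) (g • y) < ε) := by
  classical
  refine ⟨Stmt11.X, inferInstance, Gp, inferInstance, inferInstance,
    ?_, ?_, ?_, ?_, ?_, ?_, ?_, ?_, ?_, ?_⟩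
  · -- compact
    exact Pi.compactSpace
  · -- infinite
    refine Infinite.of_injective (fun k => (fun n => if n = k then 1 else 0 : Stmt11.X)) ?_
    intro a b h
    by_contra hab
    have := congrFun h a
    simp only [if_pos rfl, if_neg hab] at this
    exact one_ne_zero this
  · -- totally disconnected
    infer_instance
  · -- countable G
    exact countable_gp
  · exact not_fg
  · -- continuity
    intro g
    refine continuous_pi fun n => ?_
    have hB : Continuous fun x : Stmt11.X => B g.phi x := by
      have : (fun x : Stmt11.X => B g.phi x)
          = fun x => ∑ m ∈ g.phi.support, g.phi m * x m := rfl
      rw [this]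
      exact continuous_finset_sum _ fun m _ => Continuous.mul (M := ZMod 2) continuous_const (continuous_apply (A := fun _ : ℕ => ZMod 2) m)
    have : (fun x : Stmt11.X => (g • x) n)
        = fun x => x n + g.gam n + e0 (B g.phi x) n := rfl
    rw [this]
    refine ((continuous_apply (A := fun _ : ℕ => ZMod 2) n).add continuous_const).add ?_
    rcases eq_or_ne n 0 with rfl | hn
    · simpa [e0] using hB
    · simp only [e0_apply_ne _ hn]
      exact continuous_const
  · -- minimal
    intro x
    rw [Metric.dense_iff]
    intro y ε hε
    obtain ⟨N, hN⟩ := exists_pow_lt_of_lt_one hε (by norm_num : (1 / 2 : ℝ) < 1)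
    set γ : ℕ →₀ ZMod 2 :=
      ∑ i ∈ Finset.range N, Finsupp.single i (y i - x i) with hγ
    have hγap : ∀ j < N, γ j = y j - x j := by
      intro j hj
      rw [hγ, Finsupp.finset_sum_apply]
      rw [Finset.sum_eq_single j]
      · simp
      · intro b _ hb; exact Finsupp.single_eq_of_ne' hb
      · intro hj'; exact absurd (Finset.mem_range.2 hj) hj'
    set g : Gp := ⟨0, γ, by simp⟩ with hg
    refine ⟨g • x, Metric.mem_ball.2 ?_, MulAction.mem_orbit x g⟩
    have hagree : ∀ i < N, (g • x) i = y i := by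
      intro i hi
      have h1 : (g • x) i = x i + γ i + e0 (B (0 : ℕ →₀ ZMod 2) x) i := rfl
      rw [h1, B_zero_left, e0_zero, hγap i hi]
      simp
    have hd : dist (g • x) y ≤ (1 / 2 : ℝ) ^ N := dist_le_pow fun i hi => hagree i hi
    calc dist (g • x) y ≤ (1 / 2 : ℝ) ^ N := hd
    _ < ε := hN
  · -- distal
    intro x y hxy
    have key : ∃ n, ∀ g : Gp, (g • x) n ≠ (g • y) n := by
      by_cases hc : ∀ n, n ≠ 0 → x n = y n
      · have hx0 : x 0 ≠ y 0 := by
          intro h0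
          apply hxy
          funext n
          rcases eq_or_ne n 0 with rfl | hn
          · exact h0
          · exact hc n hn
        refine ⟨0, fun g => ?_⟩
        rw [smul_apply_zero, smul_apply_zero, B_congr g.phi g.h0 hc]
        intro h
        exact hx0 (add_right_cancel (add_right_cancel h))
      · push_neg at hc
        obtain ⟨n, hn0, hn⟩ := hc
        refine ⟨n, fun g => ?_⟩
        rw [smul_apply_ne g x hn0, smul_apply_ne g y hn0]
        intro h
        exact hn (add_right_cancel h)
    obtain ⟨n, hn⟩ := key
    have hpos : (0 : ℝ) < (1 / 2 : ℝ) ^ n := by positivity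
    exact lt_of_lt_of_le hpos (le_ciInf fun g => dist_ge (hn g))
  · -- expansive
    refine ⟨1 / 2, by norm_num, ?_⟩
    intro x y hxy
    have key : ∃ g : Gp, (g • x) 0 ≠ (g • y) 0 := by
      by_cases h0 : x 0 = y 0
      · obtain ⟨n, hn⟩ := Function.ne_iff.1 hxy
        have hn0 : n ≠ 0 := by rintro rfl; exact hn h0
        refine ⟨⟨Finsupp.single n 1, 0, by simp [Finsupp.single_apply, hn0]⟩, ?_⟩
        rw [smul_apply_zero, smul_apply_zero]
        simp only [B_single_left, Finsupp.coe_zero, Pi.zero_apply, add_zero]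
        rw [h0]
        intro h
        exact hn (add_left_cancel h)
      · refine ⟨1, ?_⟩
        rw [smul_apply_zero, smul_apply_zero]
        simpa [B_zero_left] using h0
    obtain ⟨g, hg⟩ := key
    have h1 : (1 : ℝ) ≤ dist (g • x) (g • y) := by
      simpa using dist_ge (n := 0) hg
    exact ⟨g, by linarith⟩
  · -- not equicontinuous
    intro H
    obtain ⟨δ, hδ, hH⟩ := H (1 / 2) (by norm_num)
    obtain ⟨N, hN⟩ := exists_pow_lt_of_lt_one hδ (by norm_num : (1 / 2 : ℝ) < 1)
    set M := N + 1 with hM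
    set x : Stmt11.X := 0 with hx
    set y : Stmt11.X := (fun n => if n = M then 1 else 0) with hy
    have hdistxy : dist x y < δ := by
      have h1 : dist x y ≤ (1 / 2 : ℝ) ^ M := by
        refine dist_le_pow fun i hi => ?_
        have hiM : i ≠ M := by omega
        simp [hx, hy, hiM]
      have h2 : ((1 : ℝ) / 2) ^ M ≤ (1 / 2) ^ N :=
        pow_le_pow_of_le_one (by norm_num) (by norm_num) (by omega)
      linarith
    set g : Gp := ⟨Finsupp.single M 1, 0, by simp [Finsupp.single_apply, hM]⟩ with hg
    have hlt := hH x y hdistxy g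
    have hax : (g • x) 0 = 0 := by
      rw [smul_apply_zero]
      simp [hx, hg, B_single_left]
    have hay : (g • y) 0 = 1 := by
      rw [smul_apply_zero]
      have h1 : y 0 = 0 := by simp [hy]
      have h2 : B (Finsupp.single M 1) y = 1 := by
        rw [B_single_left]; simp [hy]
      simp [h1, h2, hg]
    have hne : (g • x) 0 ≠ (g • y) 0 := by rw [hax, hay]; exact zero_ne_one
    have hge : (1 : ℝ) ≤ dist (g • x) (g • y) := by simpa using dist_ge (n := 0) hne
    linarith
end

section
/- Consider the space X = Σ × ℤ/2ℤ from the odometer construction, with metric d((ξ,a),(η,b)) = d₁(ξ,η) + θ(a,b). Let G ≤ Homeo(X) be the group generated by S = {T} ∪ ⋃_{n≥1} { f_ω : ω ∈ {0,1}^{1,…,n} }. Then the action of G on X is expansive with expansive constant 1/2: for all distinct points p, q ∈ X there exists g ∈ G with d(g·p, g·q) > 1/2. -/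
noncomputable section

/-- The group of self-homeomorphisms of a topological space,
with `(f * g) x = f (g x)`. -/
instance homeoGroup (X : Type*) [TopologicalSpace X] : Group (X ≃ₜ X) where
  mul f g := g.trans f
  one := Homeomorph.refl X
  inv := Homeomorph.symm
  mul_assoc f g h := rfl
  one_mul f := rfl
  mul_one f := rfl
  inv_mul_cancel f := Homeomorph.ext fun x => f.symm_apply_apply x

instance : TopologicalSpace (ZMod 2) := ⊥
instance : DiscreteTopology (ZMod 2) := ⟨rfl⟩

/-- The dyadic odometer map `ξ ↦ ξ + (1,0,0,⋯)` (addition with carry) on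
`Σ = {0,1}^{ℤ₊}`, realized on `ℕ → Bool`: the `i`-th digit is flipped exactly
when all earlier digits equal `1`. -/
def odoT0 : (ℕ → Bool) → (ℕ → Bool) := fun ξ i =>
  if ∀ j < i, ξ j = true then !(ξ i) else ξ i

/-- The space `X = Σ × ℤ/2ℤ` of the counterexample. -/
abbrev OdoX : Type := (ℕ → Bool) × ZMod 2

open scoped Classical

/-- The metric `d₁(ξ,η) = 1/n`, `n = min{ i ∈ ℤ₊ : ξ_i ≠ η_i }` (coordinates are
indexed by `ℤ₊ = {1,2,…}`, i.e. ℕ-index `i` corresponds to coordinate `i+1`). -/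
def odoD1 (ξ η : ℕ → Bool) : ℝ :=
  if h : ∃ i, ξ i ≠ η i then ((Nat.find h : ℝ) + 1)⁻¹ else 0

/-- The metric `d((ξ,a),(η,b)) = d₁(ξ,η) + θ(a,b)` on `X = Σ × ℤ/2ℤ`,
where `θ` is the discrete metric on `ℤ/2ℤ`. -/
def odoD (p q : OdoX) : ℝ := odoD1 p.1 q.1 + (if p.2 = q.2 then 0 else 1)

/-- The map `T(ξ,a) = (T₀ ξ, a)`. -/
def odoTmap : OdoX → OdoX := fun p => (odoT0 p.1, p.2)

/-- For `ω ∈ {0,1}^{1,…,n}`, the map `f_ω(ξ,a) = (ξ, a+1̄)` if the first `n`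
digits of `ξ` form the word `ω`, and `f_ω(ξ,a) = (ξ,a)` otherwise. -/
def odoFmap (n : ℕ) (ω : Fin n → Bool) : OdoX → OdoX := fun p =>
  if ∀ i : Fin n, p.1 (i : ℕ) = ω i then (p.1, p.2 + 1) else p

/-- The generating set `S = {T} ∪ ⋃_{n ≥ 1} { f_ω : ω ∈ {0,1}^{1,…,n} }`,
as a set of homeomorphisms of `X`. -/
def odoS : Set (OdoX ≃ₜ OdoX) :=
  {h | (∀ p, h p = odoTmap p) ∨
    ∃ n : ℕ, 0 < n ∧ ∃ ω : Fin n → Bool, ∀ p, h p = odoFmap n ω p}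


lemma odoFmap_invol (n : ℕ) (ω : Fin n → Bool) (p : OdoX) :
    odoFmap n ω (odoFmap n ω p) = p := by
  by_cases h : ∀ i : Fin n, p.1 (i : ℕ) = ω i
  · have h2 : odoFmap n ω p = (p.1, p.2 + 1) := if_pos h
    have h3 : odoFmap n ω (p.1, p.2 + 1) = (p.1, p.2 + 1 + 1) := if_pos h
    have h4 : p.2 + 1 + 1 = p.2 := by
      have h5 : (1 : ZMod 2) + 1 = 0 := by decide
      rw [add_assoc, h5, add_zero]
    rw [h2, h3, h4]
  · have h2 : odoFmap n ω p = p := if_neg h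
    rw [h2, h2]

lemma isClopen_cond (n : ℕ) (ω : Fin n → Bool) :
    IsClopen {p : OdoX | ∀ i : Fin n, p.1 (i : ℕ) = ω i} := by
  have heq : {p : OdoX | ∀ i : Fin n, p.1 (i : ℕ) = ω i}
      = ⋂ i : Fin n, (fun p : OdoX => p.1 (i : ℕ)) ⁻¹' {ω i} := by
    ext p; simp
  rw [heq]
  exact isClopen_iInter_of_finite fun i =>
    (isClopen_discrete {ω i}).preimage ((continuous_apply (i : ℕ)).comp continuous_fst)

lemma continuous_odoFmap (n : ℕ) (ω : Fin n → Bool) : Continuous (odoFmap n ω) := by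
  have hC := isClopen_cond n ω
  have heq : odoFmap n ω = fun p : OdoX =>
      (p.1, p.2 + if ∀ i : Fin n, p.1 (i : ℕ) = ω i then 1 else 0) := by
    funext p
    unfold odoFmap
    by_cases h : ∀ i : Fin n, p.1 (i : ℕ) = ω i <;> simp [h]
  rw [heq]
  have : ContinuousAdd (ZMod 2) := ⟨continuous_of_discreteTopology⟩
  refine continuous_fst.prodMk (Continuous.add (M := ZMod 2) continuous_snd ?_)
  refine Continuous.if ?_ continuous_const continuous_const
  intro a ha
  rw [hC.frontier_eq] at ha
  exact absurd ha (Set.notMem_empty a)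

def fHomeo (n : ℕ) (ω : Fin n → Bool) : OdoX ≃ₜ OdoX where
  toFun := odoFmap n ω
  invFun := odoFmap n ω
  left_inv := odoFmap_invol n ω
  right_inv := odoFmap_invol n ω
  continuous_toFun := continuous_odoFmap n ω
  continuous_invFun := continuous_odoFmap n ω

lemma odoD1_nonneg (ξ η : ℕ → Bool) : 0 ≤ odoD1 ξ η := by
  unfold odoD1
  split
  · positivity
  · exact le_refl 0

/-- the action of the subgroup `G ≤ Homeo(X)` generated by `S` on
`X = Σ × ℤ/2ℤ` is expansive with expansive constant `1/2`. -/
theorem stmt_15 :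
    ∀ p q : OdoX, p ≠ q →
      ∃ g ∈ Subgroup.closure odoS, 1 / 2 < odoD (g p) (g q) := by
  intro p q hpq
  obtain ⟨ξ, a⟩ := p
  obtain ⟨η, b⟩ := q
  by_cases hab : a = b
  · -- then ξ ≠ η
    have hxy : ξ ≠ η := by
      intro h; exact hpq (by rw [h, hab])
    have hex : ∃ i, ξ i ≠ η i := by
      by_contra h
      push_neg at h
      exact hxy (funext h)
    set N := Nat.find hex with hN
    have hNdiff : ξ N ≠ η N := Nat.find_spec hex
    refine ⟨fHomeo (N + 1) (fun i => ξ (i : ℕ)), Subgroup.subset_closure ?_, ?_⟩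
    · exact Or.inr ⟨N + 1, Nat.succ_pos N, fun i => ξ (i : ℕ), fun p => rfl⟩
    · have hp : fHomeo (N + 1) (fun i => ξ (i : ℕ)) (ξ, a) = (ξ, a + 1) := by
        show odoFmap (N + 1) _ (ξ, a) = (ξ, a + 1)
        unfold odoFmap
        simp
      have hq : fHomeo (N + 1) (fun i => ξ (i : ℕ)) (η, b) = (η, b) := by
        show odoFmap (N + 1) _ (η, b) = (η, b)
        unfold odoFmap
        rw [if_neg]
        intro h
        exact hNdiff ((h ⟨N, Nat.lt_succ_self N⟩).symm)
      rw [hp, hq]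
      have hne : a + 1 ≠ b := by
        rw [← hab]
        intro h
        have : (1 : ZMod 2) = 0 := by
          have := add_eq_left.mp h
          exact this
        exact one_ne_zero this
      unfold odoD
      have := odoD1_nonneg ξ η
      simp only [if_neg hne]
      linarith
  · refine ⟨1, Subgroup.one_mem _, ?_⟩
    have h1 : ((1 : OdoX ≃ₜ OdoX) : OdoX → OdoX) = id := rfl
    rw [h1]
    unfold odoD
    simp only [id_eq, if_neg hab]
    have := odoD1_nonneg ξ η
    linarith
end
end

section
/- Consider the space X = Σ × ℤ/2ℤ from the odometer construction, with metric d((ξ,a),(η,b)) = d₁(ξ,η) + θ(a,b). Let G ≤ Homeo(X) be the group generated by S = {T} ∪ ⋃_{n≥1} { f_ω : ω ∈ {0,1}^{1,…,n} }. Then the action of G on X is minimal: every G-orbit is dense in X. -/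
noncomputable section

open scoped Classical

-- Auxiliary development (to be placed above stmt_16)

/-! ### Arithmetic of the odometer on the first `n` digits -/

def odoVal (n : ℕ) (ξ : ℕ → Bool) : ℕ :=
  ∑ i ∈ Finset.range n, if ξ i then 2 ^ i else 0

lemma odoVal_succ (n : ℕ) (ξ : ℕ → Bool) :
    odoVal (n + 1) ξ = odoVal n ξ + (if ξ n then 2 ^ n else 0) := by
  simp [odoVal, Finset.sum_range_succ]

lemma odoVal_lt (n : ℕ) (ξ : ℕ → Bool) : odoVal n ξ < 2 ^ n := by
  induction n with
  | zero => simp [odoVal]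
  | succ n ih =>
    rw [odoVal_succ, pow_succ]
    split <;> omega

lemma odoVal_eq_iff_all_ones (n : ℕ) (ξ : ℕ → Bool) :
    odoVal n ξ = 2 ^ n - 1 ↔ ∀ j < n, ξ j = true := by
  induction n with
  | zero => simp [odoVal]
  | succ n ih =>
    have h1 : (1:ℕ) ≤ 2 ^ n := Nat.one_le_two_pow
    have hlt := odoVal_lt n ξ
    rw [odoVal_succ, pow_succ]
    constructor
    · intro h
      have hbit : ξ n = true := by
        by_contra hb
        simp only [hb] at h
        simp at h
        omega
      have : odoVal n ξ = 2 ^ n - 1 := by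
        simp only [hbit, if_true] at h; omega
      intro j hj
      rcases Nat.lt_succ_iff_lt_or_eq.mp hj with hj | hj
      · exact ih.mp this j hj
      · subst hj; exact hbit
    · intro h
      have hbit : ξ n = true := h n (Nat.lt_succ_self n)
      have hv : odoVal n ξ = 2 ^ n - 1 :=
        ih.mpr fun j hj => h j (hj.trans (Nat.lt_succ_self n))
      simp only [hbit, if_true]; omega

lemma odoVal_odoT0 (n : ℕ) (ξ : ℕ → Bool) :
    odoVal n (odoT0 ξ) = (odoVal n ξ + 1) % 2 ^ n := by
  induction n with
  | zero => simp [odoVal]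
  | succ n ih =>
    have h1 : (1:ℕ) ≤ 2 ^ n := Nat.one_le_two_pow
    have hlt := odoVal_lt n ξ
    by_cases hA : ∀ j < n, ξ j = true
    · have hv : odoVal n ξ = 2 ^ n - 1 := (odoVal_eq_iff_all_ones n ξ).mpr hA
      have hz : odoVal n (odoT0 ξ) = 0 := by
        rw [ih, hv]
        have : 2 ^ n - 1 + 1 = 2 ^ n := by omega
        rw [this, Nat.mod_self]
      have hdig : odoT0 ξ n = !ξ n := by
        simp only [odoT0]; rw [if_pos hA]
      rw [odoVal_succ, odoVal_succ, hz, hdig, hv, pow_succ]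
      cases hb : ξ n
      · simp only [Bool.not_false, if_true, Bool.false_eq_true, if_false]
        have e : 2 ^ n - 1 + 0 + 1 = 2 ^ n := by omega
        rw [Nat.add_zero, e, Nat.mod_eq_of_lt (by omega)]
        omega
      · simp only [Bool.not_true, if_true, Bool.false_eq_true, if_false]
        have e : 2 ^ n - 1 + 2 ^ n + 1 = 2 ^ n * 2 := by omega
        rw [Nat.add_zero, e, Nat.mod_self]
    · have hv : odoVal n ξ ≠ 2 ^ n - 1 := fun h => hA ((odoVal_eq_iff_all_ones n ξ).mp h)
      have hs : odoVal n (odoT0 ξ) = odoVal n ξ + 1 := by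
        rw [ih, Nat.mod_eq_of_lt]; omega
      have hdig : odoT0 ξ n = ξ n := by
        simp only [odoT0]; rw [if_neg hA]
      rw [odoVal_succ, odoVal_succ, hs, hdig, pow_succ]
      rw [Nat.mod_eq_of_lt (by split <;> omega)]
      omega

lemma odoVal_iterate (n k : ℕ) (ξ : ℕ → Bool) :
    odoVal n (odoT0^[k] ξ) = (odoVal n ξ + k) % 2 ^ n := by
  induction k with
  | zero => simp [Nat.mod_eq_of_lt (odoVal_lt n ξ)]
  | succ k ih =>
    rw [Function.iterate_succ_apply', odoVal_odoT0, ih, Nat.mod_add_mod,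
      ← Nat.add_assoc]

lemma odoVal_inj (n : ℕ) (ξ η : ℕ → Bool) (h : odoVal n ξ = odoVal n η) :
    ∀ i < n, ξ i = η i := by
  induction n with
  | zero => omega
  | succ n ih =>
    have hξ := odoVal_lt n ξ
    have hη := odoVal_lt n η
    rw [odoVal_succ, odoVal_succ] at h
    have hbit : ξ n = η n := by
      cases hb : ξ n <;> cases hb' : η n <;> simp_all <;> omega
    have hval : odoVal n ξ = odoVal n η := by
      rw [hbit] at h; omega
    intro i hi
    rcases Nat.lt_succ_iff_lt_or_eq.mp hi with hi | hi
    · exact ih hval i hi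
    · subst hi; exact hbit

lemma odoT0_reach (n : ℕ) (ξ η : ℕ → Bool) :
    ∃ k, ∀ i < n, odoT0^[k] ξ i = η i := by
  refine ⟨2 ^ n + odoVal n η - odoVal n ξ, odoVal_inj n _ _ ?_⟩
  have hξ := odoVal_lt n ξ
  have hη := odoVal_lt n η
  rw [odoVal_iterate]
  have : odoVal n ξ + (2 ^ n + odoVal n η - odoVal n ξ) = 2 ^ n + odoVal n η := by omega
  rw [this, Nat.add_mod_left, Nat.mod_eq_of_lt hη]

/-! ### The inverse of the odometer map -/

def odoT0inv : (ℕ → Bool) → (ℕ → Bool) := fun ξ i =>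
  if ∀ j < i, ξ j = false then !(ξ i) else ξ i

lemma odoT0_cond (ξ : ℕ → Bool) (i : ℕ) :
    (∀ j < i, odoT0 ξ j = false) ↔ (∀ j < i, ξ j = true) := by
  induction i with
  | zero => simp
  | succ i ih =>
    constructor
    · intro h
      have h1 : ∀ j < i, ξ j = true := ih.mp fun j hj => h j (hj.trans (Nat.lt_succ_self i))
      have h2 : ξ i = true := by
        have := h i (Nat.lt_succ_self i)
        simp only [odoT0] at this
        rw [if_pos h1] at this
        simpa using this
      intro j hj
      rcases Nat.lt_succ_iff_lt_or_eq.mp hj with hj | hj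
      · exact h1 j hj
      · subst hj; exact h2
    · intro h j hj
      have hc : ∀ l < j, ξ l = true := fun l hl => h l (hl.trans hj)
      simp only [odoT0]
      rw [if_pos hc, h j hj]
      rfl

lemma odoT0inv_cond (ξ : ℕ → Bool) (i : ℕ) :
    (∀ j < i, odoT0inv ξ j = true) ↔ (∀ j < i, ξ j = false) := by
  induction i with
  | zero => simp
  | succ i ih =>
    constructor
    · intro h
      have h1 : ∀ j < i, ξ j = false := ih.mp fun j hj => h j (hj.trans (Nat.lt_succ_self i))
      have h2 : ξ i = false := by
        have := h i (Nat.lt_succ_self i)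
        simp only [odoT0inv] at this
        rw [if_pos h1] at this
        simpa using this
      intro j hj
      rcases Nat.lt_succ_iff_lt_or_eq.mp hj with hj | hj
      · exact h1 j hj
      · subst hj; exact h2
    · intro h j hj
      have hc : ∀ l < j, ξ l = false := fun l hl => h l (hl.trans hj)
      simp only [odoT0inv]
      rw [if_pos hc, h j hj]
      rfl

lemma odoT0inv_odoT0 (ξ : ℕ → Bool) : odoT0inv (odoT0 ξ) = ξ := by
  funext i
  by_cases h : ∀ j < i, ξ j = true
  · have h' : ∀ j < i, odoT0 ξ j = false := (odoT0_cond ξ i).mpr h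
    simp only [odoT0inv]
    rw [if_pos h']
    simp only [odoT0]
    rw [if_pos h, Bool.not_not]
  · have h' : ¬ ∀ j < i, odoT0 ξ j = false := fun hc => h ((odoT0_cond ξ i).mp hc)
    simp only [odoT0inv]
    rw [if_neg h']
    simp only [odoT0]
    rw [if_neg h]

lemma odoT0_odoT0inv (ξ : ℕ → Bool) : odoT0 (odoT0inv ξ) = ξ := by
  funext i
  by_cases h : ∀ j < i, ξ j = false
  · have h' : ∀ j < i, odoT0inv ξ j = true := (odoT0inv_cond ξ i).mpr h
    simp only [odoT0]
    rw [if_pos h']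
    simp only [odoT0inv]
    rw [if_pos h, Bool.not_not]
  · have h' : ¬ ∀ j < i, odoT0inv ξ j = true := fun hc => h ((odoT0inv_cond ξ i).mp hc)
    simp only [odoT0]
    rw [if_neg h']
    simp only [odoT0inv]
    rw [if_neg h]

/-! ### Continuity -/

lemma continuous_of_finite_dep {α : Type*} [TopologicalSpace α] [DiscreteTopology α]
    (f : (ℕ → Bool) → α) (n : ℕ)
    (h : ∀ ξ η : ℕ → Bool, (∀ i < n, ξ i = η i) → f ξ = f η) : Continuous f := by
  have key : f = (fun v : Fin n → Bool =>
      f (fun i => if hi : i < n then v ⟨i, hi⟩ else false)) ∘ (fun ξ (i : Fin n) => ξ i) := by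
    funext ξ
    exact (h _ _ (fun i hi => by simp [hi])).symm
  rw [key]
  exact (continuous_of_discreteTopology).comp (continuous_pi fun i => continuous_apply _)

lemma continuous_odoT0 : Continuous odoT0 := by
  refine continuous_pi fun i => ?_
  refine continuous_of_finite_dep _ (i + 1) fun ξ η hyp => ?_
  have hi : ξ i = η i := hyp i (Nat.lt_succ_self i)
  simp only [odoT0]
  by_cases h : ∀ j < i, ξ j = true
  · rw [if_pos h, if_pos fun j hj => (hyp j (hj.trans (Nat.lt_succ_self i))).symm ▸ h j hj, hi]
  · rw [if_neg h, if_neg fun hc => h fun j hj => (hyp j (hj.trans (Nat.lt_succ_self i))) ▸ hc j hj, hi]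

lemma continuous_odoT0inv : Continuous odoT0inv := by
  refine continuous_pi fun i => ?_
  refine continuous_of_finite_dep _ (i + 1) fun ξ η hyp => ?_
  have hi : ξ i = η i := hyp i (Nat.lt_succ_self i)
  simp only [odoT0inv]
  by_cases h : ∀ j < i, ξ j = false
  · rw [if_pos h, if_pos fun j hj => (hyp j (hj.trans (Nat.lt_succ_self i))).symm ▸ h j hj, hi]
  · rw [if_neg h, if_neg fun hc => h fun j hj => (hyp j (hj.trans (Nat.lt_succ_self i))) ▸ hc j hj, hi]

/-! ### The homeomorphisms -/

def Thomeo : OdoX ≃ₜ OdoX where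
  toFun := odoTmap
  invFun := fun p => (odoT0inv p.1, p.2)
  left_inv := fun p => by simp [odoTmap, odoT0inv_odoT0]
  right_inv := fun p => by simp [odoTmap, odoT0_odoT0inv]
  continuous_toFun := (continuous_odoT0.comp continuous_fst).prodMk continuous_snd
  continuous_invFun := (continuous_odoT0inv.comp continuous_fst).prodMk continuous_snd

lemma odoFmap_eq (n : ℕ) (ω : Fin n → Bool) (p : OdoX) :
    odoFmap n ω p = (p.1, p.2 + if ∀ i : Fin n, p.1 (i : ℕ) = ω i then 1 else 0) := by
  simp only [odoFmap]
  by_cases h : ∀ i : Fin n, p.1 (i : ℕ) = ω i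
  · rw [if_pos h, if_pos h]
  · rw [if_neg h, if_neg h, add_zero]

def Fhomeo (n : ℕ) (ω : Fin n → Bool) : OdoX ≃ₜ OdoX where
  toFun := odoFmap n ω
  invFun := odoFmap n ω
  left_inv := odoFmap_invol n ω
  right_inv := odoFmap_invol n ω
  continuous_toFun := continuous_odoFmap n ω
  continuous_invFun := continuous_odoFmap n ω

/-! ### Membership in the generating set and orbit computations -/

lemma Thomeo_mem : Thomeo ∈ odoS := Or.inl fun p => rfl

lemma Fhomeo_mem (n : ℕ) (hn : 0 < n) (ω : Fin n → Bool) : Fhomeo n ω ∈ odoS :=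
  Or.inr ⟨n, hn, ω, fun p => rfl⟩

lemma odo_mul_apply (f g : OdoX ≃ₜ OdoX) (p : OdoX) : (f * g) p = f (g p) := rfl

lemma Thomeo_pow_apply (k : ℕ) (p : OdoX) :
    (Thomeo ^ k) p = (odoT0^[k] p.1, p.2) := by
  induction k with
  | zero =>
    simp only [pow_zero, Function.iterate_zero]
    rfl
  | succ k ih =>
    rw [pow_succ', odo_mul_apply, ih]
    show ((odoT0 (odoT0^[k] p.1), p.2) : OdoX) = _
    rw [← Function.iterate_succ_apply' odoT0 k p.1]

lemma zmod2_neq (a b : ZMod 2) (h : a ≠ b) : a + 1 = b := by revert a b h; decide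

/-- Main orbit lemma: for each `p`, `q` and `m`, there is a group element
moving `p` to a point agreeing with `q` in the second coordinate and in the
first `m+1` digits of the first coordinate. -/
lemma orbit_approx (p q : OdoX) (m : ℕ) :
    ∃ r : OdoX, (∃ g ∈ Subgroup.closure odoS, g p = r) ∧
      (∀ i ≤ m, r.1 i = q.1 i) ∧ r.2 = q.2 := by
  obtain ⟨k, hk⟩ := odoT0_reach (m + 1) p.1 q.1
  have hT : Thomeo ∈ Subgroup.closure odoS := Subgroup.subset_closure Thomeo_mem
  have hTk : Thomeo ^ k ∈ Subgroup.closure odoS := pow_mem hT k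
  by_cases hab : p.2 = q.2
  · refine ⟨(odoT0^[k] p.1, q.2), ⟨Thomeo ^ k, hTk, ?_⟩, fun i hi => hk i (by omega), rfl⟩
    rw [Thomeo_pow_apply, hab]
  · set ω : Fin (m + 1) → Bool := fun i => q.1 (i : ℕ) with hω
    have hF : Fhomeo (m + 1) ω ∈ Subgroup.closure odoS :=
      Subgroup.subset_closure (Fhomeo_mem (m + 1) (Nat.succ_pos m) ω)
    refine ⟨(odoT0^[k] p.1, q.2), ⟨Fhomeo (m + 1) ω * Thomeo ^ k, mul_mem hF hTk, ?_⟩,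
      fun i hi => hk i (by omega), rfl⟩
    rw [odo_mul_apply, Thomeo_pow_apply]
    show odoFmap (m + 1) ω (odoT0^[k] p.1, p.2) = _
    have hcond : ∀ i : Fin (m + 1), (odoT0^[k] p.1) (i : ℕ) = ω i :=
      fun i => hk (i : ℕ) i.isLt
    simp only [odoFmap]
    rw [if_pos hcond, zmod2_neq p.2 q.2 hab]

/-- the action of the subgroup `G ≤ Homeo(X)` generated by `S` on
`X = Σ × ℤ/2ℤ` is minimal: every orbit is dense. -/
theorem stmt_16 :
    ∀ p : OdoX, Dense {q : OdoX | ∃ g ∈ Subgroup.closure odoS, g p = q} := by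
  intro p q
  choose r hmem hagree hsnd using orbit_approx p q
  have h1 : Filter.Tendsto (fun m => (r m).1) Filter.atTop (nhds q.1) := by
    rw [tendsto_pi_nhds]
    intro i
    have hev : ∀ᶠ m in Filter.atTop, q.1 i = (r m).1 i :=
      Filter.eventually_atTop.mpr ⟨i, fun m hm => (hagree m i hm).symm⟩
    exact Filter.Tendsto.congr' hev tendsto_const_nhds
  have h2 : Filter.Tendsto (fun m => (r m).2) Filter.atTop (nhds q.2) := by
    have hev : ∀ᶠ m in Filter.atTop, q.2 = (r m).2 :=
      Filter.Eventually.of_forall fun m => (hsnd m).symm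
    exact Filter.Tendsto.congr' hev tendsto_const_nhds
  have h3 : Filter.Tendsto r Filter.atTop (nhds q) := by
    have h := h1.prodMk_nhds h2
    have e1 : (fun m => ((r m).1, (r m).2)) = r := funext fun m => rfl
    rw [e1] at h
    exact h
  exact mem_closure_of_tendsto h3 (Filter.Eventually.of_forall fun m => hmem m)
end
end
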